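/- arXiv:1203.5300 — 12 statements merged into one kernel-verified Lean document; each statement's English description precedes it below -/
import Mathlib

section
/- There exist 2×2 Hermitian positive semidefinite matrices A and B such that the inequality ((A+B)/2)³ ≤ ∫_0^1 (tA+(1-t)B)³ dt fails in the Loewner order. Concretely, one may take A = [[2,1],[1,1]] and B = [[1,0],[0,0]]. -/
/-!
Write `X = (A + B)/2` and `C = A - B`, so that `tA + (1-t)B = X + (t - 1/2)C`. Expanding the
cube, the odd moments of `t - 1/2` over `[0, 1]` vanish and its second moment is `1/12`, so
`∫₀¹ (tA + (1-t)B)³ dt - X³ = (XC² + CXC + C²X)/12`. For scalars this is `xc²/4 ≥ 0`, but for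
matrices it need not be positive semidefinite: for the given `A` and `B` it is
`!![11, 9; 9, 7] / 12`, whose determinant is negative.
-/

open scoped ComplexOrder Matrix

theorem add_smul_pow_three {𝕜 R : Type*} [CommRing 𝕜] [Ring R] [Algebra 𝕜 R] (x c : R) (s : 𝕜) :
    (x + s • c) ^ 3 = x ^ 3 + s • (x * x * c + x * c * x + c * x * x)
      + s ^ 2 • (x * c * c + c * x * c + c * c * x) + s ^ 3 • c ^ 3 := by
  simp only [pow_succ, pow_zero, one_mul, add_mul, mul_add, smul_mul_assoc, mul_smul_comm,
    smul_smul, smul_add, mul_assoc]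
  module

theorem integral_centered_cubic (p q r s : ℂ) :
    ∫ t in (0:ℝ)..1, (p + ((t - 2⁻¹ : ℝ) : ℂ) * q + ((t - 2⁻¹ : ℝ) : ℂ) ^ 2 * r
      + ((t - 2⁻¹ : ℝ) : ℂ) ^ 3 * s) = p + r / 12 := by
  rw [intervalIntegral.integral_comp_sub_right
    (fun u : ℝ => p + (u : ℂ) * q + (u : ℂ) ^ 2 * r + (u : ℂ) ^ 3 * s)]
  have moment (n : ℕ) : ∫ u in (0 - 2⁻¹ : ℝ)..(1 - 2⁻¹), (u : ℂ) ^ n =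
      ((2⁻¹ : ℂ) ^ (n + 1) - (-2⁻¹) ^ (n + 1)) / (n + 1) := by
    simp only [← Complex.ofReal_pow, intervalIntegral.integral_ofReal, integral_pow]
    push_cast
    norm_num
  have moment_one := moment 1
  simp only [pow_one] at moment_one
  rw [intervalIntegral.integral_add, intervalIntegral.integral_add, intervalIntegral.integral_add,
    intervalIntegral.integral_const, intervalIntegral.integral_mul_const,
    intervalIntegral.integral_mul_const, intervalIntegral.integral_mul_const,
    moment_one, moment, moment]
  · norm_num
    ring
  all_goals exact (by fun_prop : Continuous fun t : ℝ => _).intervalIntegrable _ _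

theorem Matrix.integral_cube_sub_cube_midpoint {n : Type*} [Fintype n] [DecidableEq n]
    (A B : Matrix n n ℂ) :
    (Matrix.of fun i j => ∫ t in (0:ℝ)..1, ((t • A + (1 - t) • B) ^ 3) i j)
        - ((2:ℂ)⁻¹ • (A + B)) ^ 3 =
      (12:ℂ)⁻¹ • ((2:ℂ)⁻¹ • (A + B) * (A - B) * (A - B)
        + (A - B) * ((2:ℂ)⁻¹ • (A + B)) * (A - B)
        + (A - B) * (A - B) * ((2:ℂ)⁻¹ • (A + B))) := by
  set X := (2:ℂ)⁻¹ • (A + B)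
  set C := A - B
  have segment (t : ℝ) : t • A + (1 - t) • B = X + (t - 2⁻¹ : ℝ) • C := by
    simp only [X, C]
    module
  ext i j
  simp only [Matrix.sub_apply, Matrix.of_apply, segment, add_smul_pow_three, Matrix.add_apply,
    Matrix.smul_apply, Complex.real_smul, smul_eq_mul, Complex.ofReal_pow]
  rw [integral_centered_cubic]
  ring

/-- The naive matrix Hermite–Hadamard inequality for `f(t) = t³` fails:
there exist positive semidefinite Hermitian `2×2` matrices `A, B` such that
`((A+B)/2)³ ≤ ∫_0^1 (tA+(1-t)B)³ dt` fails in the Loewner order. The integral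
is taken entrywise. -/
theorem matrix_hermite_hadamard_fails :
    ∃ A B : Matrix (Fin 2) (Fin 2) ℂ,
      A.IsHermitian ∧ B.IsHermitian ∧ A.PosSemidef ∧ B.PosSemidef ∧
      A = !![2, 1; 1, 1] ∧ B = !![1, 0; 0, 0] ∧
      ¬ ((Matrix.of fun i j => ∫ t in (0:ℝ)..1, ((t • A + (1 - t) • B) ^ 3) i j)
          - ((2:ℂ)⁻¹ • (A + B)) ^ 3).PosSemidef := by
  set A : Matrix (Fin 2) (Fin 2) ℂ := !![2, 1; 1, 1]
  set B : Matrix (Fin 2) (Fin 2) ℂ := !![1, 0; 0, 0]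
  have hA : A.PosSemidef := by
    have : A = (!![1, 1; 1, 0])ᴴ * !![1, 1; 1, 0] := by
      simp [A, ← Matrix.ext_iff, Fin.forall_fin_two, Matrix.mul_apply, one_add_one_eq_two]
    exact this ▸ Matrix.posSemidef_conjTranspose_mul_self _
  have hB : B.PosSemidef := by
    rw [show B = .diagonal ![1, 0] from (Matrix.diagonal_vec2 _ _).symm]
    exact .diagonal (by simp [Pi.le_def, Fin.forall_fin_two])
  have defect : (2:ℂ)⁻¹ • (A + B) * (A - B) * (A - B) + (A - B) * ((2:ℂ)⁻¹ • (A + B)) * (A - B)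
      + (A - B) * (A - B) * ((2:ℂ)⁻¹ • (A + B)) = !![11, 9; 9, 7] := by
    simp [A, B]
    norm_num
  refine ⟨A, B, hA.isHermitian, hB.isHermitian, hA, hB, rfl, rfl, fun hpsd => ?_⟩
  rw [Matrix.integral_cube_sub_cube_midpoint, defect] at hpsd
  have det_nonneg := hpsd.det_nonneg
  rw [Matrix.det_smul, Matrix.det_fin_two_of] at det_nonneg
  norm_num [Complex.le_def] at det_nonneg
end

section
/- Let A ∈ M_n be Hermitian with spectrum in an interval J, f : J → ℝ convex, Φ : M_n → M_m a unital positive linear map, and x ∈ ℂ^m a unit vector. Then f(⟨Φ(A)x, x⟩) ≤ ⟨Φ(f(A))x, x⟩. -/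
open scoped InnerProductSpace
open scoped ComplexOrder

/-!
Diagonalise `A = ∑ᵢ λᵢ Pᵢ` with rank-one spectral projections `Pᵢ ≥ 0` summing to `1`, so that
`f(A) = ∑ᵢ f(λᵢ) Pᵢ`. The functional `ω(X) = Re ⟪Φ(X) x, x⟫` is positive and `ω(1) = 1`, hence the
numbers `ω(Pᵢ)` are convex weights with `ω(A) = ∑ᵢ ω(Pᵢ) λᵢ` and `ω(f(A)) = ∑ᵢ ω(Pᵢ) f(λᵢ)`,
and the claim is the finite Jensen inequality for `f`.
-/

namespace Matrix.IsHermitian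

variable {𝕜 ι : Type*} [RCLike 𝕜] [Fintype ι] [DecidableEq ι] {A : Matrix ι ι 𝕜}
  (hA : A.IsHermitian)

noncomputable def spectralProj (i : ι) : Matrix ι ι 𝕜 :=
  Unitary.conjStarAlgAut 𝕜 _ hA.eigenvectorUnitary (diagonal (Pi.single i 1))

lemma posSemidef_spectralProj (i : ι) : (hA.spectralProj i).PosSemidef := by
  have hD : (diagonal (Pi.single i (1 : 𝕜))).PosSemidef :=
    PosSemidef.diagonal (Pi.single_nonneg.mpr zero_le_one)
  simpa [spectralProj, star_eq_conjTranspose] using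
    hD.mul_mul_conjTranspose_same (hA.eigenvectorUnitary : Matrix ι ι 𝕜)

lemma cfc_eq_sum_smul_spectralProj (g : ℝ → ℝ) :
    cfc g A = ∑ i, g (hA.eigenvalues i) • hA.spectralProj i := by
  have hdiag : diagonal (RCLike.ofReal ∘ g ∘ hA.eigenvalues)
      = ∑ i, g (hA.eigenvalues i) • diagonal (Pi.single i (1 : 𝕜)) := by
    ext j k
    by_cases hjk : j = k
    · subst hjk
      simp [Matrix.sum_apply, Pi.single_apply, RCLike.real_smul_eq_coe_mul]
    · simp [Matrix.sum_apply, hjk]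
  rw [hA.cfc_eq, IsHermitian.cfc, hdiag, map_sum]
  simp only [spectralProj, RCLike.real_smul_eq_coe_smul (K := 𝕜), map_smul]

lemma sum_spectralProj : ∑ i, hA.spectralProj i = 1 := by
  simpa using (hA.cfc_eq_sum_smul_spectralProj 1).symm.trans (cfc_const_one ℝ A)

end Matrix.IsHermitian

theorem ConvexOn.map_le_map_cfc {𝕜 ι : Type*} [RCLike 𝕜] [Fintype ι] [DecidableEq ι]
    {A : Matrix ι ι 𝕜} (hA : A.IsHermitian) {J : Set ℝ} (hJ : spectrum ℝ A ⊆ J) {f : ℝ → ℝ}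
    (hf : ConvexOn ℝ J f) (ω : Matrix ι ι 𝕜 →ₗ[ℝ] ℝ)
    (hω_nonneg : ∀ X : Matrix ι ι 𝕜, X.PosSemidef → 0 ≤ ω X) (hω_one : ω 1 = 1) :
    f (ω A) ≤ ω (cfc f A) := by
  have hω_cfc (g : ℝ → ℝ) :
      ω (cfc g A) = ∑ i, ω (hA.spectralProj i) • g (hA.eigenvalues i) := by
    simp only [hA.cfc_eq_sum_smul_spectralProj, map_sum, map_smul, smul_eq_mul, mul_comm]
  have hw_sum : ∑ i, ω (hA.spectralProj i) = 1 := by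
    rw [← map_sum, hA.sum_spectralProj, hω_one]
  rw [show ω A = ω (cfc id A) by rw [cfc_id ℝ A], hω_cfc, hω_cfc]
  exact hf.map_sum_le (fun i _ ↦ hω_nonneg _ (hA.posSemidef_spectralProj i)) hw_sum
    fun i _ ↦ hJ (hA.eigenvalues_mem_spectrum_real i)

namespace Matrix

variable {𝕜 ι : Type*} [RCLike 𝕜] [Fintype ι] [DecidableEq ι]

noncomputable def vectorState (x : EuclideanSpace 𝕜 ι) : Matrix ι ι 𝕜 →ₗ[ℝ] ℝ where
  toFun M := RCLike.re ⟪toEuclideanLin M x, x⟫_𝕜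
  map_add' M N := by simp [inner_add_left]
  map_smul' c M := by
    simp only [RCLike.real_smul_eq_coe_smul (K := 𝕜), map_smul, LinearMap.smul_apply,
      inner_smul_left, RCLike.conj_ofReal, RCLike.re_ofReal_mul, smul_eq_mul, RingHom.id_apply]

lemma vectorState_nonneg {M : Matrix ι ι 𝕜} (hM : M.PosSemidef) (x : EuclideanSpace 𝕜 ι) :
    0 ≤ vectorState x M :=
  (isPositive_toEuclideanLin_iff.mpr hM).re_inner_nonneg_left x

lemma vectorState_one {x : EuclideanSpace 𝕜 ι} (hx : ‖x‖ = 1) : vectorState x 1 = 1 := by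
  simp [vectorState, hx]

end Matrix

theorem jensen_unital_positive_map_general
    {n m : ℕ} (A : Matrix (Fin n) (Fin n) ℂ) (hA : A.IsHermitian)
    (J : Set ℝ) (hJ : spectrum ℝ A ⊆ J)
    (f : ℝ → ℝ) (hconv : ConvexOn ℝ J f)
    (Φ : Matrix (Fin n) (Fin n) ℂ →ₗ[ℂ] Matrix (Fin m) (Fin m) ℂ)
    (hpos : ∀ X : Matrix (Fin n) (Fin n) ℂ, X.PosSemidef → (Φ X).PosSemidef)
    (hunital : Φ 1 = 1)
    (x : EuclideanSpace ℂ (Fin m)) (hx : ‖x‖ = 1) :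
    f ((⟪Matrix.toEuclideanLin (Φ A) x, x⟫_ℂ).re) ≤
      (⟪Matrix.toEuclideanLin (Φ (cfc f A)) x, x⟫_ℂ).re :=
  hconv.map_le_map_cfc hA hJ ((Matrix.vectorState x).comp (Φ.restrictScalars ℝ))
    (fun X hX ↦ Matrix.vectorState_nonneg (hpos X hX) x)
    (by simp [hunital, Matrix.vectorState_one hx])

/-- Let `A` be a Hermitian `n×n` matrix with spectrum in an interval `J`, `f` convex
(and continuous) on `J`, `Φ` a unital positive linear map into `m×m` matrices and `x`
a unit vector. Then `f(⟨Φ(A)x, x⟩) ≤ ⟨Φ(f(A))x, x⟩`. -/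
theorem jensen_unital_positive_map
    {n m : ℕ} (A : Matrix (Fin n) (Fin n) ℂ) (hA : A.IsHermitian)
    (J : Set ℝ) (hJ : spectrum ℝ A ⊆ J)
    (f : ℝ → ℝ) (hconv : ConvexOn ℝ J f) (hcont : ContinuousOn f J)
    (Φ : Matrix (Fin n) (Fin n) ℂ →ₗ[ℂ] Matrix (Fin m) (Fin m) ℂ)
    (hpos : ∀ X : Matrix (Fin n) (Fin n) ℂ, X.PosSemidef → (Φ X).PosSemidef)
    (hunital : Φ 1 = 1)
    (x : EuclideanSpace ℂ (Fin m)) (hx : ‖x‖ = 1) :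
    f ((⟪Matrix.toEuclideanLin (Φ A) x, x⟫_ℂ).re) ≤
      (⟪Matrix.toEuclideanLin (Φ (cfc f A)) x, x⟫_ℂ).re :=
  jensen_unital_positive_map_general A hA J hJ f hconv Φ hpos hunital x hx
end

section
/- Let A ∈ M_n be Hermitian with spectrum in an interval J containing 0, f : J → ℝ convex with f(0) ≤ 0, Φ : M_n → M_m a positive linear map with 0 < Φ(I_n) ≤ I_m, and x ∈ ℂ^m with ‖x‖ ≤ 1. Then f(⟨Φ(A)x, x⟩) ≤ ⟨Φ(f(A))x, x⟩. -/
/-!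
Write `A = ∑ λᵢ Pᵢ` with rank-one spectral projections `Pᵢ ≥ 0`, `∑ Pᵢ = 1`, so that
`g(A) = ∑ g(λᵢ) Pᵢ` for every `g`. The numbers `wᵢ = ⟨Φ(Pᵢ)x, x⟩` are then nonnegative weights
with `∑ wᵢ = ⟨Φ(1)x, x⟩ ≤ ‖x‖² ≤ 1`, and both sides of the inequality are the two sides of
Jensen's inequality for the weights `wᵢ` at the points `λᵢ`. The weights need not sum to `1`;
the missing mass `1 - ∑ wᵢ` is put at `0 ∈ J`, where it contributes `(1 - ∑ wᵢ) f(0) ≤ 0`.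
-/

open scoped InnerProductSpace ComplexOrder

open Finset Matrix

section Jensen

variable {𝕜 E β ι : Type*} [Field 𝕜] [LinearOrder 𝕜] [IsStrictOrderedRing 𝕜] [AddCommGroup E]
  [AddCommGroup β] [PartialOrder β] [IsOrderedAddMonoid β] [Module 𝕜 E] [Module 𝕜 β]
  [IsStrictOrderedModule 𝕜 β] {s : Set E} {f : E → β} {t : Finset ι} {w : ι → 𝕜} {p : ι → E}

theorem ConvexOn.map_sum_le_of_sum_le_one (hf : ConvexOn 𝕜 s f) (h0s : (0 : E) ∈ s)
    (hf0 : f 0 ≤ 0) (h₀ : ∀ i ∈ t, 0 ≤ w i) (h₁ : ∑ i ∈ t, w i ≤ 1)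
    (hmem : ∀ i ∈ t, p i ∈ s) : f (∑ i ∈ t, w i • p i) ≤ ∑ i ∈ t, w i • f (p i) := by
  have hv : 0 ≤ 1 - ∑ i ∈ t, w i := sub_nonneg.2 h₁
  calc f (∑ i ∈ t, w i • p i)
      = f ((1 - ∑ i ∈ t, w i) • (0 : E) + ∑ i ∈ t, w i • p i) := by rw [smul_zero, zero_add]
    _ ≤ (1 - ∑ i ∈ t, w i) • f 0 + ∑ i ∈ t, w i • f (p i) :=
        hf.map_add_sum_le h₀ (sub_add_cancel _ _) hmem hv h0s
    _ ≤ ∑ i ∈ t, w i • f (p i) := add_le_of_nonpos_left (smul_nonpos_of_nonneg_of_nonpos hv hf0)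

end Jensen

namespace Matrix

section Eigenprojection

variable {𝕜 n : Type*} [RCLike 𝕜] [Fintype n] [DecidableEq n] {A : Matrix n n 𝕜}

noncomputable def IsHermitian.eigenProj (hA : A.IsHermitian) (i : n) : Matrix n n 𝕜 :=
  Unitary.conjStarAlgAut 𝕜 _ hA.eigenvectorUnitary (single i i 1)

lemma IsHermitian.posSemidef_eigenProj (hA : A.IsHermitian) (i : n) :
    (hA.eigenProj i).PosSemidef := by
  rw [eigenProj, Unitary.conjStarAlgAut_apply, ← diagonal_single]
  exact (PosSemidef.diagonal (Pi.single_nonneg.2 zero_le_one)).mul_mul_conjTranspose_same _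

lemma IsHermitian.cfc_eq_sum_smul_eigenProj (hA : A.IsHermitian) (f : ℝ → ℝ) :
    cfc f A = ∑ i, f (hA.eigenvalues i) • hA.eigenProj i := by
  rw [hA.cfc_eq, IsHermitian.cfc, ← sum_single_eq_diagonal, map_sum]
  refine sum_congr rfl fun i _ => ?_
  rw [eigenProj, RCLike.real_smul_eq_coe_smul (K := 𝕜), ← map_smul, smul_single, smul_eq_mul,
    mul_one]
  rfl

end Eigenprojection

variable {𝕜 m : Type*} [RCLike 𝕜] [Fintype m] [DecidableEq m]

lemma PosSemidef.re_inner_toEuclideanLin_nonneg {X : Matrix m m 𝕜} (hX : X.PosSemidef)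
    (x : EuclideanSpace 𝕜 m) : 0 ≤ RCLike.re ⟪toEuclideanLin X x, x⟫_𝕜 :=
  (isPositive_toEuclideanLin_iff.2 hX).re_inner_nonneg_left x

lemma re_inner_toEuclideanLin_sum_smul {ι : Type*} (s : Finset ι) (c : ι → ℝ)
    (M : ι → Matrix m m 𝕜) (x : EuclideanSpace 𝕜 m) :
    RCLike.re ⟪toEuclideanLin (∑ i ∈ s, c i • M i) x, x⟫_𝕜 =
      ∑ i ∈ s, c i * RCLike.re ⟪toEuclideanLin (M i) x, x⟫_𝕜 := by
  simp only [RCLike.real_smul_eq_coe_smul (K := 𝕜), map_sum, map_smul, LinearMap.sum_apply,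
    LinearMap.smul_apply, sum_inner, inner_smul_left, RCLike.conj_ofReal, RCLike.re_ofReal_mul]

lemma re_inner_toEuclideanLin_le_one {X : Matrix m m 𝕜} (hX : (1 - X).PosSemidef)
    {x : EuclideanSpace 𝕜 m} (hx : ‖x‖ ≤ 1) : RCLike.re ⟪toEuclideanLin X x, x⟫_𝕜 ≤ 1 := by
  have h := hX.re_inner_toEuclideanLin_nonneg x
  rw [map_sub, LinearMap.sub_apply, inner_sub_left, map_sub, toEuclideanLin, toLpLin_one,
    LinearMap.id_apply, inner_self_eq_norm_sq] at h
  nlinarith [norm_nonneg x]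

variable {n : Type*} [Fintype n] [DecidableEq n] {A : Matrix n n 𝕜}

lemma IsHermitian.re_inner_map_cfc_eq_sum (hA : A.IsHermitian)
    (Φ : Matrix n n 𝕜 →ₗ[𝕜] Matrix m m 𝕜) (x : EuclideanSpace 𝕜 m) (f : ℝ → ℝ) :
    RCLike.re ⟪toEuclideanLin (Φ (cfc f A)) x, x⟫_𝕜 =
      ∑ i, RCLike.re ⟪toEuclideanLin (Φ (hA.eigenProj i)) x, x⟫_𝕜 • f (hA.eigenvalues i) := by
  rw [hA.cfc_eq_sum_smul_eigenProj, map_sum]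
  simp only [LinearMap.map_smul_of_tower, re_inner_toEuclideanLin_sum_smul, smul_eq_mul, mul_comm]

end Matrix

theorem jensen_subunital_positive_map_general
    {n m : ℕ} (A : Matrix (Fin n) (Fin n) ℂ) (hA : A.IsHermitian)
    (J : Set ℝ) (hJ : spectrum ℝ A ⊆ J) (h0J : (0:ℝ) ∈ J)
    (f : ℝ → ℝ) (hconv : ConvexOn ℝ J f) (hf0 : f 0 ≤ 0)
    (Φ : Matrix (Fin n) (Fin n) ℂ →ₗ[ℂ] Matrix (Fin m) (Fin m) ℂ)
    (hpos : ∀ X : Matrix (Fin n) (Fin n) ℂ, X.PosSemidef → (Φ X).PosSemidef)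
    (hsub : ((1 : Matrix (Fin m) (Fin m) ℂ) - Φ 1).PosSemidef)
    (x : EuclideanSpace ℂ (Fin m)) (hx : ‖x‖ ≤ 1) :
    f ((⟪Matrix.toEuclideanLin (Φ A) x, x⟫_ℂ).re) ≤
      (⟪Matrix.toEuclideanLin (Φ (cfc f A)) x, x⟫_ℂ).re := by
  set w : Fin n → ℝ := fun i => (⟪toEuclideanLin (Φ (hA.eigenProj i)) x, x⟫_ℂ).re
  have hw : ∀ g : ℝ → ℝ,
      (⟪toEuclideanLin (Φ (cfc g A)) x, x⟫_ℂ).re = ∑ i, w i • g (hA.eigenvalues i) :=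
    hA.re_inner_map_cfc_eq_sum Φ x
  have hw_nonneg : ∀ i ∈ univ, 0 ≤ w i := fun i _ =>
    (hpos _ (hA.posSemidef_eigenProj i)).re_inner_toEuclideanLin_nonneg x
  have hw_sum : ∑ i, w i ≤ 1 := by
    have h := hw 1
    rw [cfc_one ℝ A] at h
    simpa [h] using re_inner_toEuclideanLin_le_one hsub hx
  have hΦA : (⟪toEuclideanLin (Φ A) x, x⟫_ℂ).re = ∑ i, w i • hA.eigenvalues i := by
    simpa only [cfc_id' ℝ A] using hw fun t => t
  rw [hΦA, hw]
  exact hconv.map_sum_le_of_sum_le_one h0J hf0 hw_nonneg hw_sum fun i _ =>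
    hJ (hA.eigenvalues_mem_spectrum_real i)

/-- Let `A` be a Hermitian `n×n` matrix with spectrum in an interval `J`, `f` convex
(and continuous) on `J`, `Φ` a unital positive linear map into `m×m` matrices and `x`
a unit vector. Then `f(⟨Φ(A)x, x⟩) ≤ ⟨Φ(f(A))x, x⟩`. -/
theorem jensen_subunital_positive_map
    {n m : ℕ} (A : Matrix (Fin n) (Fin n) ℂ) (hA : A.IsHermitian)
    (J : Set ℝ) (hJ : spectrum ℝ A ⊆ J) (h0J : (0:ℝ) ∈ J)
    (f : ℝ → ℝ) (hconv : ConvexOn ℝ J f) (hcont : ContinuousOn f J) (hf0 : f 0 ≤ 0)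
    (Φ : Matrix (Fin n) (Fin n) ℂ →ₗ[ℂ] Matrix (Fin m) (Fin m) ℂ)
    (hpos : ∀ X : Matrix (Fin n) (Fin n) ℂ, X.PosSemidef → (Φ X).PosSemidef)
    (hsub : ((1 : Matrix (Fin m) (Fin m) ℂ) - Φ 1).PosSemidef) (hpd : (Φ 1).PosDef)
    (x : EuclideanSpace ℂ (Fin m)) (hx : ‖x‖ ≤ 1) :
    f ((⟪Matrix.toEuclideanLin (Φ A) x, x⟫_ℂ).re) ≤
      (⟪Matrix.toEuclideanLin (Φ (cfc f A)) x, x⟫_ℂ).re :=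
  jensen_subunital_positive_map_general A hA J hJ h0J f hconv hf0 Φ hpos hsub x hx
end

section
/- For a Hermitian matrix A ∈ M_n and 1 ≤ k ≤ n, the sum of the k largest eigenvalues of A equals the maximum of ∑_{j=1}^k ⟨A x_j, x_j⟩ over all orthonormal families x_1, ..., x_k in ℂ^n. -/
open scoped InnerProductSpace

/-- The `j`-th largest eigenvalue (counted with multiplicity, `j = 0` is the largest)
of a Hermitian matrix. -/
noncomputable def eigDesc {n : ℕ} {A : Matrix (Fin n) (Fin n) ℂ}
    (hA : A.IsHermitian) (j : Fin n) : ℝ :=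
  hA.eigenvalues (Tuple.sort hA.eigenvalues j.rev)

/-! Expanding an orthonormal family `x_1, …, x_k` in an orthonormal eigenbasis `(b_i)` of `A`
gives `∑_j ⟪A x_j, x_j⟫ = ∑_i λ_i c_i` with `c_i = ∑_j |⟪b_i, x_j⟫|²`. Bessel's inequality gives
`0 ≤ c_i ≤ 1` and Parseval's identity `∑_i c_i = k`; over such weights, `∑_i λ_i c_i` with `λ`
decreasing is largest for the indicator of the first `k` indices, which the first `k`
eigenvectors realise. -/

open Finset

theorem Finset.sum_mul_le_sum_of_threshold {ι : Type*} [Fintype ι] (s : Finset ι)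
    {g d : ι → ℝ} {t : ℝ} (hs : ∀ i ∈ s, t ≤ g i) (hsc : ∀ i ∉ s, g i ≤ t)
    (hd0 : ∀ i, 0 ≤ d i) (hd1 : ∀ i, d i ≤ 1) (hd : ∑ i, d i = #s) :
    ∑ i, g i * d i ≤ ∑ i ∈ s, g i := by
  classical
  have hin : ∑ i ∈ s, (g i - t) * d i ≤ ∑ i ∈ s, (g i - t) :=
    sum_le_sum fun i hi => mul_le_of_le_one_right (sub_nonneg.2 (hs i hi)) (hd1 i)
  have hout : ∑ i ∈ sᶜ, (g i - t) * d i ≤ 0 :=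
    sum_nonpos fun i hi =>
      mul_nonpos_of_nonpos_of_nonneg (sub_nonpos.2 (hsc i (mem_compl.1 hi))) (hd0 i)
  calc ∑ i, g i * d i = ∑ i, (g i - t) * d i + t * #s := by
        simp only [sub_mul, sum_sub_distrib, ← mul_sum, hd, sub_add_cancel]
    _ = ∑ i ∈ s, (g i - t) * d i + ∑ i ∈ sᶜ, (g i - t) * d i + t * #s := by
        rw [sum_add_sum_compl]
    _ ≤ ∑ i ∈ s, (g i - t) + 0 + t * #s := by gcongr
    _ = ∑ i ∈ s, g i := by rw [sum_sub_distrib, sum_const, nsmul_eq_mul]; ring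

theorem Antitone.sum_mul_le_sum_castLE {n k : ℕ} (hk1 : 1 ≤ k) (hk : k ≤ n)
    {g d : Fin n → ℝ} (hg : Antitone g) (hd0 : ∀ i, 0 ≤ d i) (hd1 : ∀ i, d i ≤ 1)
    (hd : ∑ i, d i = k) :
    ∑ i, g i * d i ≤ ∑ j : Fin k, g (Fin.castLE hk j) := by
  have hmem : ∀ i : Fin n, i ∈ univ.map (Fin.castLEEmb hk) ↔ (i : ℕ) < k := fun i =>
    ⟨fun h => by obtain ⟨j, -, rfl⟩ := mem_map.1 h; exact j.isLt,
      fun h => mem_map.2 ⟨⟨i, h⟩, mem_univ _, rfl⟩⟩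
  refine (sum_mul_le_sum_of_threshold _ (t := g ⟨k - 1, by omega⟩) (fun i hi => ?_)
    (fun i hi => ?_) hd0 hd1 (by simpa using hd)).trans_eq (sum_map univ (Fin.castLEEmb hk) g)
  · exact hg (Fin.le_iff_val_le_val.2 (by have := (hmem i).1 hi; simp only; omega))
  · exact hg (Fin.le_iff_val_le_val.2 (by have := (hmem i).not.1 hi; simp only; omega))

section Eigenbasis

variable {𝕜 E ι : Type*} [RCLike 𝕜] [NormedAddCommGroup E] [InnerProductSpace 𝕜 E]
  [Fintype ι] {T : E →ₗ[𝕜] E} {B : OrthonormalBasis ι 𝕜 E} {μ : ι → ℝ}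

theorem re_inner_apply_self_eq_sum (hB : ∀ i, T (B i) = (μ i : 𝕜) • B i) (v : E) :
    RCLike.re ⟪T v, v⟫_𝕜 = ∑ i, μ i * ‖⟪B i, v⟫_𝕜‖ ^ 2 := by
  have hTv : T v = ∑ i, ((μ i : 𝕜) * ⟪B i, v⟫_𝕜) • B i := by
    conv_lhs => rw [← B.sum_repr' v]
    simp only [map_sum, map_smul, hB, smul_smul, mul_comm]
  rw [hTv, sum_inner, map_sum]
  refine sum_congr rfl fun i _ => ?_
  rw [inner_smul_left, map_mul (starRingEnd 𝕜), RCLike.conj_ofReal, mul_assoc, RCLike.conj_mul,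
    ← RCLike.ofReal_pow, ← RCLike.ofReal_mul, RCLike.ofReal_re]

theorem re_inner_apply_basis_self (hB : ∀ i, T (B i) = (μ i : 𝕜) • B i) (i : ι) :
    RCLike.re ⟪T (B i), B i⟫_𝕜 = μ i := by
  rw [hB, inner_smul_left, inner_self_eq_one_of_norm_eq_one (B.orthonormal.1 i)]
  simp

theorem Orthonormal.sum_sq_norm_inner_le_one {κ : Type*} [Fintype κ] {x : κ → E}
    (hx : Orthonormal 𝕜 x) {b : E} (hb : ‖b‖ = 1) : ∑ j, ‖⟪b, x j⟫_𝕜‖ ^ 2 ≤ 1 := by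
  simpa only [norm_inner_symm, hb, one_pow] using hx.sum_inner_products_le b (s := univ)

theorem OrthonormalBasis.sum_sum_sq_norm_inner_eq_card {κ : Type*} [Fintype κ] {x : κ → E}
    (B : OrthonormalBasis ι 𝕜 E) (hx : Orthonormal 𝕜 x) :
    ∑ i, ∑ j, ‖⟪B i, x j⟫_𝕜‖ ^ 2 = Fintype.card κ := by
  rw [sum_comm]
  simp [B.sum_sq_norm_inner_right, hx.1]

end Eigenbasis

theorem isGreatest_sum_re_inner_orthonormal {𝕜 E : Type*} [RCLike 𝕜] [NormedAddCommGroup E]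
    [InnerProductSpace 𝕜 E] {n k : ℕ} (hk1 : 1 ≤ k) (hk : k ≤ n) {T : E →ₗ[𝕜] E}
    {B : OrthonormalBasis (Fin n) 𝕜 E} {μ : Fin n → ℝ} (hμ : Antitone μ)
    (hB : ∀ i, T (B i) = (μ i : 𝕜) • B i) :
    IsGreatest {r : ℝ | ∃ x : Fin k → E, Orthonormal 𝕜 x ∧
        r = ∑ j, RCLike.re ⟪T (x j), x j⟫_𝕜}
      (∑ j : Fin k, μ (Fin.castLE hk j)) := by
  refine ⟨⟨fun j => B (Fin.castLE hk j), B.orthonormal.comp _ (Fin.castLE_injective hk),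
    by simp only [re_inner_apply_basis_self hB]⟩, ?_⟩
  rintro r ⟨x, hx, rfl⟩
  calc ∑ j, RCLike.re ⟪T (x j), x j⟫_𝕜 = ∑ i, μ i * ∑ j, ‖⟪B i, x j⟫_𝕜‖ ^ 2 := by
        simp only [re_inner_apply_self_eq_sum hB, mul_sum]
        exact sum_comm
    _ ≤ ∑ j : Fin k, μ (Fin.castLE hk j) :=
        hμ.sum_mul_le_sum_castLE hk1 hk (fun i => by positivity)
          (fun i => hx.sum_sq_norm_inner_le_one (B.orthonormal.1 i))
          (by simpa using B.sum_sum_sq_norm_inner_eq_card hx)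

namespace Matrix.IsHermitian

variable {n : ℕ} {A : Matrix (Fin n) (Fin n) ℂ} (hA : A.IsHermitian)

theorem eigDesc_antitone : Antitone (eigDesc hA) :=
  fun _ _ hij => Tuple.monotone_sort hA.eigenvalues (Fin.rev_anti hij)

theorem exists_orthonormalBasis_toEuclideanLin_eq_eigDesc_smul :
    ∃ B : OrthonormalBasis (Fin n) ℂ (EuclideanSpace ℂ (Fin n)),
      ∀ j, toEuclideanLin A (B j) = (eigDesc hA j : ℂ) • B j := by
  refine ⟨hA.eigenvectorBasis.reindex (Fin.revPerm.trans (Tuple.sort hA.eigenvalues)).symm,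
    fun j => ?_⟩
  have h := hA.mulVec_eigenvectorBasis (Tuple.sort hA.eigenvalues j.rev)
  rw [RCLike.real_smul_eq_coe_smul (K := ℂ)] at h
  rw [OrthonormalBasis.reindex_apply, Equiv.symm_symm]
  exact congrArg (WithLp.toLp 2) h

end Matrix.IsHermitian

/-- Ky Fan's maximum principle: the sum of the `k` largest eigenvalues of a Hermitian
matrix `A` is the maximum of `∑_{j=1}^k ⟨A x_j, x_j⟩` over orthonormal families
`x_1, …, x_k`. -/
theorem ky_fan_maximum_principle {n : ℕ} (A : Matrix (Fin n) (Fin n) ℂ)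
    (hA : A.IsHermitian) (k : ℕ) (hk1 : 1 ≤ k) (hk : k ≤ n) :
    IsGreatest
      {r : ℝ | ∃ x : Fin k → EuclideanSpace ℂ (Fin n), Orthonormal ℂ x ∧
        r = ∑ j, (⟪Matrix.toEuclideanLin A (x j), x j⟫_ℂ).re}
      (∑ j : Fin k, eigDesc hA (Fin.castLE hk j)) := by
  obtain ⟨B, hB⟩ := hA.exists_orthonormalBasis_toEuclideanLin_eq_eigDesc_smul
  exact isGreatest_sum_re_inner_orthonormal hk1 hk hA.eigDesc_antitone hB
end

section
/- Let A, B ∈ M_n be Hermitian with spectra in [ω, Ω] and f convex on [ω, Ω]. Then Tr(f((A+B)/2)) ≤ Tr(∫_0^1 f(tA+(1-t)B) dt). -/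
/-!
The map `X ↦ Tr f(X)` is convex on Hermitian matrices with spectrum in `[ω, Ω]`. Indeed, if the
unitary `U` with columns `uᵢ` diagonalises `M = aX + bY`, then
`Tr f(M) = ∑ᵢ f(a⟪uᵢ, X uᵢ⟫ + b⟪uᵢ, Y uᵢ⟫)`, and Jensen's inequality for the weights
`|⟪eⱼ, uᵢ⟫|²`, `eⱼ` running over an eigenbasis of `X`, gives `f(⟪uᵢ, X uᵢ⟫) ≤ ⟪uᵢ, f(X) uᵢ⟫`.
So `t ↦ Tr f(tA + (1-t)B)` is convex on `[0, 1]`; it is continuous because the functional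
calculus is, and the scalar Hermite–Hadamard inequality `g(1/2) ≤ ∫₀¹ g` applies to it. Finally
the trace commutes with the entrywise integral.
-/

open Set MeasureTheory

namespace Matrix

variable {n 𝕜 : Type*} [RCLike 𝕜] [Fintype n] [DecidableEq n]

lemma star_mul_diagonal_mul_apply_self (W : Matrix n n 𝕜) (d : n → 𝕜) (i : n) :
    (star W * diagonal d * W) i i = ∑ j, d j * (‖W j i‖ ^ 2 : ℝ) := by
  rw [mul_apply]
  refine Finset.sum_congr rfl fun j _ => ?_
  rw [mul_diagonal, star_apply, RCLike.star_def, RCLike.ofReal_pow, ← RCLike.conj_mul]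
  ring

lemma sum_norm_sq_apply_of_mem_unitaryGroup {W : Matrix n n 𝕜} (hW : W ∈ unitaryGroup n 𝕜)
    (i : n) : ∑ j, ‖W j i‖ ^ 2 = 1 := by
  have h := star_mul_diagonal_mul_apply_self W (fun _ => 1) i
  rw [diagonal_one, Matrix.mul_one, Unitary.star_mul_self_of_mem hW, one_apply_eq] at h
  exact_mod_cast (by simpa using h.symm : ((∑ j, ‖W j i‖ ^ 2 : ℝ) : 𝕜) = 1)

lemma re_trace_eq_sum_re_star_mul_mul_apply_self (X : Matrix n n 𝕜) {V : Matrix n n 𝕜}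
    (hV : V ∈ unitaryGroup n 𝕜) :
    RCLike.re X.trace = ∑ i, RCLike.re ((star V * X * V) i i) := by
  have h : (star V * X * V).trace = X.trace := by
    rw [trace_mul_cycle, Unitary.mul_star_self_of_mem hV, Matrix.one_mul]
  rw [← h]
  exact map_sum _ _ _

namespace IsHermitian

variable {X : Matrix n n 𝕜}

lemma re_star_mul_cfc_mul_apply_self (hX : X.IsHermitian) (g : ℝ → ℝ) (V : Matrix n n 𝕜)
    (i : n) :
    RCLike.re ((star V * cfc g X * V) i i) =
      ∑ j, g (hX.eigenvalues j) * ‖(star (hX.eigenvectorUnitary : Matrix n n 𝕜) * V) j i‖ ^ 2 := by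
  rw [hX.cfc_eq, IsHermitian.cfc, Unitary.conjStarAlgAut_apply]
  set U : Matrix n n 𝕜 := (hX.eigenvectorUnitary : Matrix n n 𝕜)
  rw [show star V * (U * diagonal (RCLike.ofReal ∘ g ∘ hX.eigenvalues) * star U) * V =
      star (star U * V) * diagonal (RCLike.ofReal ∘ g ∘ hX.eigenvalues) * (star U * V) by
    simp only [star_mul, star_star, Matrix.mul_assoc],
    star_mul_diagonal_mul_apply_self, map_sum]
  simp

lemma re_star_eigenvectorUnitary_mul_cfc_mul_apply_self (hX : X.IsHermitian) (g : ℝ → ℝ)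
    (i : n) :
    RCLike.re ((star (hX.eigenvectorUnitary : Matrix n n 𝕜) * cfc g X *
      hX.eigenvectorUnitary) i i) = g (hX.eigenvalues i) := by
  simp [hX.re_star_mul_cfc_mul_apply_self, one_apply, apply_ite (fun z : 𝕜 => ‖z‖ ^ 2)]

lemma eigenvalues_eq_re_star_mul_mul_apply_self (hX : X.IsHermitian) (i : n) :
    hX.eigenvalues i = RCLike.re ((star (hX.eigenvectorUnitary : Matrix n n 𝕜) * X *
      hX.eigenvectorUnitary) i i) := by
  have h := hX.re_star_eigenvectorUnitary_mul_cfc_mul_apply_self id i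
  rw [cfc_id ℝ X] at h
  exact h.symm

lemma exists_mem_stdSimplex_re_star_mul_cfc_mul_apply_self (hX : X.IsHermitian)
    {V : Matrix n n 𝕜} (hV : V ∈ unitaryGroup n 𝕜) (i : n) :
    ∃ w ∈ stdSimplex ℝ n, ∀ g : ℝ → ℝ,
      RCLike.re ((star V * cfc g X * V) i i) = ∑ j, w j * g (hX.eigenvalues j) := by
  have hW : star (hX.eigenvectorUnitary : Matrix n n 𝕜) * V ∈ unitaryGroup n 𝕜 :=
    mul_mem (Unitary.star_mem hX.eigenvectorUnitary.2) hV
  refine ⟨fun j => ‖(star (hX.eigenvectorUnitary : Matrix n n 𝕜) * V) j i‖ ^ 2,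
    ⟨fun j => by positivity, sum_norm_sq_apply_of_mem_unitaryGroup hW i⟩, fun g => ?_⟩
  simp_rw [hX.re_star_mul_cfc_mul_apply_self, mul_comm]

lemma re_star_mul_mul_apply_self_mem (hX : X.IsHermitian) {s : Set ℝ} (hs : Convex ℝ s)
    (hXs : spectrum ℝ X ⊆ s) {V : Matrix n n 𝕜} (hV : V ∈ unitaryGroup n 𝕜) (i : n) :
    RCLike.re ((star V * X * V) i i) ∈ s := by
  obtain ⟨w, ⟨hw₀, hw₁⟩, hw⟩ := hX.exists_mem_stdSimplex_re_star_mul_cfc_mul_apply_self hV i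
  rw [← cfc_id ℝ X, hw id]
  exact hs.sum_mem (fun j _ => hw₀ j) hw₁ fun j _ => hXs (hX.eigenvalues_mem_spectrum_real j)

lemma map_re_star_mul_mul_apply_self_le (hX : X.IsHermitian) {s : Set ℝ} {f : ℝ → ℝ}
    (hf : ConvexOn ℝ s f) (hXs : spectrum ℝ X ⊆ s) {V : Matrix n n 𝕜}
    (hV : V ∈ unitaryGroup n 𝕜) (i : n) :
    f (RCLike.re ((star V * X * V) i i)) ≤ RCLike.re ((star V * cfc f X * V) i i) := by
  obtain ⟨w, ⟨hw₀, hw₁⟩, hw⟩ := hX.exists_mem_stdSimplex_re_star_mul_cfc_mul_apply_self hV i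
  nth_rw 1 [← cfc_id ℝ X]
  rw [hw id, hw f]
  exact hf.map_sum_le (fun j _ => hw₀ j) hw₁ fun j _ => hXs (hX.eigenvalues_mem_spectrum_real j)

lemma eigenvalues_smul_add_smul {Y : Matrix n n 𝕜} {a b : ℝ}
    (hM : (a • X + b • Y).IsHermitian) (i : n) :
    hM.eigenvalues i =
      a * RCLike.re ((star (hM.eigenvectorUnitary : Matrix n n 𝕜) * X *
        hM.eigenvectorUnitary) i i) +
      b * RCLike.re ((star (hM.eigenvectorUnitary : Matrix n n 𝕜) * Y *
        hM.eigenvectorUnitary) i i) := by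
  simp [hM.eigenvalues_eq_re_star_mul_mul_apply_self, Matrix.mul_add, Matrix.add_mul,
    RCLike.smul_re]

end IsHermitian

theorem convex_setOf_isHermitian_spectrum_subset {s : Set ℝ} (hs : Convex ℝ s) :
    Convex ℝ {X : Matrix n n 𝕜 | X.IsHermitian ∧ spectrum ℝ X ⊆ s} := by
  rintro X ⟨hX, hXs⟩ Y ⟨hY, hYs⟩ a b ha hb hab
  have hM : (a • X + b • Y).IsHermitian :=
    (hX.smul (IsSelfAdjoint.all a)).add (hY.smul (IsSelfAdjoint.all b))
  refine ⟨hM, ?_⟩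
  rw [hM.spectrum_real_eq_range_eigenvalues]
  rintro _ ⟨i, rfl⟩
  rw [IsHermitian.eigenvalues_smul_add_smul]
  exact hs (hX.re_star_mul_mul_apply_self_mem hs hXs hM.eigenvectorUnitary.2 i)
    (hY.re_star_mul_mul_apply_self_mem hs hYs hM.eigenvectorUnitary.2 i) ha hb hab

theorem convexOn_re_trace_cfc {s : Set ℝ} {f : ℝ → ℝ} (hf : ConvexOn ℝ s f) :
    ConvexOn ℝ {X : Matrix n n 𝕜 | X.IsHermitian ∧ spectrum ℝ X ⊆ s}
      fun X => RCLike.re (cfc f X).trace := by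
  refine ⟨convex_setOf_isHermitian_spectrum_subset hf.1, ?_⟩
  rintro X ⟨hX, hXs⟩ Y ⟨hY, hYs⟩ a b ha hb hab
  have hM : (a • X + b • Y).IsHermitian :=
    (hX.smul (IsSelfAdjoint.all a)).add (hY.smul (IsSelfAdjoint.all b))
  set U := hM.eigenvectorUnitary
  let x i := RCLike.re ((star (U : Matrix n n 𝕜) * X * U) i i)
  let y i := RCLike.re ((star (U : Matrix n n 𝕜) * Y * U) i i)
  calc RCLike.re (cfc f (a • X + b • Y)).trace
      = ∑ i, f (a * x i + b * y i) := by
        rw [re_trace_eq_sum_re_star_mul_mul_apply_self _ U.2]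
        refine Finset.sum_congr rfl fun i _ => ?_
        rw [hM.re_star_eigenvectorUnitary_mul_cfc_mul_apply_self, hM.eigenvalues_smul_add_smul]
    _ ≤ ∑ i, (a * f (x i) + b * f (y i)) := by
        gcongr with i
        exact hf.2 (hX.re_star_mul_mul_apply_self_mem hf.1 hXs U.2 i)
          (hY.re_star_mul_mul_apply_self_mem hf.1 hYs U.2 i) ha hb hab
    _ ≤ ∑ i, (a * RCLike.re ((star (U : Matrix n n 𝕜) * cfc f X * U) i i) +
          b * RCLike.re ((star (U : Matrix n n 𝕜) * cfc f Y * U) i i)) := by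
        gcongr with i
        · exact hX.map_re_star_mul_mul_apply_self_le hf hXs U.2 i
        · exact hY.map_re_star_mul_mul_apply_self_le hf hYs U.2 i
    _ = a • RCLike.re (cfc f X).trace + b • RCLike.re (cfc f Y).trace := by
        rw [re_trace_eq_sum_re_star_mul_mul_apply_self _ U.2,
          re_trace_eq_sum_re_star_mul_mul_apply_self (cfc f Y) U.2, Finset.sum_add_distrib,
          ← Finset.mul_sum, ← Finset.mul_sum, smul_eq_mul, smul_eq_mul]

end Matrix

theorem Matrix.trace_of_intervalIntegral {n E : Type*} [Fintype n] [NormedAddCommGroup E]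
    [NormedSpace ℝ E] {F : ℝ → Matrix n n E} {a b : ℝ}
    (hF : ∀ i, IntervalIntegrable (fun t => F t i i) volume a b) :
    (Matrix.of fun i j => ∫ t in a..b, F t i j).trace = ∫ t in a..b, (F t).trace := by
  simp only [trace, diag_apply, of_apply]
  exact (intervalIntegral.integral_finsetSum fun i _ => hF i).symm

theorem ContinuousOn.matrix_cfc {n X : Type*} [Fintype n] [DecidableEq n] [TopologicalSpace X]
    {M : X → Matrix n n ℂ} {t : Set X} {s : Set ℝ} (hs : IsCompact s) (hM : ContinuousOn M t)
    (hMs : ∀ x ∈ t, (M x).IsHermitian ∧ spectrum ℝ (M x) ⊆ s) {f : ℝ → ℝ}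
    (hf : ContinuousOn f s) : ContinuousOn (fun x => cfc f (M x)) t := by
  -- the C⋆-norm on matrices induces their product topology
  open scoped Matrix.Norms.L2Operator in
  exact hM.cfc' hs f (fun x hx => (hMs x hx).2) (fun x hx => (hMs x hx).1.isSelfAdjoint) hf

theorem ConvexOn.mul_map_midpoint_le_intervalIntegral {g : ℝ → ℝ} {a b : ℝ} (hab : a ≤ b)
    (hg : ConvexOn ℝ (Icc a b) g) (hint : IntervalIntegrable g volume a b) :
    (b - a) * g ((a + b) / 2) ≤ ∫ x in a..b, g x := by
  have hint' : IntervalIntegrable (fun x => g (a + b - x)) volume a b := by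
    simpa using (hint.comp_sub_left (a + b)).symm
  have hreflect : ∫ x in a..b, g (a + b - x) = ∫ x in a..b, g x := by
    rw [intervalIntegral.integral_comp_sub_left]
    simp
  have hmid : ∀ x ∈ Icc a b, g ((a + b) / 2) ≤ (g x + g (a + b - x)) / 2 := fun x hx => by
    have hx' : a + b - x ∈ Icc a b := ⟨by linarith [hx.2], by linarith [hx.1]⟩
    have h := hg.2 hx hx' (by norm_num : (0 : ℝ) ≤ 1 / 2) (by norm_num : (0 : ℝ) ≤ 1 / 2)
      (by norm_num)
    simp only [smul_eq_mul] at h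
    rw [show (1 / 2 : ℝ) * x + 1 / 2 * (a + b - x) = (a + b) / 2 by ring] at h
    linarith
  calc (b - a) * g ((a + b) / 2) = ∫ _ in a..b, g ((a + b) / 2) := by simp
    _ ≤ ∫ x in a..b, (g x + g (a + b - x)) / 2 :=
      intervalIntegral.integral_mono_on hab intervalIntegrable_const
        ((hint.add hint').div_const 2) hmid
    _ = ∫ x in a..b, g x := by
      rw [intervalIntegral.integral_div, intervalIntegral.integral_add hint hint', hreflect]
      ring

/-- Trace Hermite–Hadamard: for Hermitian `A, B` with spectra in `[ω, Ω]` and `f`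
convex (and continuous) on `[ω, Ω]`,
`Tr f((A+B)/2) ≤ Tr ∫_0^1 f(tA+(1-t)B) dt` (integral taken entrywise). -/
theorem trace_hermite_hadamard
    {n : ℕ} (A B : Matrix (Fin n) (Fin n) ℂ)
    (hA : A.IsHermitian) (hB : B.IsHermitian) (ω Ω : ℝ)
    (hJA : spectrum ℝ A ⊆ Set.Icc ω Ω) (hJB : spectrum ℝ B ⊆ Set.Icc ω Ω)
    (f : ℝ → ℝ) (hconv : ConvexOn ℝ (Set.Icc ω Ω) f)
    (hcont : ContinuousOn f (Set.Icc ω Ω)) :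
    (Matrix.trace (cfc f ((1/2 : ℝ) • (A + B)))).re ≤
      (Matrix.trace (Matrix.of fun i j =>
        ∫ t in (0:ℝ)..1, (cfc f (t • A + (1 - t) • B)) i j : Matrix (Fin n) (Fin n) ℂ)).re := by
  have hmem : ∀ t ∈ Icc (0 : ℝ) 1, t • A + (1 - t) • B ∈
      {X : Matrix (Fin n) (Fin n) ℂ | X.IsHermitian ∧ spectrum ℝ X ⊆ Icc ω Ω} := fun t ht =>
    Matrix.convex_setOf_isHermitian_spectrum_subset (convex_Icc ω Ω) ⟨hA, hJA⟩ ⟨hB, hJB⟩ ht.1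
      (sub_nonneg.2 ht.2) (add_sub_cancel _ _)
  have hconvex : ConvexOn ℝ (Icc 0 1) fun t : ℝ => (cfc f (t • A + (1 - t) • B)).trace.re := by
    have h := ((Matrix.convexOn_re_trace_cfc hconv).comp_affineMap (AffineMap.lineMap B A)).subset
      (fun t ht => by simpa [AffineMap.lineMap_apply_module, add_comm] using hmem t ht)
      (convex_Icc 0 1)
    simpa [Function.comp_def, AffineMap.lineMap_apply_module, add_comm] using h
  have hcfc : ContinuousOn (fun t : ℝ => cfc f (t • A + (1 - t) • B)) (Icc 0 1) :=
    ContinuousOn.matrix_cfc isCompact_Icc (by fun_prop) hmem hcont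
  have htrace : ContinuousOn (fun t : ℝ => (cfc f (t • A + (1 - t) • B)).trace) (Icc 0 1) :=
    continuous_id.matrix_trace.comp_continuousOn hcfc
  have hdiag : ∀ i, IntervalIntegrable (fun t : ℝ => cfc f (t • A + (1 - t) • B) i i) volume 0 1 :=
    fun i => ((continuous_id.matrix_elem i i).comp_continuousOn hcfc).intervalIntegrable_of_Icc
      zero_le_one
  calc (cfc f ((1 / 2 : ℝ) • (A + B))).trace.re
      = (1 - 0) * (cfc f (((0 + 1) / 2 : ℝ) • A + (1 - (0 + 1) / 2 : ℝ) • B)).trace.re := by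
        norm_num [smul_add]
    _ ≤ ∫ t in (0 : ℝ)..1, (cfc f (t • A + (1 - t) • B)).trace.re :=
        hconvex.mul_map_midpoint_le_intervalIntegral zero_le_one
          ((Complex.continuous_re.comp_continuousOn htrace).intervalIntegrable_of_Icc zero_le_one)
    _ = _ := by
        rw [Matrix.trace_of_intervalIntegral hdiag]
        exact intervalIntegral.intervalIntegral_re (htrace.intervalIntegrable_of_Icc zero_le_one)
end

section
/- Let A_1, ..., A_k ∈ M_n be Hermitian with spectra in [ω, Ω], f an increasing convex function on [ω, Ω], and Z_1, ..., Z_k ∈ M_n with ∑_{i=1}^k Z_i* Z_i = I_n. Then there exists a unitary matrix U ∈ M_n such that f(∑_{i=1}^k Z_i* A_i Z_i) ≤ U (∑_{i=1}^k Z_i* f(A_i) Z_i) U*. -/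
open scoped ComplexOrder
open scoped Matrix

/-!
Write `B = ∑ Zᵢ* Aᵢ Zᵢ` and `C = ∑ Zᵢ* f(Aᵢ) Zᵢ`. For a unit vector `x`, diagonalizing each
`Aᵢ = Vᵢ diag(λᵢ) Vᵢ*` writes `⟨x, B x⟩` and `⟨x, C x⟩` as the averages of `λᵢⱼ` and `f(λᵢⱼ)`
against the weights `|(Vᵢ* Zᵢ x)ⱼ|²`, which sum to `‖x‖² = 1` because `∑ Zᵢ* Zᵢ = 1`. Jensen's
inequality therefore gives `f ⟨x, B x⟩ ≤ ⟨x, C x⟩`.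

List the eigenvalues of `B` and `C` increasingly as `β` and `γ`. For each `m`, a dimension count
produces a unit vector in the span of the eigenvectors of `B` for `β_m, …, β_n` and of those of `C`
for `γ_1, …, γ_m`; there `β_m ≤ ⟨x, B x⟩` and `⟨x, C x⟩ ≤ γ_m`, so monotonicity of `f` gives
`f(β_m) ≤ γ_m`. The unitary sending the `m`-th eigenvector of `C` to the `m`-th eigenvector of `B`
then conjugates `C` to a matrix dominating `f(B)`.
-/

open Matrix

variable {𝕜 : Type*} [RCLike 𝕜] {n : Type*} [Fintype n]

theorem Matrix.exists_ne_zero_forall_mulVec_eq_zero {K l m : Type*} [Field K] [Fintype l]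
    [Fintype m] (P : Matrix l n K) (Q : Matrix m n K) (s : Finset l) (t : Finset m)
    (h : s.card + t.card < Fintype.card n) :
    ∃ x ≠ 0, (∀ j ∈ s, (P *ᵥ x) j = 0) ∧ ∀ j ∈ t, (Q *ᵥ x) j = 0 := by
  let Φ : (n → K) →ₗ[K] (s → K) × (t → K) :=
    (LinearMap.funLeft K K Subtype.val ∘ₗ P.mulVecLin).prod
      (LinearMap.funLeft K K Subtype.val ∘ₗ Q.mulVecLin)
  obtain ⟨x, hx, hx0⟩ := Submodule.exists_mem_ne_zero_of_ne_bot <|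
    LinearMap.ker_ne_bot_of_finrank_lt (f := Φ) (by simpa using h)
  refine ⟨x, hx0, fun j hj => ?_, fun j hj => ?_⟩
  · exact congrFun (congrArg Prod.fst hx) ⟨j, hj⟩
  · exact congrFun (congrArg Prod.snd hx) ⟨j, hj⟩

theorem Matrix.exists_smul_sum_norm_sq_eq_one {x : n → 𝕜} (hx : x ≠ 0) :
    ∃ c : 𝕜, ∑ j, ‖(c • x) j‖ ^ 2 = 1 := by
  have hpos : 0 < ∑ j, ‖x j‖ ^ 2 := by
    obtain ⟨j, hj⟩ := Function.ne_iff.mp hx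
    exact Finset.sum_pos' (fun j _ => by positivity)
      ⟨j, Finset.mem_univ _, pow_pos (norm_pos_iff.mpr hj) 2⟩
  refine ⟨((√(∑ j, ‖x j‖ ^ 2))⁻¹ : ℝ), ?_⟩
  simp only [Pi.smul_apply, smul_eq_mul, norm_mul, mul_pow, ← Finset.mul_sum, RCLike.norm_ofReal]
  rw [abs_of_pos (by positivity), inv_pow, Real.sq_sqrt hpos.le, inv_mul_cancel₀ hpos.ne']

theorem Matrix.isHermitian_sum_conjTranspose_mul_mul {ι : Type*} [Fintype ι]
    {A : ι → Matrix n n 𝕜} (hA : ∀ i, (A i).IsHermitian) (Z : ι → Matrix n n 𝕜) :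
    (∑ i, (Z i)ᴴ * A i * Z i).IsHermitian :=
  isSelfAdjoint_sum _ fun i _ => (hA i).isSelfAdjoint.conjugate' (Z i)

variable [DecidableEq n]

theorem Matrix.re_dotProduct_mul_diagonal_mul_conjTranspose_mulVec
    (P : Matrix n n 𝕜) (d : n → ℝ) (x : n → 𝕜) :
    RCLike.re (star x ⬝ᵥ (P * diagonal (RCLike.ofReal ∘ d) * Pᴴ) *ᵥ x)
      = ∑ j, d j * ‖(Pᴴ *ᵥ x) j‖ ^ 2 := by
  have hstar : star x ᵥ* P = star (Pᴴ *ᵥ x) := by rw [star_mulVec, conjTranspose_conjTranspose]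
  rw [← mulVec_mulVec, ← mulVec_mulVec, dotProduct_mulVec, hstar, dotProduct, map_sum]
  refine Finset.sum_congr rfl fun j _ => ?_
  simp only [mulVec_diagonal, Pi.star_apply, Function.comp_apply, RCLike.star_def]
  rw [mul_left_comm, RCLike.conj_mul, ← RCLike.ofReal_pow, ← RCLike.ofReal_mul, RCLike.ofReal_re]

theorem Matrix.re_dotProduct_star_self (x : n → 𝕜) :
    RCLike.re (star x ⬝ᵥ x) = ∑ j, ‖x j‖ ^ 2 := by
  simpa using re_dotProduct_mul_diagonal_mul_conjTranspose_mulVec 1 1 x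

theorem Matrix.sum_norm_sq_conjTranspose_mulVec_of_mem_unitaryGroup {W : Matrix n n 𝕜}
    (hW : W ∈ unitaryGroup n 𝕜) (x : n → 𝕜) :
    ∑ j, ‖(Wᴴ *ᵥ x) j‖ ^ 2 = ∑ j, ‖x j‖ ^ 2 := by
  simpa [← star_eq_conjTranspose, mem_unitaryGroup_iff.mp hW, re_dotProduct_star_self] using
    (re_dotProduct_mul_diagonal_mul_conjTranspose_mulVec W 1 x).symm

section Jensen

variable {ι : Type*} [Fintype ι] {A : ι → Matrix n n 𝕜}

theorem Matrix.re_dotProduct_sum_conj_cfc_mulVec (hA : ∀ i, (A i).IsHermitian)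
    (Z : ι → Matrix n n 𝕜) (g : ℝ → ℝ) (x : n → 𝕜) :
    RCLike.re (star x ⬝ᵥ (∑ i, (Z i)ᴴ * cfc g (A i) * Z i) *ᵥ x)
      = ∑ p : ι × n, g ((hA p.1).eigenvalues p.2)
          * ‖((((hA p.1).eigenvectorUnitary : Matrix n n 𝕜)ᴴ * Z p.1) *ᵥ x) p.2‖ ^ 2 := by
  simp only [sum_mulVec, dotProduct_sum, map_sum, Fintype.sum_prod_type]
  refine Finset.sum_congr rfl fun i _ => ?_
  set V : Matrix n n 𝕜 := (hA i).eigenvectorUnitary.1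
  have hconj : (Z i)ᴴ * cfc g (A i) * Z i
      = ((Z i)ᴴ * V) * diagonal (RCLike.ofReal ∘ (g ∘ (hA i).eigenvalues)) * ((Z i)ᴴ * V)ᴴ := by
    rw [(hA i).cfc_eq, IsHermitian.cfc, Unitary.conjStarAlgAut_apply, conjTranspose_mul,
      conjTranspose_conjTranspose, star_eq_conjTranspose]
    simp only [mul_assoc, V]
  rw [hconj, re_dotProduct_mul_diagonal_mul_conjTranspose_mulVec, conjTranspose_mul,
    conjTranspose_conjTranspose]
  rfl

theorem ConvexOn.map_re_dotProduct_sum_conj_le (hA : ∀ i, (A i).IsHermitian) {ω Ω : ℝ}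
    (hspec : ∀ i, spectrum ℝ (A i) ⊆ Set.Icc ω Ω) {f : ℝ → ℝ} (hf : ConvexOn ℝ (Set.Icc ω Ω) f)
    {Z : ι → Matrix n n 𝕜} (hZ : ∑ i, (Z i)ᴴ * Z i = 1) {x : n → 𝕜} (hx : ∑ j, ‖x j‖ ^ 2 = 1) :
    RCLike.re (star x ⬝ᵥ (∑ i, (Z i)ᴴ * A i * Z i) *ᵥ x) ∈ Set.Icc ω Ω ∧
      f (RCLike.re (star x ⬝ᵥ (∑ i, (Z i)ᴴ * A i * Z i) *ᵥ x))
        ≤ RCLike.re (star x ⬝ᵥ (∑ i, (Z i)ᴴ * cfc f (A i) * Z i) *ᵥ x) := by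
  set w : ι × n → ℝ := fun p =>
    ‖((((hA p.1).eigenvectorUnitary : Matrix n n 𝕜)ᴴ * Z p.1) *ᵥ x) p.2‖ ^ 2
  set μ : ι × n → ℝ := fun p => (hA p.1).eigenvalues p.2
  have hw₀ : ∀ p ∈ Finset.univ, 0 ≤ w p := fun p _ => sq_nonneg _
  have hw₁ : ∑ p, w p = 1 := by
    have hone : ∀ i, cfc (fun _ : ℝ => (1 : ℝ)) (A i) = 1 := fun i => cfc_const_one ℝ (A i)
    simpa [hone, hZ, re_dotProduct_star_self, hx] using
      (re_dotProduct_sum_conj_cfc_mulVec hA Z (fun _ => 1) x).symm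
  have hμ : ∀ p ∈ Finset.univ, μ p ∈ Set.Icc ω Ω := fun p _ =>
    hspec p.1 ((hA p.1).eigenvalues_mem_spectrum_real p.2)
  have hB : RCLike.re (star x ⬝ᵥ (∑ i, (Z i)ᴴ * A i * Z i) *ᵥ x) = ∑ p, w p • μ p := by
    have hid : ∀ i, cfc id (A i) = A i := fun i => cfc_id ℝ (A i) (hA i).isSelfAdjoint
    simpa [hid, mul_comm] using re_dotProduct_sum_conj_cfc_mulVec hA Z id x
  have hC : RCLike.re (star x ⬝ᵥ (∑ i, (Z i)ᴴ * cfc f (A i) * Z i) *ᵥ x) = ∑ p, w p • f (μ p) := by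
    simpa [mul_comm] using re_dotProduct_sum_conj_cfc_mulVec hA Z f x
  rw [hB, hC]
  exact ⟨(convex_Icc ω Ω).sum_mem hw₀ hw₁ hμ, hf.map_sum_le hw₀ hw₁ hμ⟩

end Jensen

theorem Matrix.submatrix_mul_diagonal_mul_conjTranspose {α : Type*} [CommSemiring α] [StarRing α]
    (U : Matrix n n α) (e : Equiv.Perm n) (d : n → α) :
    U.submatrix id e * diagonal (d ∘ e) * (U.submatrix id e)ᴴ = U * diagonal d * Uᴴ := by
  rw [← submatrix_diagonal_equiv, conjTranspose_submatrix, submatrix_mul_equiv,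
    submatrix_mul_equiv, submatrix_id_id]

theorem Matrix.submatrix_id_mem_unitaryGroup {α : Type*} [CommRing α] [StarRing α]
    {U : Matrix n n α} (hU : U ∈ unitaryGroup n α) (e : Equiv.Perm n) :
    U.submatrix id e ∈ unitaryGroup n α := by
  rw [mem_unitaryGroup_iff', star_eq_conjTranspose, conjTranspose_submatrix,
    ← submatrix_mul _ _ _ _ _ Function.bijective_id,
    ← star_eq_conjTranspose, mem_unitaryGroup_iff'.mp hU, submatrix_one_equiv]

theorem Matrix.IsHermitian.exists_cfc_eq_monotone {n : ℕ} {M : Matrix (Fin n) (Fin n) 𝕜}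
    (hM : M.IsHermitian) :
    ∃ V ∈ unitaryGroup (Fin n) 𝕜, ∃ β : Fin n → ℝ, Monotone β ∧
      ∀ g : ℝ → ℝ, cfc g M = V * diagonal (RCLike.ofReal ∘ g ∘ β) * Vᴴ := by
  let σ := Tuple.sort hM.eigenvalues
  refine ⟨(hM.eigenvectorUnitary : Matrix (Fin n) (Fin n) 𝕜).submatrix id σ,
    submatrix_id_mem_unitaryGroup hM.eigenvectorUnitary.2 σ, hM.eigenvalues ∘ σ,
    Tuple.monotone_sort _, fun g => ?_⟩
  rw [hM.cfc_eq, IsHermitian.cfc, Unitary.conjStarAlgAut_apply, star_eq_conjTranspose]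
  exact (submatrix_mul_diagonal_mul_conjTranspose _ σ _).symm

theorem Matrix.exists_unit_le_re_dotProduct_and_re_dotProduct_le {n : ℕ}
    {V W : Matrix (Fin n) (Fin n) 𝕜} (hV : V ∈ unitaryGroup (Fin n) 𝕜)
    (hW : W ∈ unitaryGroup (Fin n) 𝕜) {β γ : Fin n → ℝ} (hβ : Monotone β) (hγ : Monotone γ)
    (m : Fin n) :
    ∃ x : Fin n → 𝕜, ∑ j, ‖x j‖ ^ 2 = 1 ∧
      β m ≤ RCLike.re (star x ⬝ᵥ (V * diagonal (RCLike.ofReal ∘ β) * Vᴴ) *ᵥ x) ∧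
      RCLike.re (star x ⬝ᵥ (W * diagonal (RCLike.ofReal ∘ γ) * Wᴴ) *ᵥ x) ≤ γ m := by
  obtain ⟨y, hy, hyV, hyW⟩ := exists_ne_zero_forall_mulVec_eq_zero Vᴴ Wᴴ
    (Finset.Iio m) (Finset.Ioi m)
    (by simp only [Fin.card_Iio, Fin.card_Ioi, Fintype.card_fin]; omega)
  obtain ⟨c, hc⟩ := exists_smul_sum_norm_sq_eq_one hy
  have hxV : ∀ j < m, (Vᴴ *ᵥ c • y) j = 0 := fun j hj => by
    rw [mulVec_smul, Pi.smul_apply, hyV j (Finset.mem_Iio.mpr hj), smul_zero]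
  have hxW : ∀ j, m < j → (Wᴴ *ᵥ c • y) j = 0 := fun j hj => by
    rw [mulVec_smul, Pi.smul_apply, hyW j (Finset.mem_Ioi.mpr hj), smul_zero]
  have hV₁ : ∑ j, ‖(Vᴴ *ᵥ c • y) j‖ ^ 2 = 1 := by
    rw [sum_norm_sq_conjTranspose_mulVec_of_mem_unitaryGroup hV, hc]
  have hW₁ : ∑ j, ‖(Wᴴ *ᵥ c • y) j‖ ^ 2 = 1 := by
    rw [sum_norm_sq_conjTranspose_mulVec_of_mem_unitaryGroup hW, hc]
  refine ⟨c • y, hc, ?_, ?_⟩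
  · rw [re_dotProduct_mul_diagonal_mul_conjTranspose_mulVec]
    calc β m = ∑ j, β m * ‖(Vᴴ *ᵥ c • y) j‖ ^ 2 := by rw [← Finset.mul_sum, hV₁, mul_one]
      _ ≤ _ := Finset.sum_le_sum fun j _ => by
        rcases lt_or_ge j m with hj | hj
        · simp [hxV j hj]
        · exact mul_le_mul_of_nonneg_right (hβ hj) (sq_nonneg _)
  · rw [re_dotProduct_mul_diagonal_mul_conjTranspose_mulVec]
    calc _ ≤ ∑ j, γ m * ‖(Wᴴ *ᵥ c • y) j‖ ^ 2 := Finset.sum_le_sum fun j _ => by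
          rcases le_or_gt j m with hj | hj
          · exact mul_le_mul_of_nonneg_right (hγ hj) (sq_nonneg _)
          · simp [hxW j hj]
      _ = γ m := by rw [← Finset.mul_sum, hW₁, mul_one]

theorem Matrix.posSemidef_conj_mul_diagonal_sub_of_le {V W : Matrix n n 𝕜}
    (hW : W ∈ unitaryGroup n 𝕜) {d e : n → ℝ} (hde : d ≤ e) :
    ((V * Wᴴ) * (W * diagonal (RCLike.ofReal ∘ e) * Wᴴ) * (V * Wᴴ)ᴴ
      - V * diagonal (RCLike.ofReal ∘ d) * Vᴴ).PosSemidef := by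
  have hWW : Wᴴ * W = 1 := by rw [← star_eq_conjTranspose]; exact mem_unitaryGroup_iff'.mp hW
  have hsub : (V * Wᴴ) * (W * diagonal (RCLike.ofReal ∘ e) * Wᴴ) * (V * Wᴴ)ᴴ
      - V * diagonal (RCLike.ofReal ∘ d) * Vᴴ = V * diagonal (RCLike.ofReal ∘ (e - d)) * Vᴴ := by
    simp only [conjTranspose_mul, conjTranspose_conjTranspose, mul_assoc]
    rw [← mul_assoc Wᴴ W, hWW, one_mul, ← mul_assoc Wᴴ W, hWW, one_mul, ← mul_sub, ← sub_mul,
      diagonal_sub]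
    congr
    ext j
    simp
  rw [hsub]
  refine (posSemidef_diagonal_iff.mpr fun j => ?_).mul_mul_conjTranspose_same V
  simpa using sub_nonneg.mpr (hde j)

theorem bourin_unitary_orbit_general
    {n k : ℕ} (A : Fin k → Matrix (Fin n) (Fin n) ℂ)
    (hA : ∀ i, (A i).IsHermitian) (ω Ω : ℝ)
    (hspec : ∀ i, spectrum ℝ (A i) ⊆ Set.Icc ω Ω)
    (f : ℝ → ℝ) (hmono : MonotoneOn f (Set.Icc ω Ω))
    (hconv : ConvexOn ℝ (Set.Icc ω Ω) f)
    (Z : Fin k → Matrix (Fin n) (Fin n) ℂ) (hZ : ∑ i, (Z i)ᴴ * Z i = 1) :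
    ∃ U ∈ Matrix.unitaryGroup (Fin n) ℂ,
      ((U : Matrix (Fin n) (Fin n) ℂ) * (∑ i, (Z i)ᴴ * cfc f (A i) * Z i) * Uᴴ
        - cfc f (∑ i, (Z i)ᴴ * A i * Z i)).PosSemidef := by
  set B := ∑ i, (Z i)ᴴ * A i * Z i
  set C := ∑ i, (Z i)ᴴ * cfc f (A i) * Z i
  have hB : B.IsHermitian := isHermitian_sum_conjTranspose_mul_mul hA Z
  obtain ⟨V, hV, β, hβ, hfB⟩ := hB.exists_cfc_eq_monotone
  have hC : C.IsHermitian :=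
    isHermitian_sum_conjTranspose_mul_mul (fun i => cfc_predicate f (A i)) Z
  obtain ⟨W, hW, γ, hγ, hfC⟩ := hC.exists_cfc_eq_monotone
  have hBdiag : B = V * diagonal (RCLike.ofReal ∘ β) * Vᴴ := by
    simpa using (cfc_id ℝ B hB.isSelfAdjoint).symm.trans (hfB id)
  have hCdiag : C = W * diagonal (RCLike.ofReal ∘ γ) * Wᴴ := by
    simpa using (cfc_id ℝ C hC.isSelfAdjoint).symm.trans (hfC id)
  have hjensen := fun (x : Fin n → ℂ) (hx : ∑ j, ‖x j‖ ^ 2 = 1) =>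
    hconv.map_re_dotProduct_sum_conj_le hA hspec hZ hx
  -- the dimension count for `B` against itself shows that `β m` is a value of the quadratic form
  have hβmem : ∀ m, β m ∈ Set.Icc ω Ω := fun m => by
    obtain ⟨x, hx, hle, hge⟩ := exists_unit_le_re_dotProduct_and_re_dotProduct_le hV hV hβ hβ m
    rw [← hBdiag] at hle hge
    exact le_antisymm hge hle ▸ (hjensen x hx).1
  have hfβγ : ∀ m, f (β m) ≤ γ m := fun m => by
    obtain ⟨x, hx, hle, hge⟩ := exists_unit_le_re_dotProduct_and_re_dotProduct_le hV hW hβ hγ m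
    rw [← hBdiag] at hle
    rw [← hCdiag] at hge
    exact (hmono (hβmem m) (hjensen x hx).1 hle).trans ((hjensen x hx).2.trans hge)
  refine ⟨V * Wᴴ, mul_mem hV (Unitary.star_mem hW), ?_⟩
  rw [hCdiag, hfB f]
  exact posSemidef_conj_mul_diagonal_sub_of_le hW hfβγ

/-- Bourin's theorem: if `A_1, …, A_k` are Hermitian with spectra in `[ω, Ω]`, `f` is
increasing, convex (and continuous) on `[ω, Ω]` and `∑ Z_i* Z_i = 1`, then there is a
unitary `U` with `f(∑ Z_i* A_i Z_i) ≤ U (∑ Z_i* f(A_i) Z_i) U*` in the Loewner order. -/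
theorem bourin_unitary_orbit
    {n k : ℕ} (A : Fin k → Matrix (Fin n) (Fin n) ℂ)
    (hA : ∀ i, (A i).IsHermitian) (ω Ω : ℝ)
    (hspec : ∀ i, spectrum ℝ (A i) ⊆ Set.Icc ω Ω)
    (f : ℝ → ℝ) (hmono : MonotoneOn f (Set.Icc ω Ω))
    (hconv : ConvexOn ℝ (Set.Icc ω Ω) f) (hcont : ContinuousOn f (Set.Icc ω Ω))
    (Z : Fin k → Matrix (Fin n) (Fin n) ℂ) (hZ : ∑ i, (Z i)ᴴ * Z i = 1) :
    ∃ U ∈ Matrix.unitaryGroup (Fin n) ℂ,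
      ((U : Matrix (Fin n) (Fin n) ℂ) * (∑ i, (Z i)ᴴ * cfc f (A i) * Z i) * Uᴴ
        - cfc f (∑ i, (Z i)ᴴ * A i * Z i)).PosSemidef :=
  bourin_unitary_orbit_general A hA ω Ω hspec f hmono hconv Z hZ
end

section
/- Let A ∈ M_n be Hermitian with spectrum in [ω, Ω], f increasing and convex on [ω, Ω] with 0 ∈ [ω,Ω] and f(0) ≤ 0, and Z ∈ M_n with Z*Z ≤ I_n. Then there exists a unitary U ∈ M_n with f(Z*AZ) ≤ U Z* f(A) Z U*. -/
/-!
For a unit vector `x`, `⟪x, Z*AZ x⟫ = ⟪Zx, A Zx⟫` with `‖Zx‖ ≤ 1`, so in an eigenbasis of `A` it is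
a combination of eigenvalues of `A` with nonnegative weights of total mass at most one. As
`0 ∈ [ω, Ω]` and `f 0 ≤ 0`, Jensen's inequality (the missing mass sits at `0`) gives
`f ⟪x, Z*AZ x⟫ ≤ ⟪x, Z* f(A) Z x⟫`. On the span of the eigenvectors of `Z*AZ` whose eigenvalues
are at least its `k`-th largest one `μ`, monotonicity of `f` thus bounds the quadratic form of
`Z* f(A) Z` below by `f μ`, and a dimension count shows that `f μ` is at most the `k`-th largest
eigenvalue of `Z* f(A) Z`. The unitary mapping an eigenbasis of `Z* f(A) Z` onto one of `Z*AZ`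
then does the job.
-/

open scoped ComplexOrder Matrix
open Finset

section SubprobabilityJensen

variable {𝕜 E β ι : Type*} [Field 𝕜] [LinearOrder 𝕜] [IsStrictOrderedRing 𝕜]
  [AddCommGroup E] [Module 𝕜 E] [Fintype ι] {s : Set E} {w : ι → 𝕜} {z : ι → E}

theorem Convex.sum_mem_of_sum_le_one (hs : Convex 𝕜 s) (h0 : 0 ∈ s) (hw : ∀ i, 0 ≤ w i)
    (hw1 : ∑ i, w i ≤ 1) (hz : ∀ i, z i ∈ s) : ∑ i, w i • z i ∈ s := by
  simpa [Fintype.sum_option] using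
    hs.sum_mem (t := univ) (w := (Option.elim · (1 - ∑ i, w i) w)) (z := (Option.elim · 0 z))
      (by rintro (_ | i) -; exacts [sub_nonneg.2 hw1, hw i]) (by simp [Fintype.sum_option])
      (by rintro (_ | i) -; exacts [h0, hz i])

theorem ConvexOn.map_sum_le_of_sum_le_one_s11 [AddCommGroup β] [PartialOrder β] [IsOrderedAddMonoid β]
    [Module 𝕜 β] [IsStrictOrderedModule 𝕜 β] {f : E → β} (hf : ConvexOn 𝕜 s f) (h0 : 0 ∈ s)
    (hf0 : f 0 ≤ 0) (hw : ∀ i, 0 ≤ w i) (hw1 : ∑ i, w i ≤ 1) (hz : ∀ i, z i ∈ s) :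
    f (∑ i, w i • z i) ≤ ∑ i, w i • f (z i) := by
  have := hf.map_sum_le (t := univ) (w := (Option.elim · (1 - ∑ i, w i) w))
      (p := (Option.elim · 0 z)) (by rintro (_ | i) -; exacts [sub_nonneg.2 hw1, hw i])
      (by simp [Fintype.sum_option]) (by rintro (_ | i) -; exacts [h0, hz i])
  simp only [Fintype.sum_option, Option.elim, smul_zero, zero_add] at this
  exact this.trans (add_le_of_nonpos_left (smul_nonpos_of_nonneg_of_nonpos (sub_nonneg.2 hw1) hf0))

end SubprobabilityJensen

theorem Antitone.le_of_card_filter_le {m : ℕ} {α β : Type*} [LinearOrder α] [LinearOrder β]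
    {a : Fin m → α} {b : Fin m → β} (ha : Antitone a) (hb : Antitone b) {j : Fin m} {t : β}
    (h : #{k | a j ≤ a k} ≤ #{k | t ≤ b k}) : t ≤ b j := by
  by_contra! hbj
  have hIic : #(Iic j) ≤ #{k | a j ≤ a k} :=
    card_le_card fun k hk => mem_filter.2 ⟨mem_univ k, ha (mem_Iic.1 hk)⟩
  have hIio : #{k | t ≤ b k} ≤ #(Iio j) :=
    card_le_card fun k hk => mem_Iio.2 <| lt_of_not_ge fun hjk =>
      ((hb hjk).trans_lt hbj).not_ge (mem_filter.1 hk).2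
  rw [Fin.card_Iic] at hIic
  rw [Fin.card_Iio] at hIio
  omega

namespace Matrix

variable {𝕜 m n : Type*} [RCLike 𝕜] [Fintype m] [Fintype n]

theorem star_dotProduct_conjTranspose_mul_mul_mulVec (Z : Matrix m n 𝕜) (N : Matrix m m 𝕜)
    (x : n → 𝕜) : star x ⬝ᵥ ((Zᴴ * N * Z) *ᵥ x) = star (Z *ᵥ x) ⬝ᵥ (N *ᵥ (Z *ᵥ x)) := by
  rw [← mulVec_mulVec, ← mulVec_mulVec, dotProduct_mulVec, star_mulVec]

theorem PosSemidef.re_star_mulVec_dotProduct_mulVec_le {Z : Matrix m n 𝕜} [DecidableEq n]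
    (hZ : (1 - Zᴴ * Z).PosSemidef) (x : n → 𝕜) :
    RCLike.re (star (Z *ᵥ x) ⬝ᵥ (Z *ᵥ x)) ≤ RCLike.re (star x ⬝ᵥ x) := by
  have h := (RCLike.nonneg_iff.1 (hZ.dotProduct_mulVec_nonneg x)).1
  rwa [sub_mulVec, one_mulVec, dotProduct_sub, ← mulVec_mulVec, dotProduct_mulVec, ← star_mulVec,
    map_sub, sub_nonneg] at h

theorem exists_star_dotProduct_self_eq_one {P : Submodule 𝕜 (n → 𝕜)} {x : n → 𝕜} (hx : x ∈ P)
    (hx0 : x ≠ 0) : ∃ u ∈ P, star u ⬝ᵥ u = 1 := by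
  obtain ⟨r, hr, hxr⟩ := RCLike.pos_iff_exists_ofReal.1 (dotProduct_star_self_pos_iff.2 hx0)
  refine ⟨(Real.sqrt r)⁻¹ • x, P.smul_of_tower_mem _ hx, ?_⟩
  rw [star_smul, star_trivial, smul_dotProduct, dotProduct_smul, ← hxr, smul_smul, ← mul_inv,
    Real.mul_self_sqrt hr.le, RCLike.real_smul_ofReal, ← RCLike.ofReal_mul,
    inv_mul_cancel₀ hr.ne', RCLike.ofReal_one]

variable [DecidableEq n]

namespace IsHermitian

variable {A B : Matrix n n 𝕜} (hA : A.IsHermitian)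

noncomputable def spectralWeight (x : n → 𝕜) (i : n) : ℝ :=
  ‖(star (hA.eigenvectorUnitary : Matrix n n 𝕜) *ᵥ x) i‖ ^ 2

theorem re_star_dotProduct_cfc_mulVec_eq_sum (f : ℝ → ℝ) (x : n → 𝕜) :
    RCLike.re (star x ⬝ᵥ (cfc f A *ᵥ x)) = ∑ i, hA.spectralWeight x i * f (hA.eigenvalues i) := by
  have h := star_dotProduct_conjTranspose_mul_mul_mulVec
    (star (hA.eigenvectorUnitary : Matrix n n 𝕜)) (diagonal (RCLike.ofReal ∘ f ∘ hA.eigenvalues)) x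
  rw [star_eq_conjTranspose, conjTranspose_conjTranspose, ← star_eq_conjTranspose] at h
  rw [hA.cfc_eq, IsHermitian.cfc, Unitary.conjStarAlgAut_apply, h]
  simp only [dotProduct, mulVec_diagonal, Pi.star_apply, Function.comp_apply, map_sum]
  refine Finset.sum_congr rfl fun i _ => ?_
  rw [mul_left_comm, RCLike.star_def, RCLike.conj_mul, ← RCLike.ofReal_pow, ← RCLike.ofReal_mul,
    RCLike.ofReal_re, mul_comm, spectralWeight]

theorem re_star_dotProduct_mulVec_eq_sum (x : n → 𝕜) :
    RCLike.re (star x ⬝ᵥ (A *ᵥ x)) = ∑ i, hA.spectralWeight x i * hA.eigenvalues i := by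
  simpa only [cfc_id ℝ A hA.isSelfAdjoint, id] using hA.re_star_dotProduct_cfc_mulVec_eq_sum id x

theorem sum_spectralWeight (x : n → 𝕜) :
    ∑ i, hA.spectralWeight x i = RCLike.re (star x ⬝ᵥ x) := by
  simpa only [cfc_const_one ℝ A hA.isSelfAdjoint, one_mulVec, mul_one] using
    (hA.re_star_dotProduct_cfc_mulVec_eq_sum (fun _ => 1) x).symm

theorem re_star_dotProduct_mulVec_mem {s : Set ℝ} (hs : Convex ℝ s) (h0 : 0 ∈ s)
    (hspec : ∀ i, hA.eigenvalues i ∈ s) {x : n → 𝕜} (hx : RCLike.re (star x ⬝ᵥ x) ≤ 1) :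
    RCLike.re (star x ⬝ᵥ (A *ᵥ x)) ∈ s := by
  rw [hA.re_star_dotProduct_mulVec_eq_sum]
  exact hs.sum_mem_of_sum_le_one h0 (fun i => sq_nonneg _) (hA.sum_spectralWeight x ▸ hx) hspec

theorem map_re_star_dotProduct_mulVec_le {s : Set ℝ} {f : ℝ → ℝ} (hf : ConvexOn ℝ s f)
    (h0 : 0 ∈ s) (hf0 : f 0 ≤ 0) (hspec : ∀ i, hA.eigenvalues i ∈ s) {x : n → 𝕜}
    (hx : RCLike.re (star x ⬝ᵥ x) ≤ 1) :
    f (RCLike.re (star x ⬝ᵥ (A *ᵥ x))) ≤ RCLike.re (star x ⬝ᵥ (cfc f A *ᵥ x)) := by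
  rw [hA.re_star_dotProduct_mulVec_eq_sum, hA.re_star_dotProduct_cfc_mulVec_eq_sum]
  exact hf.map_sum_le_of_sum_le_one_s11 h0 hf0 (fun i => sq_nonneg _) (hA.sum_spectralWeight x ▸ hx)
    hspec

theorem star_dotProduct_eigenvectorBasis_self (i : n) :
    star ⇑(hA.eigenvectorBasis i) ⬝ᵥ ⇑(hA.eigenvectorBasis i) = 1 := by
  rw [dotProduct_comm, ← EuclideanSpace.inner_eq_star_dotProduct, inner_self_eq_norm_sq_to_K,
    hA.eigenvectorBasis.orthonormal.1 i]
  simp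

/-- The span of the eigenvectors `hA.eigenvectorBasis i`, `i ∈ s`. -/
noncomputable def eigenspan (s : Set n) : Submodule 𝕜 (n → 𝕜) :=
  (Pi.spanSubset 𝕜 s).map
    (UnitaryGroup.toLinearEquiv hA.eigenvectorUnitary : (n → 𝕜) →ₗ[𝕜] n → 𝕜)

theorem mem_eigenspan {s : Set n} {x : n → 𝕜} :
    x ∈ hA.eigenspan s ↔ ∀ i ∉ s, (star (hA.eigenvectorUnitary : Matrix n n 𝕜) *ᵥ x) i = 0 :=
  (Submodule.mem_map_equiv _).trans Pi.mem_spanSubset_iff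

theorem finrank_eigenspan (s : Finset n) : Module.finrank 𝕜 (hA.eigenspan s) = #s := by
  rw [eigenspan, LinearEquiv.finrank_map_eq, Pi.dim_spanSubset, Set.ncard_coe_finset]

theorem re_star_dotProduct_mulVec_mem_convexHull {s : Finset n} {x : n → 𝕜}
    (hx : x ∈ hA.eigenspan s) (hx1 : star x ⬝ᵥ x = 1) :
    RCLike.re (star x ⬝ᵥ (A *ᵥ x)) ∈ convexHull ℝ (hA.eigenvalues '' s) := by
  have hw : ∀ i ∉ s, hA.spectralWeight x i = 0 := fun i hi => by
    simp [spectralWeight, hA.mem_eigenspan.1 hx i (by simpa using hi)]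
  rw [hA.re_star_dotProduct_mulVec_eq_sum, ← sum_subset (subset_univ s) fun i _ hi => by
    simp [hw i hi]]
  refine (convex_convexHull ℝ _).sum_mem (fun i _ => sq_nonneg _) ?_
    fun i hi => subset_convexHull ℝ _ ⟨i, hi, rfl⟩
  rw [sum_subset (subset_univ s) fun i _ hi => hw i hi, hA.sum_spectralWeight, hx1, RCLike.one_re]

theorem finrank_le_card_le_eigenvalues {W : Submodule 𝕜 (n → 𝕜)} {t : ℝ}
    (hW : ∀ x ∈ W, star x ⬝ᵥ x = 1 → t ≤ RCLike.re (star x ⬝ᵥ (A *ᵥ x))) :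
    Module.finrank 𝕜 W ≤ #{i | t ≤ hA.eigenvalues i} := by
  set s : Finset n := {i | ¬ t ≤ hA.eigenvalues i}
  have hcard : #{i | t ≤ hA.eigenvalues i} + #s = Fintype.card n :=
    (card_filter_add_card_filter_not _).trans card_univ
  by_contra! hlt
  have hW_s : ¬ Disjoint W (hA.eigenspan s) := fun hdisj => by
    have := Submodule.finrank_add_finrank_le_of_disjoint hdisj
    rw [hA.finrank_eigenspan, Module.finrank_fintype_fun_eq_card] at this
    omega
  obtain ⟨x, hxW, hxs, hx0⟩ : ∃ x ∈ W, x ∈ hA.eigenspan s ∧ x ≠ 0 := by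
    simpa [Submodule.disjoint_def] using hW_s
  obtain ⟨u, hu, hu1⟩ :=
    exists_star_dotProduct_self_eq_one (P := W ⊓ hA.eigenspan s) ⟨hxW, hxs⟩ hx0
  have hlt : RCLike.re (star u ⬝ᵥ (A *ᵥ u)) < t :=
    convexHull_min (t := Set.Iio t) (by rintro _ ⟨i, hi, rfl⟩; simpa [s] using hi)
      (convex_Iio t) (hA.re_star_dotProduct_mulVec_mem_convexHull hu.2 hu1)
  exact (hW u hu.1 hu1).not_gt hlt

theorem card_filter_eigenvalues₀ (p : ℝ → Prop) [DecidablePred p] :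
    #{k | p (hA.eigenvalues₀ k)} = #{k | p (hA.eigenvalues k)} :=
  card_equiv (Fintype.equivOfCardEq (Fintype.card_fin _)) fun k => by
    rw [mem_filter, mem_filter]
    simp [eigenvalues]

/-- `hA.eigenvalues` is the decreasing list `hA.eigenvalues₀` read through an enumeration of `n`
that does not depend on `A`, so the `i`-th eigenvalues of `A` and `B` have the same rank. -/
theorem le_eigenvalues_of_card_le (hB : B.IsHermitian) {i : n} {t : ℝ}
    (h : #{k | hA.eigenvalues i ≤ hA.eigenvalues k} ≤ #{k | t ≤ hB.eigenvalues k}) :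
    t ≤ hB.eigenvalues i := by
  rw [← hA.card_filter_eigenvalues₀ (hA.eigenvalues i ≤ ·),
    ← hB.card_filter_eigenvalues₀ (t ≤ ·)] at h
  exact hA.eigenvalues₀_antitone.le_of_card_filter_le hB.eigenvalues₀_antitone h

theorem map_eigenvalues_le_eigenvalues (hB : B.IsHermitian) {s : Set ℝ} {f : ℝ → ℝ}
    (hf : MonotoneOn f s) (hrange : ∀ x, star x ⬝ᵥ x = 1 → RCLike.re (star x ⬝ᵥ (A *ᵥ x)) ∈ s)
    (hdom : ∀ x, star x ⬝ᵥ x = 1 →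
      f (RCLike.re (star x ⬝ᵥ (A *ᵥ x))) ≤ RCLike.re (star x ⬝ᵥ (B *ᵥ x)))
    (i : n) : f (hA.eigenvalues i) ≤ hB.eigenvalues i := by
  have hi : hA.eigenvalues i ∈ s :=
    hA.eigenvalues_eq i ▸ hrange _ (hA.star_dotProduct_eigenvectorBasis_self i)
  refine hA.le_eigenvalues_of_card_le hB ?_
  rw [← hA.finrank_eigenspan]
  refine hB.finrank_le_card_le_eigenvalues fun x hx hx1 => ?_
  have hix : hA.eigenvalues i ≤ RCLike.re (star x ⬝ᵥ (A *ᵥ x)) :=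
    convexHull_min (t := Set.Ici _) (by rintro _ ⟨k, hk, rfl⟩; simpa using hk) (convex_Ici _)
      (hA.re_star_dotProduct_mulVec_mem_convexHull hx hx1)
  exact (hf hi (hrange x hx1) hix).trans (hdom x hx1)

theorem exists_unitary_posSemidef_sub_cfc (hB : B.IsHermitian) {f : ℝ → ℝ}
    (h : ∀ i, f (hA.eigenvalues i) ≤ hB.eigenvalues i) :
    ∃ U ∈ unitaryGroup n 𝕜, (U * B * Uᴴ - cfc f A).PosSemidef := by
  set u := hA.eigenvectorUnitary * star hB.eigenvectorUnitary
  have hu : (u : Matrix n n 𝕜) * B * (u : Matrix n n 𝕜)ᴴ - cfc f A =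
      Unitary.conjStarAlgAut 𝕜 _ hA.eigenvectorUnitary
        (diagonal (RCLike.ofReal ∘ (hB.eigenvalues - f ∘ hA.eigenvalues))) := by
    rw [← star_eq_conjTranspose, ← Unitary.conjStarAlgAut_apply (S := 𝕜),
      Unitary.conjStarAlgAut_mul_apply, hB.conjStarAlgAut_star_eigenvectorUnitary, hA.cfc_eq,
      IsHermitian.cfc, ← map_sub, diagonal_sub]
    congr
    ext
    simp
  refine ⟨u, u.2, ?_⟩
  rw [hu, Unitary.conjStarAlgAut_apply, star_eq_conjTranspose]
  exact (posSemidef_diagonal_iff.2 fun i => by simpa using h i).mul_mul_conjTranspose_same _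

end IsHermitian
end Matrix

open Matrix

theorem bourin_contraction_general
    {n : ℕ} (A : Matrix (Fin n) (Fin n) ℂ) (hA : A.IsHermitian) (ω Ω : ℝ)
    (hspec : spectrum ℝ A ⊆ Set.Icc ω Ω) (h0 : (0:ℝ) ∈ Set.Icc ω Ω)
    (f : ℝ → ℝ) (hmono : MonotoneOn f (Set.Icc ω Ω))
    (hconv : ConvexOn ℝ (Set.Icc ω Ω) f)
    (hf0 : f 0 ≤ 0)
    (Z : Matrix (Fin n) (Fin n) ℂ) (hZ : ((1 : Matrix (Fin n) (Fin n) ℂ) - Zᴴ * Z).PosSemidef) :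
    ∃ U ∈ Matrix.unitaryGroup (Fin n) ℂ,
      ((U : Matrix (Fin n) (Fin n) ℂ) * (Zᴴ * cfc f A * Z) * Uᴴ
        - cfc f (Zᴴ * A * Z)).PosSemidef := by
  have hM : (Zᴴ * A * Z).IsHermitian := isHermitian_conjTranspose_mul_mul Z hA
  have hB : (Zᴴ * cfc f A * Z).IsHermitian :=
    isHermitian_conjTranspose_mul_mul Z (cfc_predicate f A)
  have hspecA : ∀ i, hA.eigenvalues i ∈ Set.Icc ω Ω :=
    fun i => hspec (hA.eigenvalues_mem_spectrum_real i)
  have hZx : ∀ x, star x ⬝ᵥ x = 1 → RCLike.re (star (Z *ᵥ x) ⬝ᵥ (Z *ᵥ x)) ≤ 1 := fun x hx =>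
    (hZ.re_star_mulVec_dotProduct_mulVec_le x).trans (by rw [hx, RCLike.one_re])
  refine hM.exists_unitary_posSemidef_sub_cfc hB
    (hM.map_eigenvalues_le_eigenvalues hB hmono (fun x hx => ?_) fun x hx => ?_)
  · rw [star_dotProduct_conjTranspose_mul_mul_mulVec]
    exact hA.re_star_dotProduct_mulVec_mem (convex_Icc ω Ω) h0 hspecA (hZx x hx)
  · simp only [star_dotProduct_conjTranspose_mul_mul_mulVec]
    exact hA.map_re_star_dotProduct_mulVec_le hconv h0 hf0 hspecA (hZx x hx)

/-- Extension of Bourin's theorem to contractions: if `A` is Hermitian with spectrum in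
`[ω, Ω] ∋ 0`, `f` is increasing, convex (and continuous) on `[ω, Ω]` with `f(0) ≤ 0` and
`Z*Z ≤ 1`, then there is a unitary `U` with `f(Z*AZ) ≤ U Z* f(A) Z U*`. -/
theorem bourin_contraction
    {n : ℕ} (A : Matrix (Fin n) (Fin n) ℂ) (hA : A.IsHermitian) (ω Ω : ℝ)
    (hspec : spectrum ℝ A ⊆ Set.Icc ω Ω) (h0 : (0:ℝ) ∈ Set.Icc ω Ω)
    (f : ℝ → ℝ) (hmono : MonotoneOn f (Set.Icc ω Ω))
    (hconv : ConvexOn ℝ (Set.Icc ω Ω) f) (hcont : ContinuousOn f (Set.Icc ω Ω))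
    (hf0 : f 0 ≤ 0)
    (Z : Matrix (Fin n) (Fin n) ℂ) (hZ : ((1 : Matrix (Fin n) (Fin n) ℂ) - Zᴴ * Z).PosSemidef) :
    ∃ U ∈ Matrix.unitaryGroup (Fin n) ℂ,
      ((U : Matrix (Fin n) (Fin n) ℂ) * (Zᴴ * cfc f A * Z) * Uᴴ
        - cfc f (Zᴴ * A * Z)).PosSemidef :=
  bourin_contraction_general A hA ω Ω hspec h0 f hmono hconv hf0 Z hZ
end

section
/- Let A ∈ M_n be Hermitian with spectrum in [ω, Ω], f increasing and convex on [ω, Ω], and Ψ : M_n → M_m a unital positive linear map. Then there exists a unitary U ∈ M_m such that f(Ψ(A)) ≤ U Ψ(f(A)) U*. -/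
/-!
Write `B = Ψ A` and `C = Ψ (f A)`. It suffices that the eigenvalues of `f B`, that is `f` applied
to the eigenvalues of `B` in decreasing order, are dominated termwise by the eigenvalues of `C`
in decreasing order: the unitary carrying an ordered eigenbasis of `C` onto one of `B` then
conjugates `C` above `f B`. For an affine minorant `ℓ x = s x + r` of `f` on `[ω, Ω]` with
`s ≥ 0`, positivity and unitality of `Ψ` give `ℓ B = Ψ (ℓ A) ≤ Ψ (f A) = C`, so Weyl's
monotonicity principle (a dimension count intersecting two spans of eigenvectors) gives
`s λₖ(B) + r ≤ λₖ(C)`. The spectrum of `B` lies in `[ω, Ω]`, where the continuous increasing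
convex `f` is the supremum of such minorants (translated chords), hence `f (λₖ B) ≤ λₖ C`.
-/

open Set Filter Topology
open scoped ComplexOrder Matrix InnerProductSpace MatrixOrder

section Convex

variable {f : ℝ → ℝ} {ω Ω : ℝ}

/-- The chord of `f` over `[c, d]`, translated to pass through `(d, f c)`, lies below `f`. -/
theorem ConvexOn.slope_mul_sub_add_le (hmono : MonotoneOn f (Icc ω Ω))
    (hconv : ConvexOn ℝ (Icc ω Ω) f) {c d x : ℝ} (hc : c ∈ Icc ω Ω) (hd : d ∈ Icc ω Ω)
    (hx : x ∈ Icc ω Ω) (hcd : c < d) : slope f c d * (x - d) + f c ≤ f x := by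
  have hs : 0 ≤ slope f c d := hmono.slope_nonneg hc hd
  have hx' : f x - f c = slope f c x * (x - c) := by
    simpa [mul_comm] using (sub_smul_slope f c x).symm
  rcases lt_or_ge x c with hxc | hcx
  · have := hconv.slope_mono hc ⟨hx, hxc.ne⟩ ⟨hd, hcd.ne'⟩ (hxc.trans hcd).le
    nlinarith
  rcases le_or_gt x d with hxd | hdx
  · nlinarith [hmono hc hx hcx]
  · have := hconv.slope_mono hc ⟨hd, hcd.ne'⟩ ⟨hx, (hcd.trans hdx).ne'⟩ hdx.le
    nlinarith

theorem ConvexOn.le_of_forall_affine_minorant_le (hmono : MonotoneOn f (Icc ω Ω))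
    (hconv : ConvexOn ℝ (Icc ω Ω) f) (hcont : ContinuousOn f (Icc ω Ω)) {p t : ℝ}
    (hp : p ∈ Icc ω Ω)
    (h : ∀ a b : ℝ, 0 ≤ a → (∀ x ∈ Icc ω Ω, a * x + b ≤ f x) → a * p + b ≤ t) : f p ≤ t := by
  rcases hp.1.eq_or_lt with hωp | hωp
  · simpa using h 0 (f p) le_rfl fun x hx ↦ by simpa using hmono hp hx (hωp ▸ hx.1)
  refine le_of_tendsto ((hcont p hp).mono_of_mem_nhdsWithin (Icc_mem_nhdsLT_of_mem ⟨hωp, hp.2⟩))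
    (eventually_of_mem (Ico_mem_nhdsLT hωp) fun c hc ↦ ?_)
  have hc' : c ∈ Icc ω Ω := ⟨hc.1, hc.2.le.trans hp.2⟩
  simpa using h _ (f c - slope f c p * p) (hmono.slope_nonneg hc' hp) fun x hx ↦ by
    linarith [hconv.slope_mul_sub_add_le hmono hc' hp hx hc.2]

end Convex

namespace OrthonormalBasis

variable {𝕜 E ι : Type*} [RCLike 𝕜] [NormedAddCommGroup E] [InnerProductSpace 𝕜 E] [Fintype ι]
  (b : OrthonormalBasis ι 𝕜 E) {T : E →ₗ[𝕜] E} {μ : ι → ℝ}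

theorem re_inner_map_self_eq_sum (hT : ∀ i, T (b i) = (μ i : 𝕜) • b i) (x : E) :
    RCLike.re ⟪x, T x⟫_𝕜 = ∑ i, μ i * ‖⟪b i, x⟫_𝕜‖ ^ 2 := by
  have hTx : T x = ∑ i, (⟪b i, x⟫_𝕜 * μ i) • b i := by
    conv_lhs => rw [← b.sum_repr' x]
    simp only [map_sum, map_smul, hT, smul_smul]
  rw [hTx, inner_sum, map_sum]
  refine Finset.sum_congr rfl fun i _ ↦ ?_
  rw [inner_smul_right, ← inner_conj_symm x (b i), mul_right_comm, RCLike.mul_conj]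
  norm_cast
  exact mul_comm _ _

theorem re_inner_map_self_le (hT : ∀ i, T (b i) = (μ i : 𝕜) • b i) {x : E} {c : ℝ}
    (hc : ∀ i, ⟪b i, x⟫_𝕜 ≠ 0 → μ i ≤ c) : RCLike.re ⟪x, T x⟫_𝕜 ≤ c * ‖x‖ ^ 2 := by
  rw [b.re_inner_map_self_eq_sum hT, ← b.sum_sq_norm_inner_right x, Finset.mul_sum]
  refine Finset.sum_le_sum fun i _ ↦ ?_
  by_cases h : ⟪b i, x⟫_𝕜 = 0
  · simp [h]
  · exact mul_le_mul_of_nonneg_right (hc i h) (sq_nonneg _)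

theorem le_re_inner_map_self (hT : ∀ i, T (b i) = (μ i : 𝕜) • b i) {x : E} {c : ℝ}
    (hc : ∀ i, ⟪b i, x⟫_𝕜 ≠ 0 → c ≤ μ i) : c * ‖x‖ ^ 2 ≤ RCLike.re ⟪x, T x⟫_𝕜 := by
  rw [b.re_inner_map_self_eq_sum hT, ← b.sum_sq_norm_inner_right x, Finset.mul_sum]
  refine Finset.sum_le_sum fun i _ ↦ ?_
  by_cases h : ⟪b i, x⟫_𝕜 = 0
  · simp [h]
  · exact mul_le_mul_of_nonneg_right (hc i h) (sq_nonneg _)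

theorem finrank_span_image (s : Finset ι) :
    Module.finrank 𝕜 (Submodule.span 𝕜 (b '' s)) = s.card := by
  rw [Set.image_eq_range, finrank_span_eq_card (b := fun i : (s : Set ι) ↦ b i)
    (b.orthonormal.linearIndependent.comp _ Subtype.val_injective)]
  simp

theorem mem_of_inner_ne_zero {s : Set ι} {x : E} (hx : x ∈ Submodule.span 𝕜 (b '' s)) {j : ι}
    (hj : ⟪b j, x⟫_𝕜 ≠ 0) : j ∈ s := by
  by_contra hjs
  refine hj (Submodule.mem_orthogonal_singleton_iff_inner_right.mp ?_)
  refine Submodule.span_le.mpr ?_ hx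
  rintro _ ⟨i, hi, rfl⟩
  exact Submodule.mem_orthogonal_singleton_iff_inner_right.mpr
    (b.orthonormal.inner_eq_zero fun hji ↦ hjs (hji ▸ hi))

end OrthonormalBasis

theorem LinearMap.eigenvalue_le_of_le {𝕜 E : Type*} [RCLike 𝕜] [NormedAddCommGroup E]
    [InnerProductSpace 𝕜 E] {n : ℕ} {S T : E →ₗ[𝕜] E} (hST : S ≤ T)
    (v w : OrthonormalBasis (Fin n) 𝕜 E) {μ ν : Fin n → ℝ} (hμ : Antitone μ) (hν : Antitone ν)
    (hS : ∀ i, S (v i) = (μ i : 𝕜) • v i) (hT : ∀ i, T (w i) = (ν i : 𝕜) • w i) (k : Fin n) :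
    μ k ≤ ν k := by
  have : FiniteDimensional 𝕜 E := v.toBasis.finiteDimensional_of_finite
  set P := Submodule.span 𝕜 (v '' Finset.Iic k)
  set Q := Submodule.span 𝕜 (w '' Finset.Ici k)
  have hPQ : ¬Disjoint P Q := by
    intro h
    have := Submodule.finrank_add_finrank_le_of_disjoint h
    rw [v.finrank_span_image, w.finrank_span_image, Fin.card_Iic, Fin.card_Ici,
      Module.finrank_eq_card_basis v.toBasis, Fintype.card_fin] at this
    omega
  obtain ⟨x, hxP, hxQ, hx⟩ : ∃ x ∈ P, x ∈ Q ∧ x ≠ 0 := by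
    simpa [Submodule.disjoint_def] using hPQ
  have hSx : μ k * ‖x‖ ^ 2 ≤ RCLike.re ⟪x, S x⟫_𝕜 :=
    v.le_re_inner_map_self hS fun i hi ↦ hμ (Finset.mem_Iic.mp (v.mem_of_inner_ne_zero hxP hi))
  have hTx : RCLike.re ⟪x, T x⟫_𝕜 ≤ ν k * ‖x‖ ^ 2 :=
    w.re_inner_map_self_le hT fun i hi ↦ hν (Finset.mem_Ici.mp (w.mem_of_inner_ne_zero hxQ hi))
  have hSTx : RCLike.re ⟪x, S x⟫_𝕜 ≤ RCLike.re ⟪x, T x⟫_𝕜 := by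
    simpa [inner_sub_right] using ((LinearMap.le_def S T).mp hST).re_inner_nonneg_right x
  have : 0 < ‖x‖ ^ 2 := by positivity
  nlinarith

theorem cfc_mul_add_const {R : Type*} [Ring R] [StarRing R] [TopologicalSpace R] [Algebra ℝ R]
    [ContinuousFunctionalCalculus ℝ R IsSelfAdjoint] {a : R} (ha : IsSelfAdjoint a) (s r : ℝ) :
    cfc (fun x ↦ s * x + r) a = s • a + algebraMap ℝ R r := by
  rw [cfc_add_const r _ a (by fun_prop) ha, cfc_const_mul_id s a ha]

namespace Matrix

section Hermitian

variable {𝕜 n : Type*} [RCLike 𝕜] [Fintype n] [DecidableEq n]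

theorem toEuclideanLin_le_toEuclideanLin {X Y : Matrix n n 𝕜} :
    toEuclideanLin X ≤ toEuclideanLin Y ↔ X ≤ Y := by
  rw [LinearMap.le_def, ← map_sub, isPositive_toEuclideanLin_iff, le_iff]

namespace IsHermitian

variable {A : Matrix n n 𝕜} (hA : A.IsHermitian)

theorem cfc_mulVec_eigenvectorBasis (f : ℝ → ℝ) (i : n) :
    cfc f A *ᵥ ⇑(hA.eigenvectorBasis i) =
      (f (hA.eigenvalues i) : 𝕜) • ⇑(hA.eigenvectorBasis i) := by
  rw [hA.cfc_eq, IsHermitian.cfc, Unitary.conjStarAlgAut_apply, ← mulVec_mulVec, ← mulVec_mulVec,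
    star_eigenvectorUnitary_mulVec, diagonal_mulVec_single, mul_one,
    ← hA.eigenvectorUnitary_mulVec, ← mulVec_smul, ← Pi.single_smul', smul_eq_mul, mul_one]
  rfl

/-- `hA.eigenvectorBasis` indexed like `hA.eigenvalues₀`, i.e. by decreasing eigenvalue. -/
noncomputable def eigenvectorBasis₀ :
    OrthonormalBasis (Fin (Fintype.card n)) 𝕜 (EuclideanSpace 𝕜 n) :=
  hA.eigenvectorBasis.reindex (Fintype.equivOfCardEq (Fintype.card_fin _)).symm

theorem eigenvalues_equivOfCardEq (i : Fin (Fintype.card n)) :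
    hA.eigenvalues (Fintype.equivOfCardEq (Fintype.card_fin _) i) = hA.eigenvalues₀ i := by
  simp [eigenvalues]

theorem eigenvalues₀_mem_spectrum_real (i : Fin (Fintype.card n)) :
    hA.eigenvalues₀ i ∈ spectrum ℝ A :=
  hA.eigenvalues_equivOfCardEq i ▸ hA.eigenvalues_mem_spectrum_real _

theorem toEuclideanLin_cfc_eigenvectorBasis₀ (f : ℝ → ℝ) (i : Fin (Fintype.card n)) :
    toEuclideanLin (cfc f A) (hA.eigenvectorBasis₀ i) =
      (f (hA.eigenvalues₀ i) : 𝕜) • hA.eigenvectorBasis₀ i := by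
  rw [eigenvectorBasis₀, OrthonormalBasis.reindex_apply, Equiv.symm_symm, toLpLin_apply,
    cfc_mulVec_eigenvectorBasis, eigenvalues_equivOfCardEq]
  rfl

theorem toEuclideanLin_eigenvectorBasis₀ (i : Fin (Fintype.card n)) :
    toEuclideanLin A (hA.eigenvectorBasis₀ i) =
      (hA.eigenvalues₀ i : 𝕜) • hA.eigenvectorBasis₀ i := by
  simpa [cfc_id ℝ A hA.isSelfAdjoint] using hA.toEuclideanLin_cfc_eigenvectorBasis₀ id i

theorem apply_eigenvalues₀_le {C : Matrix n n 𝕜} (hC : C.IsHermitian) {g : ℝ → ℝ}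
    (hg : Monotone g) (h : cfc g A ≤ C) (k : Fin (Fintype.card n)) :
    g (hA.eigenvalues₀ k) ≤ hC.eigenvalues₀ k :=
  LinearMap.eigenvalue_le_of_le (toEuclideanLin_le_toEuclideanLin.mpr h) hA.eigenvectorBasis₀
    hC.eigenvectorBasis₀ (hg.comp_antitone hA.eigenvalues₀_antitone) hC.eigenvalues₀_antitone
    (hA.toEuclideanLin_cfc_eigenvectorBasis₀ g) hC.toEuclideanLin_eigenvectorBasis₀ k

end IsHermitian

theorem eq_toMatrix_mul_diagonal_mul_conjTranspose {ι : Type*} [Fintype ι] [DecidableEq ι]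
    {X : Matrix n n 𝕜} (v : OrthonormalBasis ι 𝕜 (EuclideanSpace 𝕜 n)) {x : ι → ℝ}
    (hX : ∀ i, toEuclideanLin X (v i) = (x i : 𝕜) • v i) :
    X = (EuclideanSpace.basisFun n 𝕜).toBasis.toMatrix v * diagonal (fun i ↦ (x i : 𝕜)) *
      ((EuclideanSpace.basisFun n 𝕜).toBasis.toMatrix v)ᴴ := by
  set V := (EuclideanSpace.basisFun n 𝕜).toBasis.toMatrix v
  have hXV : X * V = V * diagonal (fun i ↦ (x i : 𝕜)) := by
    ext k i
    have := congr(WithLp.ofLp $(hX i) k)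
    rw [mul_diagonal]
    simpa [mul_apply, V, Module.Basis.toMatrix_apply, mulVec, dotProduct, mul_comm,
      RCLike.real_smul_eq_coe_mul] using this
  calc X = X * (V * Vᴴ) := by
        rw [(EuclideanSpace.basisFun n 𝕜).toMatrix_orthonormalBasis_self_mul_conjTranspose v,
          Matrix.mul_one]
    _ = _ := by rw [← Matrix.mul_assoc, hXV]

theorem exists_unitary_le_mul_mul_conjTranspose {ι : Type*} [Fintype ι] [DecidableEq ι]
    {X Y : Matrix n n 𝕜} (v w : OrthonormalBasis ι 𝕜 (EuclideanSpace 𝕜 n)) {x y : ι → ℝ}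
    (hX : ∀ i, toEuclideanLin X (v i) = (x i : 𝕜) • v i)
    (hY : ∀ i, toEuclideanLin Y (w i) = (y i : 𝕜) • w i) (hxy : x ≤ y) :
    ∃ U ∈ unitaryGroup n 𝕜, X ≤ U * Y * Uᴴ := by
  rw [eq_toMatrix_mul_diagonal_mul_conjTranspose v hX,
    eq_toMatrix_mul_diagonal_mul_conjTranspose w hY]
  set e := EuclideanSpace.basisFun n 𝕜
  set V := e.toBasis.toMatrix v
  set W := e.toBasis.toMatrix w
  have hVV : V * Vᴴ = 1 := e.toMatrix_orthonormalBasis_self_mul_conjTranspose v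
  have hWW : Wᴴ * W = 1 := e.toMatrix_orthonormalBasis_conjTranspose_mul_self w
  have hconj : ∀ M : Matrix ι ι 𝕜, V * Wᴴ * (W * M * Wᴴ) * (V * Wᴴ)ᴴ = V * M * Vᴴ := fun M ↦ by
    simp only [conjTranspose_mul, conjTranspose_conjTranspose, Matrix.mul_assoc]
    rw [← Matrix.mul_assoc Wᴴ W, hWW, Matrix.one_mul, ← Matrix.mul_assoc Wᴴ W, hWW,
      Matrix.one_mul]
  refine ⟨V * Wᴴ, ?_, ?_⟩
  · rw [mem_unitaryGroup_iff, star_eq_conjTranspose, conjTranspose_mul,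
      conjTranspose_conjTranspose, Matrix.mul_assoc, ← Matrix.mul_assoc Wᴴ, hWW, Matrix.one_mul,
      hVV]
  · rw [hconj, le_iff, ← Matrix.sub_mul, ← Matrix.mul_sub, diagonal_sub]
    refine (PosSemidef.diagonal fun i ↦ ?_).mul_mul_conjTranspose_same V
    simpa using hxy i

end Hermitian

section PositiveMap

variable {𝕜 n m : Type*} [RCLike 𝕜]

theorem map_algebraMap_of_map_one [Fintype n] [DecidableEq n] [Fintype m] [DecidableEq m]
    {Ψ : Matrix n n 𝕜 →ₗ[𝕜] Matrix m m 𝕜} (hΨ1 : Ψ 1 = 1) (r : ℝ) :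
    Ψ (algebraMap ℝ _ r) = algebraMap ℝ _ r := by
  rw [Algebra.algebraMap_eq_smul_one, LinearMap.map_smul_of_tower, hΨ1,
    ← Algebra.algebraMap_eq_smul_one]

def IsPositiveMap (Ψ : Matrix n n 𝕜 →ₗ[𝕜] Matrix m m 𝕜) : Prop :=
  ∀ X : Matrix n n 𝕜, X.PosSemidef → (Ψ X).PosSemidef

namespace IsPositiveMap

variable {Ψ : Matrix n n 𝕜 →ₗ[𝕜] Matrix m m 𝕜}

theorem monotone (hΨ : IsPositiveMap Ψ) : Monotone Ψ := fun X Y h ↦ by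
  rw [le_iff, ← map_sub]
  exact hΨ _ h

theorem isSelfAdjoint_map [Fintype n] [DecidableEq n] (hΨ : IsPositiveMap Ψ)
    {X : Matrix n n 𝕜} (hX : IsSelfAdjoint X) : IsSelfAdjoint (Ψ X) := by
  have hnonneg : ∀ Y : Matrix n n 𝕜, 0 ≤ Y → IsSelfAdjoint (Ψ Y) := fun Y hY ↦
    (hΨ Y (nonneg_iff_posSemidef.mp hY)).isHermitian
  rw [← CFC.posPart_sub_negPart X hX, map_sub]
  exact (hnonneg _ (CFC.posPart_nonneg X)).sub (hnonneg _ (CFC.negPart_nonneg X))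

theorem map_cfc_mul_add_const [Fintype n] [DecidableEq n] [Fintype m] [DecidableEq m]
    (hΨ : IsPositiveMap Ψ) (hΨ1 : Ψ 1 = 1) {X : Matrix n n 𝕜} (hX : IsSelfAdjoint X) (s r : ℝ) :
    Ψ (cfc (fun x ↦ s * x + r) X) = cfc (fun x ↦ s * x + r) (Ψ X) := by
  rw [cfc_mul_add_const hX, cfc_mul_add_const (hΨ.isSelfAdjoint_map hX), map_add,
    LinearMap.map_smul_of_tower, map_algebraMap_of_map_one hΨ1]

theorem spectrum_map_subset_Icc [Fintype n] [DecidableEq n] [Fintype m] [DecidableEq m]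
    (hΨ : IsPositiveMap Ψ) (hΨ1 : Ψ 1 = 1) {X : Matrix n n 𝕜} (hX : IsSelfAdjoint X) {a b : ℝ}
    (h : spectrum ℝ X ⊆ Icc a b) : spectrum ℝ (Ψ X) ⊆ Icc a b := by
  have hΨX := hΨ.isSelfAdjoint_map hX
  have ha := hΨ.monotone (algebraMap_le_of_le_spectrum (fun x hx ↦ (h hx).1) hX)
  have hb := hΨ.monotone (le_algebraMap_of_spectrum_le (fun x hx ↦ (h hx).2) hX)
  rw [map_algebraMap_of_map_one hΨ1] at ha hb
  exact fun x hx ↦ ⟨(algebraMap_le_iff_le_spectrum hΨX).mp ha x hx,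
    (le_algebraMap_iff_spectrum_le hΨX).mp hb x hx⟩

end IsPositiveMap

end PositiveMap

end Matrix

/-- If `A` is Hermitian with spectrum in `[ω, Ω]`, `f` is increasing, convex (and
continuous) on `[ω, Ω]` and `Ψ` is a unital positive linear map, then there is a
unitary `U` with `f(Ψ(A)) ≤ U Ψ(f(A)) U*` in the Loewner order. -/
theorem unitary_orbit_positive_map
    {n m : ℕ} (A : Matrix (Fin n) (Fin n) ℂ) (hA : A.IsHermitian) (ω Ω : ℝ)
    (hspec : spectrum ℝ A ⊆ Set.Icc ω Ω)
    (f : ℝ → ℝ) (hmono : MonotoneOn f (Set.Icc ω Ω))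
    (hconv : ConvexOn ℝ (Set.Icc ω Ω) f) (hcont : ContinuousOn f (Set.Icc ω Ω))
    (Ψ : Matrix (Fin n) (Fin n) ℂ →ₗ[ℂ] Matrix (Fin m) (Fin m) ℂ)
    (hpos : ∀ X : Matrix (Fin n) (Fin n) ℂ, X.PosSemidef → (Ψ X).PosSemidef)
    (hunital : Ψ 1 = 1) :
    ∃ U ∈ Matrix.unitaryGroup (Fin m) ℂ,
      ((U : Matrix (Fin m) (Fin m) ℂ) * Ψ (cfc f A) * Uᴴ
        - cfc f (Ψ A)).PosSemidef := by
  have hΨ : Matrix.IsPositiveMap Ψ := hpos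
  have hB : (Ψ A).IsHermitian := hΨ.isSelfAdjoint_map hA.isSelfAdjoint
  have hC : (Ψ (cfc f A)).IsHermitian := hΨ.isSelfAdjoint_map (cfc_predicate f A)
  have hBspec := hΨ.spectrum_map_subset_Icc hunital hA.isSelfAdjoint hspec
  have key (k : Fin (Fintype.card (Fin m))) : f (hB.eigenvalues₀ k) ≤ hC.eigenvalues₀ k := by
    refine hconv.le_of_forall_affine_minorant_le hmono hcont
      (hBspec (hB.eigenvalues₀_mem_spectrum_real k)) fun s r hs hsr ↦ ?_
    refine hB.apply_eigenvalues₀_le hC (g := fun x ↦ s * x + r)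
      ((monotone_id.const_mul hs).add_const r) ?_ k
    rw [← hΨ.map_cfc_mul_add_const hunital hA.isSelfAdjoint]
    exact hΨ.monotone (cfc_mono (fun x hx ↦ hsr x (hspec hx)) (hg := hcont.mono hspec))
  exact Matrix.exists_unitary_le_mul_mul_conjTranspose hB.eigenvectorBasis₀ hC.eigenvectorBasis₀
    (hB.toEuclideanLin_cfc_eigenvectorBasis₀ f) hC.toEuclideanLin_eigenvectorBasis₀ key
end

section
/- Let A_1, ..., A_k ∈ M_n be Hermitian with spectra in [ω, Ω], f increasing and convex on [ω, Ω], and Φ_1, ..., Φ_k : M_n → M_m positive linear maps with ∑_{i=1}^k Φ_i(I_n) = I_m. Then there exists a unitary U ∈ M_m such that f(∑_{i=1}^k Φ_i(A_i)) ≤ U (∑_{i=1}^k Φ_i(f(A_i))) U*. -/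
/-!
For `t ∈ [ω, Ω]` and `ε > 0`, convexity, monotonicity and continuity of `f` give an affine
minorant `a u + b ≤ f u` on `[ω, Ω]` with `a ≥ 0` and `f t - ε ≤ a t + b`. Applying the unital
positive map `X ↦ ∑ Φᵢ(Xᵢ)` to `a Aᵢ + b ≤ f(Aᵢ)` gives `a B + b ≤ C` for `B = ∑ Φᵢ(Aᵢ)` and
`C = ∑ Φᵢ(f(Aᵢ))`. As `a ≥ 0`, the increasingly ordered eigenvalues of `a B + b` are
`a λⱼ(B) + b`, so Weyl's monotonicity principle gives `f(λⱼ(B)) - ε ≤ λⱼ(C)` for every `j`.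
Hence `f(λⱼ(B)) ≤ λⱼ(C)`, and the unitary carrying an ordered eigenbasis of `C` to one of `B`
does the job.
-/

open scoped ComplexOrder
open scoped Matrix
open scoped MatrixOrder
open Matrix Set

theorem ConvexOn.exists_nonneg_slope_le_of_lt {ω Ω s t : ℝ} {f : ℝ → ℝ}
    (hconv : ConvexOn ℝ (Icc ω Ω) f) (hmono : MonotoneOn f (Icc ω Ω))
    (hs : s ∈ Icc ω Ω) (ht : t ∈ Icc ω Ω) (hst : s < t) :
    ∃ a ≥ 0, ∀ u ∈ Icc ω Ω, f s + a * (u - t) ≤ f u := by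
  -- the secant of `f` over `[s, t]`, lowered to pass through `(t, f s)`
  set a := (f t - f s) / (t - s)
  have hts : 0 < t - s := sub_pos.mpr hst
  have hchord : a * (t - s) = f t - f s := div_mul_cancel₀ _ hts.ne'
  have hfst : f s ≤ f t := hmono hs ht hst.le
  refine ⟨a, div_nonneg (sub_nonneg.mpr hfst) hts.le, fun u hu => ?_⟩
  rcases lt_or_ge u s with hus | hsu
  · have := hconv.slope_mono_adjacent hu ht hus hst
    rw [div_le_div_iff₀ (by linarith) hts] at this
    nlinarith
  rcases le_or_gt u t with hut | htu
  · nlinarith [hmono hs hu hsu]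
  · have := hconv.slope_mono_adjacent hs hu hst htu
    rw [div_le_div_iff₀ hts (by linarith)] at this
    nlinarith

theorem ConvexOn.exists_nonneg_slope_affine_le {ω Ω t ε : ℝ} {f : ℝ → ℝ}
    (hconv : ConvexOn ℝ (Icc ω Ω) f) (hmono : MonotoneOn f (Icc ω Ω))
    (hcont : ContinuousOn f (Icc ω Ω)) (ht : t ∈ Icc ω Ω) (hε : 0 < ε) :
    ∃ a b : ℝ, 0 ≤ a ∧ (∀ u ∈ Icc ω Ω, a * u + b ≤ f u) ∧ f t - ε ≤ a * t + b := by
  obtain rfl | hωt := ht.1.eq_or_lt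
  · exact ⟨0, f ω, le_rfl, fun u hu => by simpa using hmono ht hu hu.1, by simp [hε.le]⟩
  have hIco : Ico ω t ⊆ Icc ω Ω := Ico_subset_Icc_self.trans (Icc_subset_Icc_right ht.2)
  have := right_nhdsWithin_Ico_neBot hωt
  obtain ⟨s, hfs, hs⟩ := ((((hcont t ht).mono hIco).eventually
    (lt_mem_nhds (sub_lt_self (f t) hε))).and self_mem_nhdsWithin).exists
  obtain ⟨a, ha, hle⟩ := hconv.exists_nonneg_slope_le_of_lt hmono (hIco hs) ht hs.2
  exact ⟨a, f s - a * t, ha, fun u hu => by linarith [hle u hu], by linarith⟩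

namespace Matrix

section ConjDiag

variable {ι : Type*} [Fintype ι] [DecidableEq ι]

noncomputable def conjDiag (W : Matrix ι ι ℂ) (c : ι → ℝ) : Matrix ι ι ℂ :=
  W * diagonal (fun i => (c i : ℂ)) * Wᴴ

theorem conjDiag_sub (W : Matrix ι ι ℂ) (c c' : ι → ℝ) :
    conjDiag W c - conjDiag W c' = conjDiag W (c - c') := by
  simp only [conjDiag, ← sub_mul, ← mul_sub, diagonal_sub, Pi.sub_apply, Complex.ofReal_sub]

theorem posSemidef_conjDiag (W : Matrix ι ι ℂ) {c : ι → ℝ} (hc : 0 ≤ c) :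
    (conjDiag W c).PosSemidef :=
  (posSemidef_diagonal_iff.mpr fun i =>
    Complex.zero_le_real.mpr (hc i)).mul_mul_conjTranspose_same W

theorem mul_conjDiag_mul_conjTranspose (U W : Matrix ι ι ℂ) (c : ι → ℝ) :
    U * conjDiag W c * Uᴴ = conjDiag (U * W) c := by
  simp only [conjDiag, conjTranspose_mul, Matrix.mul_assoc]

theorem conjDiag_one {W : Matrix ι ι ℂ} (hW : W ∈ unitaryGroup ι ℂ) : conjDiag W 1 = 1 := by
  simpa [conjDiag, star_eq_conjTranspose] using mem_unitaryGroup_iff.mp hW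

theorem conjDiag_submatrix_comp (W : Matrix ι ι ℂ) (σ : Equiv.Perm ι) (c : ι → ℝ) :
    conjDiag (W.submatrix id σ) (c ∘ σ) = conjDiag W c := by
  rw [conjDiag, conjDiag, conjTranspose_submatrix,
    show (fun i => ((c ∘ σ) i : ℂ)) = (fun i => (c i : ℂ)) ∘ σ from rfl,
    ← submatrix_diagonal_equiv, submatrix_mul_equiv, submatrix_mul_equiv, submatrix_id_id]

theorem dotProduct_conjDiag_mulVec (W : Matrix ι ι ℂ) (c : ι → ℝ) (x : ι → ℂ) :
    star x ⬝ᵥ conjDiag W c *ᵥ x = ((∑ i, c i * Complex.normSq ((Wᴴ *ᵥ x) i) : ℝ) : ℂ) := by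
  have hstar : star x ᵥ* W = star (Wᴴ *ᵥ x) := by rw [star_mulVec, conjTranspose_conjTranspose]
  rw [conjDiag, ← mulVec_mulVec, ← mulVec_mulVec, dotProduct_mulVec, hstar]
  simp [dotProduct, mulVec_diagonal, Complex.normSq_eq_conj_mul_self, mul_left_comm]

theorem sum_normSq_conjTranspose_mulVec {W : Matrix ι ι ℂ} (hW : W ∈ unitaryGroup ι ℂ)
    (x : ι → ℂ) : ∑ i, Complex.normSq ((Wᴴ *ᵥ x) i) = ∑ i, Complex.normSq (x i) := by
  have hW' := dotProduct_conjDiag_mulVec W 1 x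
  have h1 := dotProduct_conjDiag_mulVec 1 1 x
  rw [conjDiag_one hW] at hW'
  rw [conjDiag_one (one_mem _)] at h1
  have h := hW'.symm.trans h1
  simp only [Pi.one_apply, one_mul, conjTranspose_one, one_mulVec] at h
  exact_mod_cast h

end ConjDiag

theorem IsHermitian.exists_monotone_cfc_eq_conjDiag {m : ℕ} {M : Matrix (Fin m) (Fin m) ℂ}
    (hM : M.IsHermitian) :
    ∃ W ∈ unitaryGroup (Fin m) ℂ, ∃ d : Fin m → ℝ, Monotone d ∧ (∀ i, d i ∈ spectrum ℝ M) ∧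
      ∀ g : ℝ → ℝ, cfc g M = conjDiag W (g ∘ d) := by
  set σ := Tuple.sort hM.eigenvalues
  set V : Matrix (Fin m) (Fin m) ℂ := ↑hM.eigenvectorUnitary
  refine ⟨V.submatrix id σ, ?_, hM.eigenvalues ∘ σ, Tuple.monotone_sort _,
    fun i => hM.eigenvalues_mem_spectrum_real _, fun g => ?_⟩
  · rw [mem_unitaryGroup_iff', star_eq_conjTranspose, conjTranspose_submatrix,
      ← submatrix_mul _ _ _ _ _ Function.bijective_id, ← star_eq_conjTranspose,
      mem_unitaryGroup_iff'.mp hM.eigenvectorUnitary.2, submatrix_one_equiv]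
  · rw [hM.cfc_eq, IsHermitian.cfc, Unitary.conjStarAlgAut_apply]
    exact (conjDiag_submatrix_comp V σ (g ∘ hM.eigenvalues)).symm

theorem exists_ne_zero_mulVec_eq_zero_of_lt_of_gt {K : Type*} [Field K] {m : ℕ}
    (P Q : Matrix (Fin m) (Fin m) K) (j : Fin m) :
    ∃ x ≠ 0, (∀ i < j, (P *ᵥ x) i = 0) ∧ ∀ i, j < i → (Q *ᵥ x) i = 0 := by
  let L : (Fin m → K) →ₗ[K] ({i // i < j} → K) × ({i // j < i} → K) :=
    ((LinearMap.funLeft K K Subtype.val).comp P.mulVecLin).prod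
      ((LinearMap.funLeft K K Subtype.val).comp Q.mulVecLin)
  have hdim : Module.finrank K (({i // i < j} → K) × ({i // j < i} → K)) <
      Module.finrank K (Fin m → K) := by
    simp only [Module.finrank_prod, Module.finrank_fintype_fun_eq_card, Fintype.card_subtype,
      Finset.filter_gt_eq_Iio, Finset.filter_lt_eq_Ioi, Fin.card_Iio, Fin.card_Ioi,
      Fintype.card_fin]
    omega
  obtain ⟨x, hx, hx0⟩ := Submodule.exists_mem_ne_zero_of_ne_bot (L.ker_ne_bot_of_finrank_lt hdim)
  rw [LinearMap.mem_ker, Prod.ext_iff] at hx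
  exact ⟨x, hx0, fun i hi => congr_fun hx.1 ⟨i, hi⟩, fun i hi => congr_fun hx.2 ⟨i, hi⟩⟩

/-- Weyl's monotonicity principle: test the Loewner inequality on a vector spanned by the
eigenvectors of index `≥ j` on the left and by those of index `≤ j` on the right. -/
theorem le_of_conjDiag_le_conjDiag {m : ℕ} {W V : Matrix (Fin m) (Fin m) ℂ}
    (hW : W ∈ unitaryGroup (Fin m) ℂ) (hV : V ∈ unitaryGroup (Fin m) ℂ)
    {d e : Fin m → ℝ} (hd : Monotone d) (he : Monotone e)
    (h : conjDiag W d ≤ conjDiag V e) (j : Fin m) : d j ≤ e j := by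
  obtain ⟨x, hx, hWx, hVx⟩ := exists_ne_zero_mulVec_eq_zero_of_lt_of_gt Wᴴ Vᴴ j
  set N := ∑ i, Complex.normSq (x i)
  have hN : 0 < N := by
    obtain ⟨i, hi⟩ := Function.ne_iff.mp hx
    exact Finset.sum_pos' (fun i _ => Complex.normSq_nonneg _)
      ⟨i, Finset.mem_univ i, Complex.normSq_pos.mpr hi⟩
  have hlow : d j * N ≤ ∑ i, d i * Complex.normSq ((Wᴴ *ᵥ x) i) := by
    rw [show N = _ from (sum_normSq_conjTranspose_mulVec hW x).symm, Finset.mul_sum]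
    refine Finset.sum_le_sum fun i _ => ?_
    rcases lt_or_ge i j with hij | hij
    · simp [hWx i hij]
    · exact mul_le_mul_of_nonneg_right (hd hij) (Complex.normSq_nonneg _)
  have hup : ∑ i, e i * Complex.normSq ((Vᴴ *ᵥ x) i) ≤ e j * N := by
    rw [show N = _ from (sum_normSq_conjTranspose_mulVec hV x).symm, Finset.mul_sum]
    refine Finset.sum_le_sum fun i _ => ?_
    rcases le_or_gt i j with hij | hij
    · exact mul_le_mul_of_nonneg_right (he hij) (Complex.normSq_nonneg _)
    · simp [hVx i hij]
  have hquad := (le_iff.mp h).dotProduct_mulVec_nonneg x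
  rw [sub_mulVec, dotProduct_sub, sub_nonneg, dotProduct_conjDiag_mulVec,
    dotProduct_conjDiag_mulVec, Complex.real_le_real] at hquad
  exact le_of_mul_le_mul_right (hlow.trans (hquad.trans hup)) hN

theorem IsHermitian.map_of_posSemidef {n m : Type*} [Fintype n] [DecidableEq n]
    {Ψ : Matrix n n ℂ →ₗ[ℂ] Matrix m m ℂ}
    (hΨ : ∀ X : Matrix n n ℂ, X.PosSemidef → (Ψ X).PosSemidef) {H : Matrix n n ℂ}
    (hH : H.IsHermitian) : (Ψ H).IsHermitian := by
  rw [← CFC.posPart_sub_negPart H hH.isSelfAdjoint, map_sub]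
  exact (hΨ _ (nonneg_iff_posSemidef.mp (CFC.posPart_nonneg H))).isHermitian.sub
    (hΨ _ (nonneg_iff_posSemidef.mp (CFC.negPart_nonneg H))).isHermitian

section PositiveMaps

variable {κ n m : Type*} [Fintype κ] {Φ : κ → (Matrix n n ℂ →ₗ[ℂ] Matrix m m ℂ)}

theorem sum_map_mono (hpos : ∀ i, ∀ X : Matrix n n ℂ, X.PosSemidef → (Φ i X).PosSemidef)
    {X Y : κ → Matrix n n ℂ} (h : ∀ i, X i ≤ Y i) : ∑ i, Φ i (X i) ≤ ∑ i, Φ i (Y i) :=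
  Finset.sum_le_sum fun i _ => le_iff.mpr (map_sub (Φ i) _ _ ▸ hpos i _ (le_iff.mp (h i)))

variable [Fintype n] [DecidableEq n]

theorem isHermitian_sum_map (hpos : ∀ i, ∀ X : Matrix n n ℂ, X.PosSemidef → (Φ i X).PosSemidef)
    {X : κ → Matrix n n ℂ} (hX : ∀ i, (X i).IsHermitian) : (∑ i, Φ i (X i)).IsHermitian :=
  isSelfAdjoint_sum _ fun i _ => (hX i).map_of_posSemidef (hpos i)

variable [Fintype m] [DecidableEq m]

theorem sum_map_algebraMap (hunital : ∑ i, Φ i 1 = 1) (r : ℝ) :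
    ∑ i, Φ i (algebraMap ℝ _ r) = algebraMap ℝ _ r := by
  simp only [Algebra.algebraMap_eq_smul_one, LinearMap.map_smul_of_tower, ← Finset.smul_sum,
    hunital]

theorem sum_map_affine (hunital : ∑ i, Φ i 1 = 1) (a b : ℝ) (X : κ → Matrix n n ℂ) :
    ∑ i, Φ i (a • X i + algebraMap ℝ _ b) = a • ∑ i, Φ i (X i) + algebraMap ℝ _ b := by
  simp only [map_add, LinearMap.map_smul_of_tower, Finset.sum_add_distrib, ← Finset.smul_sum,
    sum_map_algebraMap hunital]

theorem spectrum_sum_map_subset_Icc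
    (hpos : ∀ i, ∀ X : Matrix n n ℂ, X.PosSemidef → (Φ i X).PosSemidef)
    (hunital : ∑ i, Φ i 1 = 1) {A : κ → Matrix n n ℂ} (hA : ∀ i, (A i).IsHermitian) {ω Ω : ℝ}
    (hspec : ∀ i, spectrum ℝ (A i) ⊆ Icc ω Ω) : spectrum ℝ (∑ i, Φ i (A i)) ⊆ Icc ω Ω := by
  have hB : IsSelfAdjoint (∑ i, Φ i (A i)) := isHermitian_sum_map hpos hA
  have hω : algebraMap ℝ _ ω ≤ ∑ i, Φ i (A i) := by
    rw [← sum_map_algebraMap hunital]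
    exact sum_map_mono hpos fun i =>
      (algebraMap_le_iff_le_spectrum (hA i).isSelfAdjoint).mpr fun x hx => (hspec i hx).1
  have hΩ : ∑ i, Φ i (A i) ≤ algebraMap ℝ _ Ω := by
    rw [← sum_map_algebraMap hunital]
    exact sum_map_mono hpos fun i =>
      (le_algebraMap_iff_spectrum_le (hA i).isSelfAdjoint).mpr fun x hx => (hspec i hx).2
  exact fun r hr => ⟨(algebraMap_le_iff_le_spectrum hB).mp hω r hr,
    (le_algebraMap_iff_spectrum_le hB).mp hΩ r hr⟩

end PositiveMaps

end Matrix

/-- If `A_1, …, A_k` are Hermitian with spectra in `[ω, Ω]`, `f` is increasing, convex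
(and continuous) on `[ω, Ω]` and `Φ_1, …, Φ_k` are positive linear maps with
`∑ Φ_i(1) = 1`, then there is a unitary `U` with
`f(∑ Φ_i(A_i)) ≤ U (∑ Φ_i(f(A_i))) U*` in the Loewner order. -/
theorem unitary_orbit_sum_positive_maps
    {n m k : ℕ} (A : Fin k → Matrix (Fin n) (Fin n) ℂ)
    (hA : ∀ i, (A i).IsHermitian) (ω Ω : ℝ)
    (hspec : ∀ i, spectrum ℝ (A i) ⊆ Set.Icc ω Ω)
    (f : ℝ → ℝ) (hmono : MonotoneOn f (Set.Icc ω Ω))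
    (hconv : ConvexOn ℝ (Set.Icc ω Ω) f) (hcont : ContinuousOn f (Set.Icc ω Ω))
    (Φ : Fin k → (Matrix (Fin n) (Fin n) ℂ →ₗ[ℂ] Matrix (Fin m) (Fin m) ℂ))
    (hpos : ∀ i, ∀ X : Matrix (Fin n) (Fin n) ℂ, X.PosSemidef → (Φ i X).PosSemidef)
    (hunital : ∑ i, Φ i 1 = 1) :
    ∃ U ∈ Matrix.unitaryGroup (Fin m) ℂ,
      ((U : Matrix (Fin m) (Fin m) ℂ) * (∑ i, Φ i (cfc f (A i))) * Uᴴ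
        - cfc f (∑ i, Φ i (A i))).PosSemidef := by
  set B := ∑ i, Φ i (A i)
  set C := ∑ i, Φ i (cfc f (A i))
  have hB : B.IsHermitian := isHermitian_sum_map hpos hA
  have hC : C.IsHermitian := isHermitian_sum_map hpos fun i => cfc_predicate f (A i)
  obtain ⟨W, hW, d, hd, hdB, hcfcB⟩ := hB.exists_monotone_cfc_eq_conjDiag
  obtain ⟨V, hV, e, he, -, hcfcC⟩ := hC.exists_monotone_cfc_eq_conjDiag
  have hC_eq : C = conjDiag V e := (cfc_id' ℝ C).symm.trans (hcfcC id)
  have hd_mem : ∀ j, d j ∈ Icc ω Ω :=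
    fun j => spectrum_sum_map_subset_Icc hpos hunital hA hspec (hdB j)
  have hfd : ∀ j, f (d j) ≤ e j := by
    intro j
    refine le_of_forall_pos_le_add fun ε hε => ?_
    obtain ⟨a, b, ha, hab, hε'⟩ := hconv.exists_nonneg_slope_affine_le hmono hcont (hd_mem j) hε
    have hBC : cfc (fun u => a * u + b) B ≤ C := by
      rw [cfc_add_const .., cfc_const_mul_id .., ← sum_map_affine hunital]
      refine sum_map_mono hpos fun i => ?_
      rw [← cfc_const_mul_id a (A i) (hA i).isSelfAdjoint, ← cfc_add_const ..]
      exact cfc_mono (fun u hu => hab u (hspec i hu)) (by fun_prop) (hcont.mono (hspec i))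
    rw [hcfcB, hC_eq] at hBC
    have hj : a * d j + b ≤ e j :=
      le_of_conjDiag_le_conjDiag hW hV ((hd.const_mul ha).add_const b) he hBC j
    linarith
  refine ⟨W * Vᴴ, mul_mem hW (Unitary.star_mem hV), ?_⟩
  rw [hC_eq, mul_conjDiag_mul_conjTranspose, Matrix.mul_assoc, ← star_eq_conjTranspose,
    mem_unitaryGroup_iff'.mp hV, Matrix.mul_one, hcfcB, conjDiag_sub]
  exact posSemidef_conjDiag W fun j => sub_nonneg.mpr (hfd j)
end

section
/- Let A, B ∈ M_n be Hermitian with spectra in [ω, Ω], f increasing and convex on [ω, Ω], and Φ : M_n → M_m a unital positive linear map. Suppose there is a unitary U ∈ M_m with f(tΦ(A)+(1-t)Φ(B)) ≤ U[tΦ(f(A))+(1-t)Φ(f(B))]U* for all t ∈ [0,1]. Then λ_j(∫_0^1 f(Φ(tA+(1-t)B)) dt) ≤ λ_j((Φ(f(A))+Φ(f(B)))/2) for all 1 ≤ j ≤ m. -/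
open scoped ComplexOrder Matrix

/-!
By linearity of `Φ`, the hypothesis says `f(Φ(tA+(1-t)B)) ≤ U [tΦ(f A)+(1-t)Φ(f B)] U*` for all
`t ∈ [0,1]`. The left side is continuous in `t`, because the positive unital map `Φ` keeps the
spectrum of `tA+(1-t)B` inside `[ω, Ω]` where `f` is continuous, so the inequality can be
integrated over `[0,1]`: `∫ f(Φ(tA+(1-t)B)) dt ≤ U Y U*` with `Y = (Φ(f A)+Φ(f B))/2`.
Finally, by the Courant–Fischer dimension count, `X ≤ Y'` implies `λ_j(X) ≤ λ_j(Y')`, and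
`λ_j(U Y U*) = λ_j(Y)`.
-/

open Matrix Finset MeasureTheory

namespace Tuple
variable {α : Type*} [LinearOrder α] {m : ℕ} (f : Fin m → α) (j : Fin m)

lemma succ_le_card_filter_sort_rev_le : j.val + 1 ≤ #{i | f (sort f j.rev) ≤ f i} := by
  calc j.val + 1 = #(Ici j.rev) := by rw [Fin.card_Ici, Fin.val_rev]; omega
    _ ≤ _ := card_le_card_of_injOn (sort f)
        (fun k hk => by simpa using monotone_sort f (mem_Ici.mp hk)) (sort f).injective.injOn

lemma sub_le_card_filter_le_sort_rev : m - j.val ≤ #{i | f i ≤ f (sort f j.rev)} := by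
  calc m - j.val = #(Iic j.rev) := by rw [Fin.card_Iic, Fin.val_rev]; omega
    _ ≤ _ := card_le_card_of_injOn (sort f)
        (fun k hk => by simpa using monotone_sort f (mem_Iic.mp hk)) (sort f).injective.injOn

end Tuple

lemma Submodule.exists_mem_inf_ne_zero_of_finrank_lt {K V : Type*} [DivisionRing K]
    [AddCommGroup V] [Module K V] [FiniteDimensional K V] (S T : Submodule K V)
    (h : Module.finrank K V < Module.finrank K S + Module.finrank K T) :
    ∃ x ∈ S ⊓ T, x ≠ 0 := by
  refine Submodule.exists_mem_ne_zero_of_ne_bot fun hbot => ?_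
  have := Submodule.finrank_sup_add_finrank_inf_eq S T
  rw [hbot, finrank_bot] at this
  have := (S ⊔ T).finrank_le
  omega

lemma OrthonormalBasis.inner_eq_zero_of_mem_span_image {𝕜 E ι : Type*} [RCLike 𝕜]
    [NormedAddCommGroup E] [InnerProductSpace 𝕜 E] [Fintype ι] (b : OrthonormalBasis ι 𝕜 E)
    {s : Set ι} {x : E} (hx : x ∈ Submodule.span 𝕜 (b '' s)) {i : ι} (hi : i ∉ s) :
    inner 𝕜 (b i) x = 0 := by
  have hsupp := b.toBasis.mem_span_image.mp (by simpa using hx)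
  rw [← b.repr_apply_apply]
  simpa using Finsupp.notMem_support_iff.mp fun h => hi (hsupp h)

namespace Matrix.IsHermitian
variable {𝕜 : Type*} [RCLike 𝕜] {n : Type*} [Fintype n] [DecidableEq n]
  {A : Matrix n n 𝕜} (hA : A.IsHermitian)

lemma re_dotProduct_mulVec_eq_sum (x : EuclideanSpace 𝕜 n) :
    RCLike.re (star ⇑x ⬝ᵥ (A *ᵥ ⇑x)) =
      ∑ i, hA.eigenvalues i * ‖inner 𝕜 (hA.eigenvectorBasis i) x‖ ^ 2 := by
  set b := hA.eigenvectorBasis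
  have hT := isSymmetric_toEuclideanLin_iff.mpr hA
  have hb : ∀ i, toEuclideanLin A (b i) = (hA.eigenvalues i : 𝕜) • b i := fun i => by
    rw [toLpLin_apply, hA.mulVec_eigenvectorBasis, RCLike.real_smul_eq_coe_smul (K := 𝕜)]
    rfl
  have hq : star ⇑x ⬝ᵥ (A *ᵥ ⇑x) = inner 𝕜 x (toEuclideanLin A x) := by
    rw [EuclideanSpace.inner_eq_star_dotProduct, dotProduct_comm]; rfl
  rw [hq, ← b.sum_inner_mul_inner, map_sum]
  refine sum_congr rfl fun i _ => ?_
  rw [← hT, hb, inner_smul_left, RCLike.conj_ofReal, mul_left_comm, RCLike.re_ofReal_mul,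
    ← inner_conj_symm x, RCLike.conj_mul, ← RCLike.ofReal_pow, RCLike.ofReal_re]

lemma finrank_span_eigenvectorBasis_image (s : Finset n) :
    Module.finrank 𝕜 (Submodule.span 𝕜 (hA.eigenvectorBasis '' s)) = #s := by
  rw [Set.image_eq_range]
  exact (finrank_span_eq_card
    (hA.eigenvectorBasis.orthonormal.linearIndependent.comp _ Subtype.val_injective)).trans
    (Fintype.card_coe s)

variable {hA} {s : Finset n} {x : EuclideanSpace 𝕜 n}
  (hx : x ∈ Submodule.span 𝕜 (hA.eigenvectorBasis '' s))
include hx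

lemma mul_norm_sq_le_re_dotProduct_mulVec {c : ℝ} (hc : ∀ i ∈ s, c ≤ hA.eigenvalues i) :
    c * ‖x‖ ^ 2 ≤ RCLike.re (star ⇑x ⬝ᵥ (A *ᵥ ⇑x)) := by
  rw [hA.re_dotProduct_mulVec_eq_sum, ← hA.eigenvectorBasis.sum_sq_norm_inner_right, mul_sum]
  refine sum_le_sum fun i _ => ?_
  by_cases hi : i ∈ s
  · exact mul_le_mul_of_nonneg_right (hc i hi) (by positivity)
  · simp [hA.eigenvectorBasis.inner_eq_zero_of_mem_span_image hx hi]

lemma re_dotProduct_mulVec_le_mul_norm_sq {c : ℝ} (hc : ∀ i ∈ s, hA.eigenvalues i ≤ c) :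
    RCLike.re (star ⇑x ⬝ᵥ (A *ᵥ ⇑x)) ≤ c * ‖x‖ ^ 2 := by
  rw [hA.re_dotProduct_mulVec_eq_sum, ← hA.eigenvectorBasis.sum_sq_norm_inner_right, mul_sum]
  refine sum_le_sum fun i _ => ?_
  by_cases hi : i ∈ s
  · exact mul_le_mul_of_nonneg_right (hc i hi) (by positivity)
  · simp [hA.eigenvectorBasis.inner_eq_zero_of_mem_span_image hx hi]

end Matrix.IsHermitian

lemma eigDesc_le_of_posSemidef_sub {m : ℕ} {X Y : Matrix (Fin m) (Fin m) ℂ}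
    (hX : X.IsHermitian) (hY : Y.IsHermitian) (hXY : (Y - X).PosSemidef) (j : Fin m) :
    eigDesc hX j ≤ eigDesc hY j := by
  set S := Submodule.span ℂ
    (hX.eigenvectorBasis '' ↑({i | eigDesc hX j ≤ hX.eigenvalues i} : Finset _))
  set T := Submodule.span ℂ
    (hY.eigenvectorBasis '' ↑({i | hY.eigenvalues i ≤ eigDesc hY j} : Finset _))
  -- `S` has dimension at least `j + 1` and `T` at least `m - j`.
  obtain ⟨x, ⟨hxS, hxT⟩, hx0⟩ := S.exists_mem_inf_ne_zero_of_finrank_lt T <| by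
    rw [hX.finrank_span_eigenvectorBasis_image, hY.finrank_span_eigenvectorBasis_image,
      finrank_euclideanSpace_fin]
    have := Tuple.succ_le_card_filter_sort_rev_le hX.eigenvalues j
    have := Tuple.sub_le_card_filter_le_sort_rev hY.eigenvalues j
    have := j.isLt
    unfold eigDesc
    omega
  have hquad : RCLike.re (star ⇑x ⬝ᵥ (X *ᵥ ⇑x)) ≤ RCLike.re (star ⇑x ⬝ᵥ (Y *ᵥ ⇑x)) := by
    have := hXY.dotProduct_mulVec_nonneg x
    rw [sub_mulVec, dotProduct_sub] at this
    simpa using (Complex.le_def.mp this).1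
  have := (hX.mul_norm_sq_le_re_dotProduct_mulVec hxS fun i hi => (mem_filter.mp hi).2).trans
    (hquad.trans (hY.re_dotProduct_mulVec_le_mul_norm_sq hxT fun i hi => (mem_filter.mp hi).2))
  exact le_of_mul_le_mul_right this (by positivity)

lemma eigDesc_unitary_conj {m : ℕ} {Z U : Matrix (Fin m) (Fin m) ℂ} (hZ : Z.IsHermitian)
    (hU : U ∈ unitaryGroup (Fin m) ℂ) (hUZU : (U * Z * Uᴴ).IsHermitian) (j : Fin m) :
    eigDesc hUZU j = eigDesc hZ j := by
  have : hUZU.eigenvalues = hZ.eigenvalues := by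
    rw [IsHermitian.eigenvalues_eq_eigenvalues_iff, charpoly_mul_comm, ← Matrix.mul_assoc,
      ← star_eq_conjTranspose, Unitary.star_mul_self_of_mem hU, Matrix.one_mul]
  unfold eigDesc
  rw [this]

lemma RCLike.star_intervalIntegral {𝕜 : Type*} [RCLike 𝕜] (f : ℝ → 𝕜) (a b : ℝ) :
    star (∫ t in a..b, f t) = ∫ t in a..b, star (f t) := by
  simp only [intervalIntegral, star_sub, RCLike.star_def, integral_conj]

lemma RCLike.intervalIntegral_nonneg {𝕜 : Type*} [RCLike 𝕜] {f : ℝ → 𝕜} {a b : ℝ}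
    (hab : a ≤ b) (hf : ∀ t ∈ Set.Icc a b, 0 ≤ f t) : 0 ≤ ∫ t in a..b, f t := by
  have hre : ∫ t in a..b, f t = ∫ t in a..b, ((RCLike.re (f t) : ℝ) : 𝕜) :=
    intervalIntegral.integral_congr fun t ht => by
      rw [Set.uIcc_of_le hab] at ht
      exact RCLike.ext (by simp) (by simp [(RCLike.nonneg_iff.mp (hf t ht)).2])
  rw [hre, RCLike.intervalIntegral_ofReal]
  exact RCLike.ofReal_nonneg.mpr (intervalIntegral.integral_nonneg hab fun t ht =>
    (RCLike.nonneg_iff.mp (hf t ht)).1)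

namespace Matrix

noncomputable def intervalIntegralEntrywise {m n E : Type*} [NormedAddCommGroup E]
    [NormedSpace ℝ E] (F : ℝ → Matrix m n E) (a b : ℝ) : Matrix m n E :=
  of fun i j => ∫ t in a..b, F t i j

section
variable {m n E : Type*} [NormedAddCommGroup E] [NormedSpace ℝ E]

lemma intervalIntegralEntrywise_sub {F G : ℝ → Matrix m n E} {a b : ℝ}
    (hF : ∀ i j, IntervalIntegrable (fun t => F t i j) volume a b)
    (hG : ∀ i j, IntervalIntegrable (fun t => G t i j) volume a b) :
    intervalIntegralEntrywise (F - G) a b =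
      intervalIntegralEntrywise F a b - intervalIntegralEntrywise G a b := by
  ext i j
  exact intervalIntegral.integral_sub (hF i j) (hG i j)

lemma intervalIntegralEntrywise_smul_add_one_sub_smul [CompleteSpace E] (P Q : Matrix m n E) :
    intervalIntegralEntrywise (fun t => t • P + (1 - t) • Q) 0 1 = (1 / 2 : ℝ) • (P + Q) := by
  have hsub : ∫ t in (0 : ℝ)..1, (1 - t) = 1 / 2 := by
    rw [intervalIntegral.integral_sub intervalIntegrable_const
      intervalIntegral.intervalIntegrable_id, intervalIntegral.integral_const, integral_id]
    norm_num
  ext i j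
  rw [intervalIntegralEntrywise, of_apply]
  simp only [add_apply, smul_apply]
  rw [intervalIntegral.integral_add
      ((by fun_prop : Continuous fun t : ℝ => t • P i j).intervalIntegrable _ _)
      ((by fun_prop : Continuous fun t : ℝ => (1 - t) • Q i j).intervalIntegrable _ _),
    intervalIntegral.integral_smul_const, intervalIntegral.integral_smul_const, integral_id, hsub,
    smul_add]
  norm_num

end

section
variable {𝕜 n : Type*} [RCLike 𝕜] [Fintype n] {F : ℝ → Matrix n n 𝕜} {a b : ℝ}
  (hF : ∀ i j, IntervalIntegrable (fun t => F t i j) volume a b)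
include hF

lemma dotProduct_mulVec_intervalIntegralEntrywise (x : n → 𝕜) :
    star x ⬝ᵥ (intervalIntegralEntrywise F a b *ᵥ x) =
      ∫ t in a..b, star x ⬝ᵥ (F t *ᵥ x) := by
  have hterm : ∀ i j, IntervalIntegrable (fun t => star x i * (F t i j * x j)) volume a b :=
    fun i j => ((hF i j).mul_const _).const_mul _
  simp only [dotProduct, mulVec, intervalIntegralEntrywise, of_apply, mul_sum]
  rw [intervalIntegral.integral_finsetSum fun i _ => by
    simpa only [sum_fn] using IntervalIntegrable.sum univ fun j _ => hterm i j]
  refine sum_congr rfl fun i _ => ?_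
  rw [intervalIntegral.integral_finsetSum fun j _ => hterm i j]
  refine sum_congr rfl fun j _ => ?_
  rw [intervalIntegral.integral_const_mul, intervalIntegral.integral_mul_const]

lemma posSemidef_intervalIntegralEntrywise (hab : a ≤ b)
    (hpos : ∀ t ∈ Set.Icc a b, (F t).PosSemidef) :
    (intervalIntegralEntrywise F a b).PosSemidef := by
  refine .of_dotProduct_mulVec_nonneg ?_ fun x => ?_
  · ext i j
    simp only [conjTranspose_apply, intervalIntegralEntrywise, of_apply,
      RCLike.star_intervalIntegral]
    refine intervalIntegral.integral_congr fun t ht => ?_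
    rw [Set.uIcc_of_le hab] at ht
    exact (hpos t ht).1.apply i j
  · rw [dotProduct_mulVec_intervalIntegralEntrywise hF]
    exact RCLike.intervalIntegral_nonneg hab fun t ht => (hpos t ht).dotProduct_mulVec_nonneg x

end

lemma posSemidef_half_smul_add_sub_intervalIntegralEntrywise {𝕜 n : Type*} [RCLike 𝕜]
    [Fintype n] {P Q : Matrix n n 𝕜} {G : ℝ → Matrix n n 𝕜} (hG : ContinuousOn G (Set.Icc 0 1))
    (hPQG : ∀ t ∈ Set.Icc (0 : ℝ) 1, (t • P + (1 - t) • Q - G t).PosSemidef) :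
    ((1 / 2 : ℝ) • (P + Q) - intervalIntegralEntrywise G 0 1).PosSemidef := by
  have hGint : ∀ i j, IntervalIntegrable (fun t => G t i j) volume 0 1 := fun i j =>
    ((continuous_apply j).comp_continuousOn ((continuous_apply i).comp_continuousOn hG))
      |>.intervalIntegrable_of_Icc zero_le_one
  have hLint : ∀ i j, IntervalIntegrable (fun t : ℝ => (t • P + (1 - t) • Q) i j) volume 0 1 :=
    fun i j => Continuous.intervalIntegrable (by fun_prop) _ _
  rw [← intervalIntegralEntrywise_smul_add_one_sub_smul,
    ← intervalIntegralEntrywise_sub hLint hGint]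
  exact posSemidef_intervalIntegralEntrywise (fun i j => (hLint i j).sub (hGint i j))
    zero_le_one hPQG

section LoewnerOrder
variable {𝕜 n m : Type*} [RCLike 𝕜] [Fintype n] [DecidableEq n] [Fintype m] [DecidableEq m]

open scoped MatrixOrder

lemma mem_Icc_algebraMap_iff {M : Matrix n n 𝕜} {ω Ω : ℝ} :
    M ∈ Set.Icc (algebraMap ℝ _ ω) (algebraMap ℝ _ Ω) ↔
      M.IsHermitian ∧ spectrum ℝ M ⊆ Set.Icc ω Ω := by
  constructor
  · rintro ⟨hlow, hup⟩
    have hM : IsSelfAdjoint M := by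
      simpa using (IsSelfAdjoint.of_nonneg (sub_nonneg.mpr hlow)).add (.algebraMap _ (.all ω))
    exact ⟨hM, fun x hx => ⟨(algebraMap_le_iff_le_spectrum hM).mp hlow x hx,
      (le_algebraMap_iff_spectrum_le hM).mp hup x hx⟩⟩
  · rintro ⟨hM, hs⟩
    exact ⟨(algebraMap_le_iff_le_spectrum hM.isSelfAdjoint).mpr fun x hx => (hs hx).1,
      (le_algebraMap_iff_spectrum_le hM.isSelfAdjoint).mpr fun x hx => (hs hx).2⟩

lemma mapsTo_Icc_algebraMap_of_posSemidef {Φ : Matrix n n 𝕜 →ₗ[𝕜] Matrix m m 𝕜}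
    (hpos : ∀ X, X.PosSemidef → (Φ X).PosSemidef) (hunital : Φ 1 = 1) (ω Ω : ℝ) :
    Set.MapsTo Φ (Set.Icc (algebraMap ℝ _ ω) (algebraMap ℝ _ Ω))
      (Set.Icc (algebraMap ℝ _ ω) (algebraMap ℝ _ Ω)) := by
  have hmono : Monotone Φ := fun X Y h => by
    simpa only [le_iff, map_sub] using hpos _ (le_iff.mp h)
  have halg : ∀ r : ℝ, Φ (algebraMap ℝ _ r) = algebraMap ℝ _ r := fun r => by
    rw [Algebra.algebraMap_eq_smul_one, LinearMap.map_smul_of_tower, hunital,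
      Algebra.algebraMap_eq_smul_one]
  intro X hX
  simpa only [halg] using Set.mem_Icc.mpr ⟨hmono hX.1, hmono hX.2⟩

end LoewnerOrder

lemma continuousOn_cfc_of_spectrum_subset {n X : Type*} [Fintype n] [DecidableEq n]
    [TopologicalSpace X] {f : ℝ → ℝ} {ω Ω : ℝ} (hf : ContinuousOn f (Set.Icc ω Ω))
    {M : X → Matrix n n ℂ} {s : Set X} (hM : ContinuousOn M s)
    (hMs : ∀ x ∈ s, (M x).IsHermitian ∧ spectrum ℝ (M x) ⊆ Set.Icc ω Ω) :
    ContinuousOn (fun x => cfc f (M x)) s := by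
  -- The L2 operator norm makes matrices a C⋆-algebra without changing their topology, and
  -- `cfc` does not depend on the choice of functional calculus instance.
  open scoped Matrix.Norms.L2Operator in
  exact hM.cfc' isCompact_Icc f (fun x hx => (hMs x hx).2) fun x hx => (hMs x hx).1.isSelfAdjoint

end Matrix

theorem eigenvalue_hermite_hadamard_second_general
    {n m : ℕ} (A B : Matrix (Fin n) (Fin n) ℂ)
    (hA : A.IsHermitian) (hB : B.IsHermitian) (ω Ω : ℝ)
    (hsA : spectrum ℝ A ⊆ Set.Icc ω Ω) (hsB : spectrum ℝ B ⊆ Set.Icc ω Ω)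
    (f : ℝ → ℝ) (hcont : ContinuousOn f (Set.Icc ω Ω))
    (Φ : Matrix (Fin n) (Fin n) ℂ →ₗ[ℂ] Matrix (Fin m) (Fin m) ℂ)
    (hpos : ∀ X : Matrix (Fin n) (Fin n) ℂ, X.PosSemidef → (Φ X).PosSemidef)
    (hunital : Φ 1 = 1)
    (U : Matrix (Fin m) (Fin m) ℂ) (hU : U ∈ Matrix.unitaryGroup (Fin m) ℂ)
    (hUineq : ∀ t ∈ Set.Icc (0:ℝ) 1,
      (U * (t • Φ (cfc f A) + (1 - t) • Φ (cfc f B)) * Uᴴ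
        - cfc f (t • Φ A + (1 - t) • Φ B)).PosSemidef)
    (hX : (Matrix.of fun i j =>
        ∫ t in (0:ℝ)..1, (cfc f (Φ (t • A + (1 - t) • B))) i j
          : Matrix (Fin m) (Fin m) ℂ).IsHermitian)
    (hY : ((1/2 : ℝ) • (Φ (cfc f A) + Φ (cfc f B))).IsHermitian) :
    ∀ j : Fin m, eigDesc hX j ≤ eigDesc hY j := by
  intro j
  have hΦ : ∀ t : ℝ, Φ (t • A + (1 - t) • B) = t • Φ A + (1 - t) • Φ B := fun t => by
    rw [map_add, LinearMap.map_smul_of_tower, LinearMap.map_smul_of_tower]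
  have hspec : ∀ t ∈ Set.Icc (0 : ℝ) 1, (Φ (t • A + (1 - t) • B)).IsHermitian ∧
      spectrum ℝ (Φ (t • A + (1 - t) • B)) ⊆ Set.Icc ω Ω := by
    open scoped MatrixOrder in
    exact fun t ht => mem_Icc_algebraMap_iff.mp <|
      mapsTo_Icc_algebraMap_of_posSemidef hpos hunital ω Ω <|
        convex_Icc _ _ (mem_Icc_algebraMap_iff.mpr ⟨hA, hsA⟩)
          (mem_Icc_algebraMap_iff.mpr ⟨hB, hsB⟩) ht.1 (sub_nonneg.mpr ht.2) (add_sub_cancel _ _)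
  have hG : ContinuousOn (fun t : ℝ => cfc f (Φ (t • A + (1 - t) • B))) (Set.Icc 0 1) :=
    continuousOn_cfc_of_spectrum_subset hcont
      (Φ.continuous_of_finiteDimensional.comp (by fun_prop)).continuousOn hspec
  have hconj : ∀ s r : ℝ, U * (s • Φ (cfc f A) + r • Φ (cfc f B)) * Uᴴ =
      s • (U * Φ (cfc f A) * Uᴴ) + r • (U * Φ (cfc f B) * Uᴴ) := fun s r => by
    simp only [Matrix.mul_add, Matrix.add_mul, Matrix.mul_smul, Matrix.smul_mul]
  have hpsd := posSemidef_half_smul_add_sub_intervalIntegralEntrywise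
      (P := U * Φ (cfc f A) * Uᴴ) (Q := U * Φ (cfc f B) * Uᴴ) hG fun t ht => by
    simpa only [hΦ, hconj] using hUineq t ht
  rw [smul_add, ← hconj, ← smul_add] at hpsd
  calc eigDesc hX j ≤ eigDesc (isHermitian_mul_mul_conjTranspose U hY) j :=
        eigDesc_le_of_posSemidef_sub hX _ hpsd j
    _ = eigDesc hY j := eigDesc_unitary_conj hY hU _ j

/-- Let `A, B` be Hermitian with spectra in `[ω, Ω]`, `f` increasing, convex (and
continuous) on `[ω, Ω]`, and `Φ` a unital positive linear map. If there is a unitary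
`U` with `f(tΦ(A)+(1-t)Φ(B)) ≤ U[tΦ(f(A))+(1-t)Φ(f(B))]U*` for all `t ∈ [0,1]`, then
`λ_j(∫_0^1 f(Φ(tA+(1-t)B)) dt) ≤ λ_j((Φ(f(A))+Φ(f(B)))/2)` for every `j`.
The integral is taken entrywise. -/
theorem eigenvalue_hermite_hadamard_second
    {n m : ℕ} (A B : Matrix (Fin n) (Fin n) ℂ)
    (hA : A.IsHermitian) (hB : B.IsHermitian) (ω Ω : ℝ)
    (hsA : spectrum ℝ A ⊆ Set.Icc ω Ω) (hsB : spectrum ℝ B ⊆ Set.Icc ω Ω)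
    (f : ℝ → ℝ) (hmono : MonotoneOn f (Set.Icc ω Ω))
    (hconv : ConvexOn ℝ (Set.Icc ω Ω) f) (hcont : ContinuousOn f (Set.Icc ω Ω))
    (Φ : Matrix (Fin n) (Fin n) ℂ →ₗ[ℂ] Matrix (Fin m) (Fin m) ℂ)
    (hpos : ∀ X : Matrix (Fin n) (Fin n) ℂ, X.PosSemidef → (Φ X).PosSemidef)
    (hunital : Φ 1 = 1)
    (U : Matrix (Fin m) (Fin m) ℂ) (hU : U ∈ Matrix.unitaryGroup (Fin m) ℂ)
    (hUineq : ∀ t ∈ Set.Icc (0:ℝ) 1,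
      (U * (t • Φ (cfc f A) + (1 - t) • Φ (cfc f B)) * Uᴴ
        - cfc f (t • Φ A + (1 - t) • Φ B)).PosSemidef)
    (hX : (Matrix.of fun i j =>
        ∫ t in (0:ℝ)..1, (cfc f (Φ (t • A + (1 - t) • B))) i j
          : Matrix (Fin m) (Fin m) ℂ).IsHermitian)
    (hY : ((1/2 : ℝ) • (Φ (cfc f A) + Φ (cfc f B))).IsHermitian) :
    ∀ j : Fin m, eigDesc hX j ≤ eigDesc hY j :=
  eigenvalue_hermite_hadamard_second_general A B hA hB ω Ω hsA hsB f hcont Φ hpos hunital U hU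
    hUineq hX hY
end

section
/- Let A, B be bounded self-adjoint operators on a Hilbert space with spectra in [ω, Ω], f : [ω, Ω] → (0, ∞) convex, and Φ : M_n → M_m a unital positive linear map with A, B ∈ M_n Hermitian. Set α = max{ ((Ω−t)/(Ω−ω))·f(ω)/f(t) + ((t−ω)/(Ω−ω))·f(Ω)/f(t) : t ∈ [ω, Ω] }. Then Φ(∫_0^1 f(tA+(1-t)B) dt) ≤ α · (f(Φ(A)) + f(Φ(B)))/2. -/
/-!
The chord `ℓ` of `f` over `[ω, Ω]` is an affine function with `f ≤ ℓ` on `[ω, Ω]` by convexity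
and `ℓ ≤ α f` there by the choice of `α`. Hence `f(tA + (1-t)B) ≤ ℓ(tA + (1-t)B)` for every `t`,
and since `ℓ` is affine, integrating gives `∫₀¹ f(tA + (1-t)B) dt ≤ (ℓ(A) + ℓ(B))/2`. A unital
positive map is monotone and commutes with affine functions, so `Φ` of the left-hand side is at
most `(ℓ(Φ A) + ℓ(Φ B))/2 ≤ α (f(Φ A) + f(Φ B))/2`. Nothing here is special to matrices: the
argument runs in unital C⋆-algebras, with the Bochner integral in place of the entrywise one.
-/

open scoped ComplexOrder

open Set MeasureTheory

lemma ConvexOn.le_chord {f : ℝ → ℝ} {ω Ω x : ℝ} (hf : ConvexOn ℝ (Icc ω Ω) f) (hωΩ : ω < Ω)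
    (hx : x ∈ Icc ω Ω) :
    f x ≤ (Ω - x) / (Ω - ω) * f ω + (x - ω) / (Ω - ω) * f Ω := by
  have hωΩ' : 0 < Ω - ω := sub_pos.2 hωΩ
  have hcomb : (Ω - x) / (Ω - ω) * ω + (x - ω) / (Ω - ω) * Ω = x := by field_simp; ring
  simpa only [hcomb, smul_eq_mul] using hf.2 (left_mem_Icc.2 hωΩ.le) (right_mem_Icc.2 hωΩ.le)
    (div_nonneg (sub_nonneg.2 hx.2) hωΩ'.le) (div_nonneg (sub_nonneg.2 hx.1) hωΩ'.le)
    (by field_simp; ring)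

lemma intervalIntegral_smul_add_one_sub_smul {E : Type*} [NormedAddCommGroup E] [NormedSpace ℝ E]
    [CompleteSpace E] (x y : E) :
    ∫ t in (0 : ℝ)..1, (t • x + (1 - t) • y) = (1 / 2 : ℝ) • (x + y) := by
  have hx : IntervalIntegrable (fun t : ℝ => t • x) volume 0 1 :=
    (continuous_id.smul continuous_const).intervalIntegrable 0 1
  have hy : IntervalIntegrable (fun t : ℝ => (1 - t) • y) volume 0 1 :=
    ((continuous_const.sub continuous_id).smul continuous_const).intervalIntegrable 0 1
  have hone_sub : ∫ t in (0 : ℝ)..1, (1 - t) = 1 / 2 := by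
    simp [intervalIntegral.integral_comp_sub_left fun t : ℝ => t]
  rw [intervalIntegral.integral_add hx hy, intervalIntegral.integral_smul_const,
    intervalIntegral.integral_smul_const, integral_id, hone_sub]
  module

section CStarAlgebra

variable {A B : Type*} [CStarAlgebra A] [CStarAlgebra B]

lemma cfc_const_add_const_mul_id (c d : ℝ) (a : A) (ha : IsSelfAdjoint a := by cfc_tac) :
    cfc (fun x => c + d * x) a = algebraMap ℝ A c + d • a := by
  rw [cfc_const_add c (fun x => d * x) a, cfc_const_mul_id d a]

lemma intervalIntegral_cfc_const_add_const_mul_id (c d : ℝ) {a b : A} (ha : IsSelfAdjoint a)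
    (hb : IsSelfAdjoint b) :
    ∫ t in (0 : ℝ)..1, cfc (fun x => c + d * x) (t • a + (1 - t) • b)
      = (1 / 2 : ℝ) • (cfc (fun x => c + d * x) a + cfc (fun x => c + d * x) b) := by
  have hsegment (t : ℝ) : cfc (fun x => c + d * x) (t • a + (1 - t) • b)
      = t • cfc (fun x => c + d * x) a + (1 - t) • cfc (fun x => c + d * x) b := by
    rw [cfc_const_add_const_mul_id c d a, cfc_const_add_const_mul_id c d b,
      cfc_const_add_const_mul_id c d _]
    module
  simp only [hsegment, intervalIntegral_smul_add_one_sub_smul]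

variable [PartialOrder A] [PartialOrder B]

lemma PositiveLinearMap.map_algebraMap_of_map_one (Φ : A →ₚ[ℂ] B) (hΦ : Φ 1 = 1) (r : ℝ) :
    Φ (algebraMap ℝ A r) = algebraMap ℝ B r := by
  rw [Algebra.algebraMap_eq_smul_one, Φ.map_smul_of_tower, hΦ, Algebra.algebraMap_eq_smul_one]

lemma PositiveLinearMap.mapsTo_Icc_algebraMap (Φ : A →ₚ[ℂ] B) (hΦ : Φ 1 = 1) (ω Ω : ℝ) :
    MapsTo Φ (Icc (algebraMap ℝ A ω) (algebraMap ℝ A Ω))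
      (Icc (algebraMap ℝ B ω) (algebraMap ℝ B Ω)) := fun _ ⟨hω, hΩ⟩ => by
  rw [← Φ.map_algebraMap_of_map_one hΦ ω, ← Φ.map_algebraMap_of_map_one hΦ Ω]
  exact ⟨OrderHomClass.mono Φ hω, OrderHomClass.mono Φ hΩ⟩

variable [StarOrderedRing A] [StarOrderedRing B]

lemma isSelfAdjoint_and_spectrum_subset_Icc_iff {a : A} {ω Ω : ℝ} :
    IsSelfAdjoint a ∧ spectrum ℝ a ⊆ Icc ω Ω ↔ a ∈ Icc (algebraMap ℝ A ω) (algebraMap ℝ A Ω) := by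
  constructor
  · rintro ⟨ha, hs⟩
    exact ⟨(algebraMap_le_iff_le_spectrum ha).2 fun x hx => (hs hx).1,
      (le_algebraMap_iff_spectrum_le ha).2 fun x hx => (hs hx).2⟩
  · rintro ⟨hω, hΩ⟩
    have ha : IsSelfAdjoint a := (IsSelfAdjoint.algebraMap A (.all ω)).of_ge hω
    exact ⟨ha, fun x hx => ⟨(algebraMap_le_iff_le_spectrum ha).1 hω x hx,
      (le_algebraMap_iff_spectrum_le ha).1 hΩ x hx⟩⟩

lemma PositiveLinearMap.map_cfc_const_add_const_mul_id (Φ : A →ₚ[ℂ] B) (hΦ : Φ 1 = 1) (c d : ℝ)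
    {a : A} (ha : IsSelfAdjoint a) :
    Φ (cfc (fun x => c + d * x) a) = cfc (fun x => c + d * x) (Φ a) := by
  rw [cfc_const_add_const_mul_id c d a, cfc_const_add_const_mul_id c d (Φ a) (ha.map' Φ),
    map_add, Φ.map_smul_of_tower, Φ.map_algebraMap_of_map_one hΦ]

lemma intervalIntegrable_cfc_smul_add_one_sub_smul {ω Ω : ℝ} {f : ℝ → ℝ}
    (hf : ContinuousOn f (Icc ω Ω)) {a b : A} (ha : a ∈ Icc (algebraMap ℝ A ω) (algebraMap ℝ A Ω))
    (hb : b ∈ Icc (algebraMap ℝ A ω) (algebraMap ℝ A Ω)) :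
    IntervalIntegrable (fun t : ℝ => cfc f (t • a + (1 - t) • b)) volume 0 1 := by
  have hsegment (t : ℝ) (ht : t ∈ Icc (0 : ℝ) 1) :=
    isSelfAdjoint_and_spectrum_subset_Icc_iff.2
      (convex_Icc _ _ ha hb ht.1 (sub_nonneg.2 ht.2) (add_sub_cancel t 1))
  refine ContinuousOn.intervalIntegrable ?_
  rw [uIcc_of_le zero_le_one]
  exact ContinuousOn.cfc' isCompact_Icc f (by fun_prop) (fun t ht => (hsegment t ht).2)
    (fun t ht => (hsegment t ht).1) hf

theorem PositiveLinearMap.map_intervalIntegral_cfc_le (Φ : A →ₚ[ℂ] B) (hΦ : Φ 1 = 1)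
    {ω Ω : ℝ} {a b : A} (ha : a ∈ Icc (algebraMap ℝ A ω) (algebraMap ℝ A Ω))
    (hb : b ∈ Icc (algebraMap ℝ A ω) (algebraMap ℝ A Ω)) {f : ℝ → ℝ}
    (hf : ContinuousOn f (Icc ω Ω)) {c d α : ℝ} (hf_le : ∀ x ∈ Icc ω Ω, f x ≤ c + d * x)
    (hle_α : ∀ x ∈ Icc ω Ω, c + d * x ≤ α * f x) :
    Φ (∫ t in (0 : ℝ)..1, cfc f (t • a + (1 - t) • b))
      ≤ α • ((1 / 2 : ℝ) • (cfc f (Φ a) + cfc f (Φ b))) := by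
  have hℓ : ContinuousOn (fun x => c + d * x) (Icc ω Ω) := by fun_prop
  obtain ⟨ha', -⟩ := isSelfAdjoint_and_spectrum_subset_Icc_iff.2 ha
  obtain ⟨hb', -⟩ := isSelfAdjoint_and_spectrum_subset_Icc_iff.2 hb
  obtain ⟨hΦa, hsΦa⟩ :=
    isSelfAdjoint_and_spectrum_subset_Icc_iff.2 (Φ.mapsTo_Icc_algebraMap hΦ ω Ω ha)
  obtain ⟨hΦb, hsΦb⟩ :=
    isSelfAdjoint_and_spectrum_subset_Icc_iff.2 (Φ.mapsTo_Icc_algebraMap hΦ ω Ω hb)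
  have hf_le_ℓ : ∫ t in (0 : ℝ)..1, cfc f (t • a + (1 - t) • b)
      ≤ ∫ t in (0 : ℝ)..1, cfc (fun x => c + d * x) (t • a + (1 - t) • b) := by
    simp only [intervalIntegral.integral_of_le zero_le_one]
    refine setIntegral_mono_on (intervalIntegrable_cfc_smul_add_one_sub_smul hf ha hb).1
      (intervalIntegrable_cfc_smul_add_one_sub_smul hℓ ha hb).1 measurableSet_Ioc fun t ht => ?_
    have hsegment := isSelfAdjoint_and_spectrum_subset_Icc_iff.2
      (convex_Icc _ _ ha hb ht.1.le (sub_nonneg.2 ht.2) (add_sub_cancel t 1))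
    exact cfc_mono (fun x hx => hf_le x (hsegment.2 hx)) (hf.mono hsegment.2)
  calc Φ (∫ t in (0 : ℝ)..1, cfc f (t • a + (1 - t) • b))
      ≤ Φ ((1 / 2 : ℝ) • (cfc (fun x => c + d * x) a + cfc (fun x => c + d * x) b)) := by
        rw [← intervalIntegral_cfc_const_add_const_mul_id c d ha' hb']
        exact OrderHomClass.mono Φ hf_le_ℓ
    _ = (1 / 2 : ℝ) • (cfc (fun x => c + d * x) (Φ a) + cfc (fun x => c + d * x) (Φ b)) := by
        rw [Φ.map_smul_of_tower, map_add, Φ.map_cfc_const_add_const_mul_id hΦ c d ha',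
          Φ.map_cfc_const_add_const_mul_id hΦ c d hb']
    _ ≤ (1 / 2 : ℝ) • (cfc (fun x => α * f x) (Φ a) + cfc (fun x => α * f x) (Φ b)) := by
        gcongr
        · exact cfc_mono (fun x hx => hle_α x (hsΦa hx))
            (hg := (continuousOn_const.mul hf).mono hsΦa)
        · exact cfc_mono (fun x hx => hle_α x (hsΦb hx))
            (hg := (continuousOn_const.mul hf).mono hsΦb)
    _ = α • ((1 / 2 : ℝ) • (cfc f (Φ a) + cfc f (Φ b))) := by
        rw [cfc_const_mul α f (Φ a) (hf.mono hsΦa), cfc_const_mul α f (Φ b) (hf.mono hsΦb)]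
        module

end CStarAlgebra

open scoped Matrix.Norms.L2Operator in
lemma Matrix.intervalIntegral_apply {m n : Type*} [Fintype m] [Fintype n] [DecidableEq n]
    {F : ℝ → Matrix m n ℂ} {a b : ℝ} (hF : IntervalIntegrable F volume a b) (i : m) (j : n) :
    (∫ t in a..b, F t) i j = ∫ t in a..b, F t i j :=
  ((Matrix.entryLinearMap ℂ ℂ i j).toContinuousLinearMap.intervalIntegral_comp_comm hF).symm

/-- Mond–Pečarić type reverse Hermite–Hadamard inequality: with
`α = max{((Ω−t)/(Ω−ω))·f(ω)/f(t) + ((t−ω)/(Ω−ω))·f(Ω)/f(t) : t ∈ [ω,Ω]}`,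
for Hermitian `A, B` with spectra in `[ω, Ω]`, `f` positive, convex (and continuous) on
`[ω, Ω]` and `Φ` a unital positive linear map,
`Φ(∫_0^1 f(tA+(1-t)B) dt) ≤ α (f(Φ(A)) + f(Φ(B)))/2` in the Loewner order.
The integral is taken entrywise. -/
theorem mond_pecaric_hermite_hadamard
    {n m : ℕ} (A B : Matrix (Fin n) (Fin n) ℂ)
    (hA : A.IsHermitian) (hB : B.IsHermitian) (ω Ω : ℝ) (hωΩ : ω < Ω)
    (hsA : spectrum ℝ A ⊆ Set.Icc ω Ω) (hsB : spectrum ℝ B ⊆ Set.Icc ω Ω)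
    (f : ℝ → ℝ) (hconv : ConvexOn ℝ (Set.Icc ω Ω) f)
    (hcont : ContinuousOn f (Set.Icc ω Ω))
    (hfpos : ∀ t ∈ Set.Icc ω Ω, 0 < f t)
    (Φ : Matrix (Fin n) (Fin n) ℂ →ₗ[ℂ] Matrix (Fin m) (Fin m) ℂ)
    (hpos : ∀ X : Matrix (Fin n) (Fin n) ℂ, X.PosSemidef → (Φ X).PosSemidef)
    (hunital : Φ 1 = 1)
    (α : ℝ)
    (hα : IsGreatest ((fun t => (Ω - t) / (Ω - ω) * (f ω / f t)
        + (t - ω) / (Ω - ω) * (f Ω / f t)) '' Set.Icc ω Ω) α) :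
    (α • ((1/2 : ℝ) • (cfc f (Φ A) + cfc f (Φ B)))
      - Φ (Matrix.of fun i j =>
          ∫ t in (0:ℝ)..1, (cfc f (t • A + (1 - t) • B)) i j)).PosSemidef := by
  open scoped MatrixOrder Matrix.Norms.L2Operator in
  have hf_le (x : ℝ) (hx : x ∈ Icc ω Ω) :
      f x ≤ (Ω * f ω - ω * f Ω) / (Ω - ω) + (f Ω - f ω) / (Ω - ω) * x :=
    (hconv.le_chord hωΩ hx).trans_eq (by ring)
  have hle_α (x : ℝ) (hx : x ∈ Icc ω Ω) :
      (Ω * f ω - ω * f Ω) / (Ω - ω) + (f Ω - f ω) / (Ω - ω) * x ≤ α * f x := by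
    have hfx := hfpos x hx
    calc _ = ((Ω - x) / (Ω - ω) * (f ω / f x) + (x - ω) / (Ω - ω) * (f Ω / f x)) * f x := by
          field_simp; ring
      _ ≤ α * f x := by gcongr; exact hα.2 ⟨x, hx, rfl⟩
  have hAI := isSelfAdjoint_and_spectrum_subset_Icc_iff.1 ⟨hA, hsA⟩
  have hBI := isSelfAdjoint_and_spectrum_subset_Icc_iff.1 ⟨hB, hsB⟩
  have hM : (Matrix.of fun i j => ∫ t in (0:ℝ)..1, (cfc f (t • A + (1 - t) • B)) i j)
      = ∫ t in (0:ℝ)..1, cfc f (t • A + (1 - t) • B) := by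
    ext i j
    exact (Matrix.intervalIntegral_apply
      (intervalIntegrable_cfc_smul_add_one_sub_smul hcont hAI hBI) i j).symm
  let Ψ : Matrix (Fin n) (Fin n) ℂ →ₚ[ℂ] Matrix (Fin m) (Fin m) ℂ := .mk₀ Φ fun X hX =>
    Matrix.nonneg_iff_posSemidef.2 (hpos X (Matrix.nonneg_iff_posSemidef.1 hX))
  rw [hM]
  -- under `MatrixOrder`, `X ≤ Y` unfolds to `(Y - X).PosSemidef`
  exact Ψ.map_intervalIntegral_cfc_le hunital hAI hBI hcont hf_le hle_α
end

section
/- Let A, B be bounded self-adjoint operators on a complex Hilbert space with spectra in an interval J, and f operator convex on J. Then for any positive integer N: f((A+B)/2) ≤ (1/N)·∑_{i=0}^{N-1} f(((2i+1)/(2N))·A + (1−(2i+1)/(2N))·B) ≤ ∫_0^1 f(tA+(1-t)B) dt ≤ (1/(2N))·∑_{i=0}^{N-1} [f(((i+1)/N)·A + (1−(i+1)/N)·B) + f((i/N)·A + (1−i/N)·B)] ≤ (f(A)+f(B))/2. -/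
/-!
Along the segment `t ↦ t • A + (1 - t) • B` the spectra stay in `J`, because for self-adjoint
elements "spectrum in `[m, M]`" is the convex condition `m ≤ X ≤ M` in the Loewner order. Hence
operator convexity makes `g t = f (t • A + (1 - t) • B)` a continuous convex function on `[0, 1]`
with values in the ordered Banach space of operators, and the four inequalities hold for any such
`g`: Jensen's inequality for the `N` midpoints, the Hermite–Hadamard inequalities on each
subinterval `[i/N, (i+1)/N]`, and the chord bound `g t ≤ t • g 1 + (1 - t) • g 0`.
-/

open MeasureTheory Set

lemma sum_range_two_mul_add_one (n : ℕ) : ∑ i ∈ Finset.range n, (2 * (i : ℝ) + 1) = n ^ 2 := by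
  induction n with
  | zero => simp
  | succ n ih => rw [Finset.sum_range_succ, ih]; push_cast; ring

lemma Icc_div_natCast_subset_Icc_zero_one {i N : ℕ} (hi : i < N) :
    Icc ((i : ℝ) / N) ((i + 1) / N) ⊆ Icc 0 1 := by
  have hN : (0 : ℝ) < N := by exact_mod_cast (Nat.zero_le i).trans_lt hi
  refine Icc_subset_Icc (by positivity) ((div_le_one hN).2 ?_)
  exact_mod_cast hi

section ConvexCombination

variable {E : Type*} [AddCommGroup E] [Module ℝ E] [PartialOrder E] [IsOrderedAddMonoid E]
  {g : ℝ → E} {N : ℕ}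

theorem ConvexOn.map_half_le_smul_sum_map_midpoints [IsStrictOrderedModule ℝ E]
    (hg : ConvexOn ℝ (Icc 0 1) g) (hN : 0 < N) :
    g (1 / 2) ≤ (1 / N : ℝ) • ∑ i ∈ Finset.range N, g ((2 * i + 1) / (2 * N)) := by
  have hmean : ∑ i ∈ Finset.range N, (1 / N : ℝ) • ((2 * i + 1) / (2 * N) : ℝ) = 1 / 2 := by
    simp_rw [smul_eq_mul, ← Finset.mul_sum, ← Finset.sum_div, sum_range_two_mul_add_one]
    field_simp
  rw [Finset.smul_sum, ← hmean]
  refine hg.map_sum_le (fun _ _ => by positivity) (by simp [hN.ne']) fun i hi => ?_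
  have hi' : (i : ℝ) + 1 ≤ N := by exact_mod_cast Finset.mem_range.1 hi
  exact ⟨by positivity, (div_le_one (by positivity)).2 (by linarith)⟩

theorem ConvexOn.smul_sum_trapezoids_le [IsOrderedModule ℝ E] (hg : ConvexOn ℝ (Icc 0 1) g)
    (hN : 0 < N) :
    (1 / (2 * N) : ℝ) • ∑ i ∈ Finset.range N, (g ((i + 1) / N) + g (i / N)) ≤
      (1 / 2 : ℝ) • (g 1 + g 0) := by
  have hchord : ∀ t ∈ Icc (0 : ℝ) 1, g t ≤ t • g 1 + (1 - t) • g 0 := fun t ht => by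
    simpa using hg.2 (right_mem_Icc.2 zero_le_one) (left_mem_Icc.2 zero_le_one) ht.1
      (sub_nonneg.2 ht.2) (add_sub_cancel t 1)
  have hweights : ∑ i ∈ Finset.range N, ((i + 1) / N + i / N : ℝ) = N := by
    have h : ∀ i : ℕ, (i + 1 + i : ℝ) = 2 * i + 1 := fun i => by ring
    simp_rw [← add_div, ← Finset.sum_div, h, sum_range_two_mul_add_one]
    field_simp
  calc (1 / (2 * N) : ℝ) • ∑ i ∈ Finset.range N, (g ((i + 1) / N) + g (i / N))
      ≤ (1 / (2 * N) : ℝ) • ∑ i ∈ Finset.range N,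
          (((i + 1) / N + i / N : ℝ) • g 1 + (2 - ((i + 1) / N + i / N) : ℝ) • g 0) := by
        refine smul_le_smul_of_nonneg_left (Finset.sum_le_sum fun i hi => ?_) (by positivity)
        have hsub := Icc_div_natCast_subset_Icc_zero_one (Finset.mem_range.1 hi)
        have hle : (i / N : ℝ) ≤ (i + 1) / N := by gcongr; simp
        calc g ((i + 1) / N) + g (i / N)
            ≤ (((i + 1) / N : ℝ) • g 1 + (1 - (i + 1) / N : ℝ) • g 0) +
              ((i / N : ℝ) • g 1 + (1 - i / N : ℝ) • g 0) :=
              add_le_add (hchord _ (hsub (right_mem_Icc.2 hle)))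
                (hchord _ (hsub (left_mem_Icc.2 hle)))
          _ = _ := by module
    _ = (1 / 2 : ℝ) • (g 1 + g 0) := by
      rw [Finset.sum_add_distrib, ← Finset.sum_smul, ← Finset.sum_smul, Finset.sum_sub_distrib,
        hweights, Finset.sum_const, Finset.card_range, nsmul_eq_mul]
      match_scalars
      · field_simp
      · field_simp; norm_num

end ConvexCombination

section Subdivision

variable {E : Type*} [NormedAddCommGroup E] {g : ℝ → E} {N : ℕ}

lemma IntervalIntegrable.mono_set_div_natCast (hgi : IntervalIntegrable g volume 0 1) {i : ℕ}
    (hi : i < N) : IntervalIntegrable g volume (i / N) ((i + 1) / N) :=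
  hgi.mono_set <| by
    rw [uIcc_of_le zero_le_one, uIcc_of_le (by gcongr; simp)]
    exact Icc_div_natCast_subset_Icc_zero_one hi

lemma intervalIntegral_zero_one_eq_sum_range [NormedSpace ℝ E]
    (hgi : IntervalIntegrable g volume 0 1) (hN : 0 < N) :
    ∫ x in (0 : ℝ)..1, g x = ∑ i ∈ Finset.range N, ∫ x in (i / N : ℝ)..((i + 1) / N), g x := by
  have := intervalIntegral.sum_integral_adjacent_intervals (f := g) (μ := volume)
    (a := fun k : ℕ => (k / N : ℝ)) (n := N) fun k hk => by
      simpa using hgi.mono_set_div_natCast hk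
  simpa [hN.ne'] using this.symm

end Subdivision

lemma intervalIntegral.integral_mono_on' {E : Type*} [NormedAddCommGroup E] [NormedSpace ℝ E]
    [PartialOrder E] [IsOrderedAddMonoid E] [IsOrderedModule ℝ E] [ClosedIciTopology E]
    {f g : ℝ → E} {a b : ℝ} (hab : a ≤ b) (hf : IntervalIntegrable f volume a b)
    (hg : IntervalIntegrable g volume a b) (h : ∀ x ∈ Icc a b, f x ≤ g x) :
    ∫ x in a..b, f x ≤ ∫ x in a..b, g x := by
  rw [intervalIntegral.integral_of_le hab, intervalIntegral.integral_of_le hab]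
  exact setIntegral_mono_on hf.1 hg.1 measurableSet_Ioc fun x hx => h x (Ioc_subset_Icc_self hx)

section HermiteHadamard

variable {E : Type*} [NormedAddCommGroup E] [NormedSpace ℝ E] [CompleteSpace E] [PartialOrder E]
  [IsOrderedAddMonoid E] [IsOrderedModule ℝ E] [ClosedIciTopology E] {g : ℝ → E} {a b : ℝ}

theorem ConvexOn.smul_map_midpoint_le_intervalIntegral (hg : ConvexOn ℝ (Icc a b) g)
    (hgi : IntervalIntegrable g volume a b) (hab : a ≤ b) :
    (b - a) • g ((a + b) / 2) ≤ ∫ x in a..b, g x := by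
  have hgi₁ : IntervalIntegrable (fun x => (1 / 2 : ℝ) • g x) volume a b := hgi.smul _
  have hgi₂ : IntervalIntegrable (fun x => (1 / 2 : ℝ) • g (a + b - x)) volume a b := by
    have hrefl := (hgi.comp_sub_left (a + b)).symm
    rw [add_sub_cancel_right, add_sub_cancel_left] at hrefl
    exact hrefl.smul _
  have hpt : ∀ x ∈ Icc a b,
      g ((a + b) / 2) ≤ (1 / 2 : ℝ) • g x + (1 / 2 : ℝ) • g (a + b - x) := by
    intro x hx
    have hx' : a + b - x ∈ Icc a b := ⟨by linarith [hx.2], by linarith [hx.1]⟩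
    convert hg.2 hx hx' (by norm_num : (0 : ℝ) ≤ 1 / 2) (by norm_num : (0 : ℝ) ≤ 1 / 2)
      (by norm_num) using 2
    simp only [smul_eq_mul]; ring
  calc (b - a) • g ((a + b) / 2) = ∫ _ in a..b, g ((a + b) / 2) :=
        (intervalIntegral.integral_const _).symm
    _ ≤ ∫ x in a..b, ((1 / 2 : ℝ) • g x + (1 / 2 : ℝ) • g (a + b - x)) :=
      intervalIntegral.integral_mono_on' hab intervalIntegrable_const (hgi₁.add hgi₂) hpt
    _ = ∫ x in a..b, g x := by
      rw [intervalIntegral.integral_add hgi₁ hgi₂,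
        intervalIntegral.integral_smul, intervalIntegral.integral_smul,
        intervalIntegral.integral_comp_sub_left g (a + b), add_sub_cancel_right,
        add_sub_cancel_left, ← add_smul]
      norm_num

theorem ConvexOn.intervalIntegral_le_smul_add (hg : ConvexOn ℝ (Icc a b) g)
    (hgi : IntervalIntegrable g volume a b) (hab : a ≤ b) :
    ∫ x in a..b, g x ≤ ((b - a) / 2) • (g a + g b) := by
  rcases hab.eq_or_lt with rfl | hlt
  · simp
  have hba : b - a ≠ 0 := (sub_pos.2 hlt).ne'
  have hpt : ∀ x ∈ Icc a b, g x ≤ ((b - x) / (b - a)) • g a + ((x - a) / (b - a)) • g b := by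
    intro x hx
    convert hg.2 (left_mem_Icc.2 hab) (right_mem_Icc.2 hab)
      (div_nonneg (sub_nonneg.2 hx.2) (sub_pos.2 hlt).le)
      (div_nonneg (sub_nonneg.2 hx.1) (sub_pos.2 hlt).le) (by field_simp; ring) using 2
    simp only [smul_eq_mul]; field_simp; ring
  have hweight_left : ∫ x in a..b, (b - x) / (b - a) = (b - a) / 2 := by
    rw [intervalIntegral.integral_div, intervalIntegral.integral_comp_sub_left (fun x => x)]
    simp [integral_id]; field_simp
  have hweight_right : ∫ x in a..b, (x - a) / (b - a) = (b - a) / 2 := by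
    rw [intervalIntegral.integral_div, intervalIntegral.integral_comp_sub_right (fun x => x)]
    simp [integral_id]; field_simp
  calc ∫ x in a..b, g x
      ≤ ∫ x in a..b, (((b - x) / (b - a)) • g a + ((x - a) / (b - a)) • g b) :=
        intervalIntegral.integral_mono_on' hab hgi
          ((by fun_prop : Continuous fun x : ℝ =>
            ((b - x) / (b - a)) • g a + ((x - a) / (b - a)) • g b).intervalIntegrable a b) hpt
    _ = ((b - a) / 2) • (g a + g b) := by
      rw [intervalIntegral.integral_add
          ((by fun_prop : Continuous fun x : ℝ => ((b - x) / (b - a)) • g a).intervalIntegrable a b)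
          ((by fun_prop : Continuous fun x : ℝ => ((x - a) / (b - a)) • g b).intervalIntegrable a b),
        intervalIntegral.integral_smul_const, intervalIntegral.integral_smul_const,
        hweight_left, hweight_right, smul_add]

variable {N : ℕ}

theorem ConvexOn.smul_sum_map_midpoints_le_intervalIntegral (hg : ConvexOn ℝ (Icc 0 1) g)
    (hgi : IntervalIntegrable g volume 0 1) (hN : 0 < N) :
    (1 / N : ℝ) • ∑ i ∈ Finset.range N, g ((2 * i + 1) / (2 * N)) ≤ ∫ x in (0 : ℝ)..1, g x := by
  rw [intervalIntegral_zero_one_eq_sum_range hgi hN, Finset.smul_sum]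
  refine Finset.sum_le_sum fun i hi => ?_
  have hsub := Icc_div_natCast_subset_Icc_zero_one (Finset.mem_range.1 hi)
  have hle : (i / N : ℝ) ≤ (i + 1) / N := by gcongr; simp
  convert (hg.subset hsub (convex_Icc _ _)).smul_map_midpoint_le_intervalIntegral
    (hgi.mono_set_div_natCast (Finset.mem_range.1 hi)) hle using 2
  · field_simp; ring
  · congr 1; field_simp; ring

theorem ConvexOn.intervalIntegral_le_smul_sum_trapezoids (hg : ConvexOn ℝ (Icc 0 1) g)
    (hgi : IntervalIntegrable g volume 0 1) (hN : 0 < N) :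
    ∫ x in (0 : ℝ)..1, g x ≤
      (1 / (2 * N) : ℝ) • ∑ i ∈ Finset.range N, (g ((i + 1) / N) + g (i / N)) := by
  rw [intervalIntegral_zero_one_eq_sum_range hgi hN, Finset.smul_sum]
  refine Finset.sum_le_sum fun i hi => ?_
  have hsub := Icc_div_natCast_subset_Icc_zero_one (Finset.mem_range.1 hi)
  have hle : (i / N : ℝ) ≤ (i + 1) / N := by gcongr; simp
  convert (hg.subset hsub (convex_Icc _ _)).intervalIntegral_le_smul_add
    (hgi.mono_set_div_natCast (Finset.mem_range.1 hi)) hle using 1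
  rw [add_comm (g _)]
  congr 1; field_simp; ring

end HermiteHadamard

lemma IsCompact.exists_subset_Icc_subset {K J : Set ℝ} (hK : IsCompact K) (hJ : J.OrdConnected)
    (hKJ : K ⊆ J) : ∃ m M, K ⊆ Icc m M ∧ Icc m M ⊆ J := by
  rcases K.eq_empty_or_nonempty with rfl | hne
  · exact ⟨1, 0, empty_subset _, by simp⟩
  exact ⟨sInf K, sSup K, fun x hx => ⟨csInf_le hK.bddBelow hx, le_csSup hK.bddAbove hx⟩,
    hJ.out (hKJ (hK.sInf_mem hne)) (hKJ (hK.sSup_mem hne))⟩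

section OperatorConvex

variable (A : Type*) [CStarAlgebra A] [PartialOrder A] [StarOrderedRing A]

def OperatorConvexOn (J : Set ℝ) (f : ℝ → ℝ) : Prop :=
  ∀ X Y : A, IsSelfAdjoint X → IsSelfAdjoint Y → spectrum ℝ X ⊆ J → spectrum ℝ Y ⊆ J →
    ∀ l ∈ Icc (0 : ℝ) 1, cfc f (l • X + (1 - l) • Y) ≤ l • cfc f X + (1 - l) • cfc f Y

lemma convex_setOf_isSelfAdjoint_spectrum_subset_Icc (m M : ℝ) :
    Convex ℝ {a : A | IsSelfAdjoint a ∧ spectrum ℝ a ⊆ Icc m M} := by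
  have : {a : A | IsSelfAdjoint a ∧ spectrum ℝ a ⊆ Icc m M} =
      (selfAdjoint.submodule ℝ A : Set A) ∩ Icc (algebraMap ℝ A m) (algebraMap ℝ A M) := by
    ext a
    simp only [mem_ofPred_eq, mem_inter_iff, SetLike.mem_coe, mem_Icc]
    refine and_congr_right fun ha => ?_
    rw [algebraMap_le_iff_le_spectrum ha, le_algebraMap_iff_spectrum_le ha]
    simp only [subset_def, mem_Icc, imp_and, forall_and]
  rw [this]
  exact (selfAdjoint.submodule ℝ A).convex.inter (convex_Icc _ _)

variable {A} {a b : A} {J : Set ℝ} {f : ℝ → ℝ}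

lemma convex_setOf_isSelfAdjoint_spectrum_subset (hJ : J.OrdConnected) :
    Convex ℝ {a : A | IsSelfAdjoint a ∧ spectrum ℝ a ⊆ J} := by
  rintro a ⟨ha, haJ⟩ b ⟨hb, hbJ⟩ s t hs ht hst
  obtain ⟨m, M, hK, hMJ⟩ := ((spectrum.isCompact a).union (spectrum.isCompact b))
    |>.exists_subset_Icc_subset hJ (union_subset haJ hbJ)
  obtain ⟨hsa, hspec⟩ := convex_setOf_isSelfAdjoint_spectrum_subset_Icc A m M
    ⟨ha, subset_union_left.trans hK⟩ ⟨hb, subset_union_right.trans hK⟩ hs ht hst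
  exact ⟨hsa, hspec.trans hMJ⟩

lemma OperatorConvexOn.convexOn_segment (hf : OperatorConvexOn A J f) (ha : IsSelfAdjoint a)
    (hb : IsSelfAdjoint b) (hJ : J.OrdConnected) (haJ : spectrum ℝ a ⊆ J)
    (hbJ : spectrum ℝ b ⊆ J) :
    ConvexOn ℝ (Icc 0 1) fun t : ℝ => cfc f (t • a + (1 - t) • b) := by
  have hseg : ∀ t ∈ Icc (0 : ℝ) 1,
      IsSelfAdjoint (t • a + (1 - t) • b) ∧ spectrum ℝ (t • a + (1 - t) • b) ⊆ J :=
    fun t ht => convex_setOf_isSelfAdjoint_spectrum_subset hJ ⟨ha, haJ⟩ ⟨hb, hbJ⟩ ht.1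
      (sub_nonneg.2 ht.2) (add_sub_cancel t 1)
  refine ⟨convex_Icc 0 1, fun s hs u hu p q hp hq hpq => ?_⟩
  obtain rfl : q = 1 - p := by linarith
  convert hf _ _ (hseg s hs).1 (hseg u hu).1 (hseg s hs).2 (hseg u hu).2 p ⟨hp, by linarith⟩
    using 2
  simp only [smul_eq_mul]
  module

lemma continuousOn_cfc_segment (ha : IsSelfAdjoint a) (hb : IsSelfAdjoint b)
    (hJ : J.OrdConnected) (haJ : spectrum ℝ a ⊆ J) (hbJ : spectrum ℝ b ⊆ J)
    (hf : ContinuousOn f J) :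
    ContinuousOn (fun t : ℝ => cfc f (t • a + (1 - t) • b)) (Icc 0 1) := by
  obtain ⟨m, M, hK, hMJ⟩ := ((spectrum.isCompact a).union (spectrum.isCompact b))
    |>.exists_subset_Icc_subset hJ (union_subset haJ hbJ)
  have hseg : ∀ t ∈ Icc (0 : ℝ) 1,
      IsSelfAdjoint (t • a + (1 - t) • b) ∧ spectrum ℝ (t • a + (1 - t) • b) ⊆ Icc m M :=
    fun t ht => convex_setOf_isSelfAdjoint_spectrum_subset_Icc A m M
      ⟨ha, subset_union_left.trans hK⟩ ⟨hb, subset_union_right.trans hK⟩ ht.1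
      (sub_nonneg.2 ht.2) (add_sub_cancel t 1)
  exact ContinuousOn.cfc' isCompact_Icc f (by fun_prop) (fun t ht => (hseg t ht).2)
    (fun t ht => (hseg t ht).1) (hf.mono hMJ)

end OperatorConvex

/-- Refined operator Hermite–Hadamard inequality: for bounded self-adjoint operators
`A, B` with spectra in an interval `J`, `f` operator convex (and continuous) on `J`,
and any positive integer `N`,
`f((A+B)/2) ≤ (1/N)∑_{i<N} f(((2i+1)/(2N))A + (1−(2i+1)/(2N))B)
  ≤ ∫_0^1 f(tA+(1-t)B) dt
  ≤ (1/(2N))∑_{i<N} [f(((i+1)/N)A + (1−(i+1)/N)B) + f((i/N)A + (1−i/N)B)]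
  ≤ (f(A)+f(B))/2` in the Loewner order. -/
theorem refined_operator_hermite_hadamard
    {H : Type*} [NormedAddCommGroup H] [InnerProductSpace ℂ H] [CompleteSpace H]
    (A B : H →L[ℂ] H) (hA : IsSelfAdjoint A) (hB : IsSelfAdjoint B)
    (J : Set ℝ) (hJ : J.OrdConnected)
    (hsA : spectrum ℝ A ⊆ J) (hsB : spectrum ℝ B ⊆ J)
    (f : ℝ → ℝ) (hcont : ContinuousOn f J)
    (hopconv : ∀ (X Y : H →L[ℂ] H), IsSelfAdjoint X → IsSelfAdjoint Y →
      spectrum ℝ X ⊆ J → spectrum ℝ Y ⊆ J → ∀ l ∈ Set.Icc (0:ℝ) 1,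
        cfc f (l • X + (1 - l) • Y) ≤ l • cfc f X + (1 - l) • cfc f Y)
    (N : ℕ) (hN : 0 < N) :
    cfc f ((1/2 : ℝ) • (A + B)) ≤
        (1 / N : ℝ) • ∑ i ∈ Finset.range N,
          cfc f (((2 * i + 1) / (2 * N) : ℝ) • A + (1 - (2 * i + 1) / (2 * N) : ℝ) • B) ∧
      (1 / N : ℝ) • (∑ i ∈ Finset.range N,
          cfc f (((2 * i + 1) / (2 * N) : ℝ) • A + (1 - (2 * i + 1) / (2 * N) : ℝ) • B)) ≤
        ∫ t in (0:ℝ)..1, cfc f (t • A + (1 - t) • B) ∧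
      (∫ t in (0:ℝ)..1, cfc f (t • A + (1 - t) • B)) ≤
        (1 / (2 * N) : ℝ) • ∑ i ∈ Finset.range N,
          (cfc f (((i + 1) / N : ℝ) • A + (1 - (i + 1) / N : ℝ) • B)
            + cfc f ((i / N : ℝ) • A + (1 - i / N : ℝ) • B)) ∧
      (1 / (2 * N) : ℝ) • (∑ i ∈ Finset.range N,
          (cfc f (((i + 1) / N : ℝ) • A + (1 - (i + 1) / N : ℝ) • B)
            + cfc f ((i / N : ℝ) • A + (1 - i / N : ℝ) • B))) ≤
        (1/2 : ℝ) • (cfc f A + cfc f B) := by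
  set g : ℝ → H →L[ℂ] H := fun t => cfc f (t • A + (1 - t) • B) with hg_def
  have hg : ConvexOn ℝ (Icc 0 1) g := OperatorConvexOn.convexOn_segment hopconv hA hB hJ hsA hsB
  have hgi : IntervalIntegrable g volume 0 1 :=
    (continuousOn_cfc_segment hA hB hJ hsA hsB hcont).intervalIntegrable_of_Icc zero_le_one
  have hg_half : g (1 / 2) = cfc f ((1 / 2 : ℝ) • (A + B)) := by
    simp only [hg_def]; congr 1; module
  have hg_one : g 1 = cfc f A := by simp [hg_def]
  have hg_zero : g 0 = cfc f B := by simp [hg_def]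
  refine ⟨?_, hg.smul_sum_map_midpoints_le_intervalIntegral hgi hN,
    hg.intervalIntegral_le_smul_sum_trapezoids hgi hN, ?_⟩
  · rw [← hg_half]
    exact hg.map_half_le_smul_sum_map_midpoints hN
  · rw [← hg_one, ← hg_zero]
    exact hg.smul_sum_trapezoids_le hN
end
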